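/- arXiv:1905.02287 — 6 statements merged into one kernel-verified Lean document; each statement's English description precedes it below -/
import Mathlib

section
/- For every integer n with 1 ≤ n ≤ 3, every gross substitutes valuation u on [n] can be written as a merge u = u¹ * u² * ⋯ * u^k of finitely many unit demand valuations on subsets of [n]. -/
open Finset

variable {α : Type*} [DecidableEq α]

/-- A valuation on ground set `E`: zero at the empty set, non-negative,
and monotone on subsets of `E`. -/
def IsValuation (E : Finset α) (u : Finset α → ℝ) : Prop :=
  u ∅ = 0 ∧ (∀ S : Finset α, S ⊆ E → 0 ≤ u S) ∧
    ∀ ⦃S T : Finset α⦄, S ⊆ T → T ⊆ E → u S ≤ u T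

/-- Gross substitutes valuation on ground set `E`: a valuation satisfying the
M♮-exchange property. -/
def GrossSubstitutes (E : Finset α) (u : Finset α → ℝ) : Prop :=
  IsValuation E u ∧
    ∀ ⦃S T : Finset α⦄, S ⊆ E → T ⊆ E → ∀ i ∈ S \ T,
      u S + u T ≤ u (S.erase i) + u (insert i T) ∨
        ∃ j ∈ T \ S,
          u S + u T ≤ u (insert j (S.erase i)) + u ((insert i T).erase j)

/-- The merge (convolution) of a valuation `u1` on `E1` and `u2` on `E2`:
`(u1 * u2)(S) = max { u1 S1 + u2 S2 : S = S1 ∪ S2, S1 ∩ S2 = ∅, S1 ⊆ E1, S2 ⊆ E2 }`. -/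
noncomputable def mergeVal (E1 E2 : Finset α) (u1 u2 : Finset α → ℝ)
    (S : Finset α) : ℝ :=
  sSup {x : ℝ | ∃ S1 S2 : Finset α, S = S1 ∪ S2 ∧ Disjoint S1 S2 ∧
    S1 ⊆ E1 ∧ S2 ⊆ E2 ∧ x = u1 S1 + u2 S2}

/-- A unit demand valuation on ground set `E`: `u T = max_{i ∈ T} w i` for
nonempty `T ⊆ E`, and `u ∅ = 0`, for some nonnegative weights `w`. -/
def IsUnitDemand (E : Finset α) (u : Finset α → ℝ) : Prop :=
  ∃ w : α → ℝ, (∀ i, 0 ≤ w i) ∧ u ∅ = 0 ∧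
    ∀ T : Finset α, T ⊆ E → ∀ hT : T.Nonempty, u T = T.sup' hT w

/-- The iterated merge of a list of valuations (each paired with its ground
set), returning the resulting ground set and valuation. -/
noncomputable def mergeList :
    List (Finset α × (Finset α → ℝ)) → Finset α × (Finset α → ℝ)
  | [] => (∅, fun _ => 0)
  | p :: L =>
    let q := mergeList L
    (p.1 ∪ q.1, mergeVal p.1 q.1 p.2 q.2)

/-!
Merge three unit demand layers with weights `u {i}`, `min_{j ≠ i} (u {i, j} - u {j})` and
`u E - u (E \ {i})`; the merge values `S` by the best assignment of items of `S` to distinct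
layers. The weight of `i` in the `k`-th layer is at most its marginal value over any `k - 1`
other items (for the last layer by diminishing returns, i.e. the exchange property with
`T ⊆ S`), so no assignment beats `u S`. Conversely, the exchange property for a pair `{i, j}`
against the third item makes `u {i, j} - u {j}` or `u {i, j} - u {i}` the minimum in the middle
layer, and the corresponding assignment attains `u S`. On two items the middle layer is dropped,
and on at most one item `u` is itself unit demand.
-/

section UnitDemand

variable {ι : Type*} {w : ι → ℝ} {S : Finset ι}

noncomputable def unitDemand (w : ι → ℝ) (S : Finset ι) : ℝ :=
  if h : S.Nonempty then S.sup' h w else 0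

@[simp]
lemma unitDemand_empty (w : ι → ℝ) : unitDemand w ∅ = 0 := dif_neg Finset.not_nonempty_empty

@[simp]
lemma unitDemand_singleton (w : ι → ℝ) (i : ι) : unitDemand w {i} = w i := by
  simp [unitDemand]

lemma le_unitDemand {i : ι} (hi : i ∈ S) : w i ≤ unitDemand w S := by
  rw [unitDemand, dif_pos ⟨i, hi⟩]
  exact le_sup' w hi

lemma exists_unitDemand_eq (hS : S.Nonempty) : ∃ i ∈ S, unitDemand w S = w i := by
  rw [unitDemand, dif_pos hS]
  exact exists_mem_eq_sup' hS w

lemma monotone_unitDemand (hw : ∀ i, 0 ≤ w i) : Monotone (unitDemand w) := by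
  intro S T hST
  rcases S.eq_empty_or_nonempty with rfl | hS
  · rcases T.eq_empty_or_nonempty with rfl | ⟨i, hi⟩
    · rfl
    · exact (unitDemand_empty w).trans_le ((hw i).trans (le_unitDemand hi))
  · obtain ⟨i, hi, hSi⟩ := exists_unitDemand_eq (w := w) hS
    exact hSi.trans_le (le_unitDemand (hST hi))

lemma isUnitDemand_unitDemand (E : Finset ι) (hw : ∀ i, 0 ≤ w i) :
    IsUnitDemand E (unitDemand w) :=
  ⟨w, hw, unitDemand_empty w, fun _ _ hT => dif_pos hT⟩

end UnitDemand

section Merge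

variable [Fintype α] {u₁ u₂ v : Finset α → ℝ} {w : α → ℝ} {S : Finset α}

lemma mergeVal_univ_univ (u₁ u₂ : Finset α → ℝ) (S : Finset α) :
    mergeVal univ univ u₁ u₂ S =
      S.powerset.sup' ⟨∅, empty_mem_powerset S⟩ fun T => u₁ T + u₂ (S \ T) := by
  refine IsGreatest.csSup_eq ⟨?_, ?_⟩
  · obtain ⟨T, hT, h⟩ := exists_mem_eq_sup' ⟨∅, empty_mem_powerset S⟩
      fun T => u₁ T + u₂ (S \ T)
    exact ⟨T, S \ T, (union_sdiff_of_subset (mem_powerset.1 hT)).symm, disjoint_sdiff,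
      subset_univ _, subset_univ _, h⟩
  · rintro x ⟨S₁, S₂, rfl, hS, -, -, rfl⟩
    refine le_sup'_of_le _ (mem_powerset.2 subset_union_left) ?_
    rw [union_sdiff_cancel_left hS]

lemma mergeVal_univ_empty (v : Finset α → ℝ) : mergeVal univ ∅ v (fun _ => 0) = v := by
  funext S
  refine IsGreatest.csSup_eq ⟨⟨S, ∅, (union_empty S).symm, disjoint_empty_right S,
    subset_univ S, empty_subset ∅, (add_zero _).symm⟩, ?_⟩
  rintro x ⟨S₁, S₂, rfl, -, -, hS₂, rfl⟩
  rw [subset_empty.1 hS₂, union_empty, add_zero]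

lemma monotone_mergeVal (hu₂ : Monotone u₂) : Monotone (mergeVal univ univ u₁ u₂) := by
  intro S S' hSS'
  simp only [mergeVal_univ_univ]
  refine sup'_le _ _ fun T hT =>
    le_sup'_of_le _ (mem_powerset.2 ((mem_powerset.1 hT).trans hSS')) ?_
  gcongr
  exact hu₂ (sdiff_subset_sdiff hSS' le_rfl)

lemma le_mergeVal_unitDemand : v S ≤ mergeVal univ univ (unitDemand w) v S := by
  rw [mergeVal_univ_univ]
  exact le_sup'_of_le _ (empty_mem_powerset S) (by simp)

lemma add_le_mergeVal_unitDemand {i : α} (hi : i ∈ S) :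
    w i + v (S.erase i) ≤ mergeVal univ univ (unitDemand w) v S := by
  rw [mergeVal_univ_univ]
  refine le_sup'_of_le _ (mem_powerset.2 (singleton_subset_iff.2 hi)) ?_
  rw [unitDemand_singleton, sdiff_singleton_eq_erase]

lemma add_le_mergeVal_unitDemand_pair {i j : α} (hij : i ≠ j) :
    w i + v {j} ≤ mergeVal univ univ (unitDemand w) v {i, j} := by
  simpa [erase_insert (notMem_singleton.2 hij)] using
    add_le_mergeVal_unitDemand (w := w) (v := v) (mem_insert_self i {j})

lemma mergeVal_unitDemand_le (hv : Monotone v) {x : ℝ} (h₀ : v S ≤ x)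
    (h₁ : ∀ i ∈ S, w i + v (S.erase i) ≤ x) : mergeVal univ univ (unitDemand w) v S ≤ x := by
  rw [mergeVal_univ_univ]
  refine sup'_le _ _ fun T hT => ?_
  rcases T.eq_empty_or_nonempty with rfl | hTne
  · simpa using h₀
  · obtain ⟨i, hiT, hTi⟩ := exists_unitDemand_eq (w := w) hTne
    have hi : i ∈ S := mem_powerset.1 hT hiT
    calc unitDemand w T + v (S \ T) ≤ w i + v (S.erase i) := by
          rw [hTi, ← sdiff_singleton_eq_erase]
          gcongr
          exact hv (sdiff_subset_sdiff le_rfl (singleton_subset_iff.2 hiT))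
      _ ≤ x := h₁ i hi

end Merge

namespace GrossSubstitutes

variable {E S T : Finset α} {u : Finset α → ℝ} {i j k : α}

/-- With `T ⊆ S` no exchange partner `j ∈ T \ S` exists, so the exchange property degenerates
to this submodularity inequality. -/
lemma add_le_erase_add_insert (hu : GrossSubstitutes E u) (hS : S ⊆ E) (hTS : T ⊆ S)
    (hi : i ∈ S) (hiT : i ∉ T) : u S + u T ≤ u (S.erase i) + u (insert i T) := by
  rcases hu.2 hS (hTS.trans hS) i (mem_sdiff.2 ⟨hi, hiT⟩) with h | ⟨j, hj, -⟩
  · exact h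
  · exact absurd (hTS (mem_sdiff.1 hj).1) (mem_sdiff.1 hj).2

lemma pair_le_add (hu : GrossSubstitutes E u) (hi : i ∈ E) (hj : j ∈ E) (hij : i ≠ j) :
    u {i, j} ≤ u {i} + u {j} := by
  have h := hu.add_le_erase_add_insert (insert_subset hi (singleton_subset_iff.2 hj))
    (empty_subset _) (mem_insert_self i {j}) (notMem_empty i)
  rw [erase_insert (notMem_singleton.2 hij), hu.1.1, insert_empty] at h
  linarith

lemma pair_exchange (hu : GrossSubstitutes E u) (hi : i ∈ E) (hj : j ∈ E) (hk : k ∈ E)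
    (hij : i ≠ j) (hik : i ≠ k) (hjk : j ≠ k) :
    u {i, j} + u {k} ≤ u {j} + u {i, k} ∨ u {i, j} + u {k} ≤ u {i} + u {j, k} := by
  rcases hu.2 (insert_subset hi (singleton_subset_iff.2 hj)) (singleton_subset_iff.2 hk) i
    (by simp [hik]) with h | ⟨l, hl, h⟩
  · rw [erase_insert (notMem_singleton.2 hij)] at h
    exact Or.inl h
  · obtain rfl : l = k := by simpa using (mem_sdiff.1 hl).1
    rw [erase_insert (notMem_singleton.2 hij), erase_insert_of_ne hik, erase_singleton,
      insert_empty, pair_comm l j] at h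
    exact Or.inr (by linarith)

end GrossSubstitutes

section Weights

variable (u : Finset α → ℝ)

noncomputable def topMarginal [Fintype α] (i : α) : ℝ := u univ - u (univ.erase i)

noncomputable def minPairMarginal (i : α) : ℝ := ⨅ j : {j // j ≠ i}, (u {i, j.1} - u {j.1})

variable {u}

lemma topMarginal_nonneg [Fintype α] (hu : IsValuation univ u) (i : α) : 0 ≤ topMarginal u i :=
  sub_nonneg.2 (hu.2.2 (erase_subset i univ) le_rfl)

lemma minPairMarginal_nonneg [Fintype α] (hu : IsValuation univ u) (i : α) :
    0 ≤ minPairMarginal u i :=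
  Real.iInf_nonneg fun _ => sub_nonneg.2 (hu.2.2 (subset_insert _ _) (subset_univ _))

lemma minPairMarginal_le [Finite α] {i j : α} (hj : j ≠ i) :
    minPairMarginal u i ≤ u {i, j} - u {j} :=
  ciInf_le (Set.finite_range _).bddBelow (⟨j, hj⟩ : {l // l ≠ i})

lemma le_minPairMarginal {i j : α} (hj : j ≠ i) {x : ℝ} (h : ∀ l ≠ i, x ≤ u {i, l} - u {l}) :
    x ≤ minPairMarginal u i := by
  have : Nonempty {l // l ≠ i} := ⟨⟨j, hj⟩⟩
  exact le_ciInf fun l => h l l.2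

end Weights

section Merge

variable [Fintype α]

def IsMergeOfUnitDemands (u : Finset α → ℝ) : Prop :=
  ∃ L : List (Finset α × (Finset α → ℝ)), L ≠ [] ∧ (∀ p ∈ L, IsUnitDemand p.1 p.2) ∧
    (mergeList L).1 = univ ∧ u = (mergeList L).2

lemma IsUnitDemand.isMergeOfUnitDemands {f : Finset α → ℝ} (hf : IsUnitDemand univ f) :
    IsMergeOfUnitDemands f :=
  ⟨[(univ, f)], List.cons_ne_nil _ _, by simpa using hf, by simp [mergeList],
    by simp [mergeList, mergeVal_univ_empty]⟩

lemma IsMergeOfUnitDemands.mergeVal {f v : Finset α → ℝ} (hv : IsMergeOfUnitDemands v)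
    (hf : IsUnitDemand univ f) : IsMergeOfUnitDemands (mergeVal univ univ f v) := by
  obtain ⟨L, -, hL, hL₁, rfl⟩ := hv
  refine ⟨(univ, f) :: L, List.cons_ne_nil _ _, ?_, by simp [mergeList], by simp [mergeList, hL₁]⟩
  simpa [hf] using hL

end Merge

section Layers

variable [Fintype α] {u v : Finset α → ℝ} {S T R : Finset α}

lemma unitDemand_topMarginal_add_le (hu : GrossSubstitutes univ u) (hTR : Disjoint T R) :
    unitDemand (topMarginal u) T + u R ≤ u (T ∪ R) := by
  rcases T.eq_empty_or_nonempty with rfl | hT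
  · simp
  obtain ⟨i, hi, hTi⟩ := exists_unitDemand_eq (w := topMarginal u) hT
  have hmarg := hu.add_le_erase_add_insert (subset_refl univ) (subset_univ R) (mem_univ i)
    (disjoint_left.1 hTR hi)
  have hmono := hu.1.2.2 (insert_subset (mem_union_left R hi) subset_union_right) (subset_univ _)
  rw [hTi, topMarginal]
  linarith

lemma minPairMarginal_add_le [Nontrivial α] (hu : GrossSubstitutes univ u) {m : α} (hm : m ∉ R)
    (hR : R.card ≤ 1) : minPairMarginal u m + u R ≤ u (insert m R) := by
  rcases Nat.le_one_iff_eq_zero_or_eq_one.1 hR with hR | hR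
  · obtain rfl := card_eq_zero.1 hR
    obtain ⟨j, hj⟩ := exists_ne m
    have := minPairMarginal_le (u := u) hj
    have := hu.pair_le_add (mem_univ m) (mem_univ j) hj.symm
    rw [hu.1.1, insert_empty]
    linarith
  · obtain ⟨j, rfl⟩ := card_eq_one.1 hR
    linarith [minPairMarginal_le (u := u) (Ne.symm (notMem_singleton.1 hm))]

variable (u) in
noncomputable def marginalLayers : Finset α → ℝ :=
  mergeVal univ univ (unitDemand (minPairMarginal u)) (unitDemand (topMarginal u))

lemma marginalLayers_add_le [Nontrivial α] (hu : GrossSubstitutes univ u) (hTR : Disjoint T R)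
    (hR : R.card ≤ 1) : marginalLayers u T + u R ≤ u (T ∪ R) := by
  suffices marginalLayers u T ≤ u (T ∪ R) - u R by linarith
  refine mergeVal_unitDemand_le (monotone_unitDemand (topMarginal_nonneg hu.1)) ?_ fun m hm => ?_
  · linarith [unitDemand_topMarginal_add_le hu hTR]
  · have h₁ := minPairMarginal_add_le hu (disjoint_left.1 hTR hm) hR
    have h₂ := unitDemand_topMarginal_add_le hu (T := T.erase m) (R := insert m R)
      (disjoint_insert_right.2 ⟨notMem_erase m T, disjoint_of_subset_left (erase_subset m T) hTR⟩)
    rw [union_insert, ← insert_union, insert_erase hm] at h₂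
    linarith

lemma mergeVal_unitDemand_singletons_le (hu : IsValuation univ u) (hv : Monotone v)
    (hvu : ∀ T R : Finset α, Disjoint T R → R.card ≤ 1 → v T + u R ≤ u (T ∪ R)) (S : Finset α) :
    mergeVal univ univ (unitDemand fun i => u {i}) v S ≤ u S := by
  refine mergeVal_unitDemand_le hv ?_ fun i hi => ?_
  · simpa [hu.1] using hvu S ∅ (disjoint_empty_right S) (by simp)
  · have := hvu (S.erase i) {i} (disjoint_singleton_right.2 (notMem_erase i S))
      (card_singleton i).le
    rw [union_singleton, insert_erase hi] at this
    linarith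

lemma le_mergeVal_unitDemand_singletons_of_card_le_one (hu : u ∅ = 0) (hv : 0 ≤ v ∅)
    (hS : S.card ≤ 1) : u S ≤ mergeVal univ univ (unitDemand fun i => u {i}) v S := by
  rcases Nat.le_one_iff_eq_zero_or_eq_one.1 hS with hS | hS
  · obtain rfl := card_eq_zero.1 hS
    exact hu.trans_le (hv.trans le_mergeVal_unitDemand)
  · obtain ⟨i, rfl⟩ := card_eq_one.1 hS
    have := add_le_mergeVal_unitDemand (w := fun i => u {i}) (v := v) (mem_singleton_self i)
    rw [erase_singleton] at this
    linarith

end Layers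

section SmallGroundSets

variable [Fintype α]

noncomputable def twoLayerMerge (u : Finset α → ℝ) : Finset α → ℝ :=
  mergeVal univ univ (unitDemand fun i => u {i}) (unitDemand (topMarginal u))

noncomputable def threeLayerMerge (u : Finset α → ℝ) : Finset α → ℝ :=
  mergeVal univ univ (unitDemand fun i => u {i})
    (marginalLayers u)

variable {u : Finset α → ℝ}

theorem isMergeOfUnitDemands_of_card_le_one (hα : Fintype.card α ≤ 1) (hu : IsValuation univ u) :
    IsMergeOfUnitDemands u := by
  refine IsUnitDemand.isMergeOfUnitDemands
    ⟨fun i => u {i}, fun i => hu.2.1 _ (subset_univ _), hu.1, fun T _ hT => ?_⟩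
  obtain ⟨i, rfl⟩ := card_eq_one.1 (le_antisymm (T.card_le_univ.trans hα) hT.card_pos)
  simp

lemma le_twoLayerMerge (hα : Fintype.card α = 2) (hu : GrossSubstitutes univ u)
    (S : Finset α) : u S ≤ twoLayerMerge u S := by
  rw [twoLayerMerge]
  rcases le_or_gt S.card 1 with hS | hS
  · exact le_mergeVal_unitDemand_singletons_of_card_le_one hu.1.1 (by simp) hS
  obtain rfl := eq_univ_of_card S (by have := S.card_le_univ; omega)
  obtain ⟨i, j, hij, huniv⟩ := card_eq_two.1 (card_univ.trans hα)
  have hi : univ.erase i = {j} := by rw [huniv, erase_insert (notMem_singleton.2 hij)]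
  have hj : univ.erase j = {i} := by
    rw [huniv, erase_insert_of_ne hij, erase_singleton, insert_empty]
  have := add_le_mergeVal_unitDemand (w := fun i => u {i}) (v := unitDemand (topMarginal u))
    (mem_univ i)
  rw [hi, unitDemand_singleton, topMarginal, hj] at this
  linarith

theorem isMergeOfUnitDemands_of_card_eq_two (hα : Fintype.card α = 2)
    (hu : GrossSubstitutes univ u) : IsMergeOfUnitDemands u := by
  have hmerge : twoLayerMerge u = u :=
    funext fun S => le_antisymm
      (mergeVal_unitDemand_singletons_le hu.1 (monotone_unitDemand (topMarginal_nonneg hu.1))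
        (fun _ _ hTR _ => unitDemand_topMarginal_add_le hu hTR) S)
      (le_twoLayerMerge hα hu S)
  rw [← hmerge]
  exact (isUnitDemand_unitDemand univ (topMarginal_nonneg hu.1)).isMergeOfUnitDemands.mergeVal
    (isUnitDemand_unitDemand univ fun _ => hu.1.2.1 _ (subset_univ _))

variable {i j k : α}

lemma le_minPairMarginal_or (hu : GrossSubstitutes univ u) (hij : i ≠ j) (hik : i ≠ k)
    (hjk : j ≠ k) (huniv : (univ : Finset α) = {i, j, k}) :
    u {i, j} - u {j} ≤ minPairMarginal u i ∨ u {i, j} - u {i} ≤ minPairMarginal u j := by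
  have hl : ∀ l, l = i ∨ l = j ∨ l = k := fun l => by simpa [huniv] using mem_univ l
  rcases hu.pair_exchange (mem_univ i) (mem_univ j) (mem_univ k) hij hik hjk with h | h
  · refine Or.inl (le_minPairMarginal hij.symm fun l hli => ?_)
    rcases hl l with rfl | rfl | rfl
    · exact absurd rfl hli
    · exact le_rfl
    · linarith
  · refine Or.inr (le_minPairMarginal hij fun l hlj => ?_)
    rcases hl l with rfl | rfl | rfl
    · rw [pair_comm]
    · exact absurd rfl hlj
    · linarith

lemma le_threeLayerMerge_pair (hu : GrossSubstitutes univ u) (hij : i ≠ j) (hik : i ≠ k)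
    (hjk : j ≠ k) (huniv : (univ : Finset α) = {i, j, k}) :
    u {i, j} ≤ threeLayerMerge u {i, j} := by
  rw [threeLayerMerge]
  have hV : ∀ l, minPairMarginal u l ≤ marginalLayers u {l} := fun l => by
    simpa [marginalLayers] using add_le_mergeVal_unitDemand (w := minPairMarginal u)
      (v := unitDemand (topMarginal u)) (mem_singleton_self l)
  rcases le_minPairMarginal_or hu hij hik hjk huniv with h | h
  · rw [pair_comm] at h ⊢
    linarith [hV i, add_le_mergeVal_unitDemand_pair (w := fun i => u {i}) (v := marginalLayers u)
      hij.symm]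
  · linarith [hV j, add_le_mergeVal_unitDemand_pair (w := fun i => u {i}) (v := marginalLayers u)
      hij]

lemma le_threeLayerMerge_univ (hu : GrossSubstitutes univ u) (hij : i ≠ j) (hik : i ≠ k)
    (hjk : j ≠ k) (huniv : (univ : Finset α) = {i, j, k}) :
    u univ ≤ threeLayerMerge u univ := by
  rw [threeLayerMerge]
  have hk : topMarginal u k = u univ - u {i, j} := by
    rw [topMarginal, huniv, erase_insert_of_ne hik, erase_insert_of_ne hjk, erase_singleton,
      insert_empty]
  have hi : univ.erase i = {j, k} := by rw [huniv, erase_insert (by simp [hij, hik])]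
  have hj : univ.erase j = {i, k} := by
    rw [huniv, erase_insert_of_ne hij, erase_insert (notMem_singleton.2 hjk)]
  have hik' : minPairMarginal u i + topMarginal u k ≤ marginalLayers u {i, k} := by
    simpa [marginalLayers] using add_le_mergeVal_unitDemand_pair (w := minPairMarginal u)
      (v := unitDemand (topMarginal u)) hik
  have hjk' : minPairMarginal u j + topMarginal u k ≤ marginalLayers u {j, k} := by
    simpa [marginalLayers] using add_le_mergeVal_unitDemand_pair (w := minPairMarginal u)
      (v := unitDemand (topMarginal u)) hjk
  rcases le_minPairMarginal_or hu hij hik hjk huniv with h | h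
  · linarith [hj ▸ add_le_mergeVal_unitDemand (w := fun i => u {i}) (v := marginalLayers u)
      (mem_univ j)]
  · linarith [hi ▸ add_le_mergeVal_unitDemand (w := fun i => u {i}) (v := marginalLayers u)
      (mem_univ i)]

lemma le_threeLayerMerge (hα : Fintype.card α = 3) (hu : GrossSubstitutes univ u)
    (S : Finset α) : u S ≤ threeLayerMerge u S := by
  rcases le_or_gt S.card 1 with hS | hS
  · exact le_mergeVal_unitDemand_singletons_of_card_le_one hu.1.1
      ((unitDemand_empty (topMarginal u)).symm.trans_le le_mergeVal_unitDemand) hS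
  rcases (by have := S.card_le_univ; omega : S.card = 2 ∨ S.card = Fintype.card α) with hS | hS
  · obtain ⟨i, j, hij, rfl⟩ := card_eq_two.1 hS
    obtain ⟨k, -, hk⟩ := exists_mem_notMem_of_card_lt_card (s := {i, j}) (t := univ)
      (by rw [card_pair hij, card_univ, hα]; omega)
    obtain ⟨hik, hjk⟩ : i ≠ k ∧ j ≠ k := by simpa [eq_comm] using hk
    refine le_threeLayerMerge_pair hu hij hik hjk (eq_univ_of_card _ ?_).symm
    rw [hα, card_eq_three]
    exact ⟨i, j, k, hij, hik, hjk, rfl⟩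
  · obtain rfl := eq_univ_of_card S hS
    obtain ⟨i, j, k, hij, hik, hjk, huniv⟩ := card_eq_three.1 (card_univ.trans hα)
    exact le_threeLayerMerge_univ hu hij hik hjk huniv

theorem isMergeOfUnitDemands_of_card_eq_three (hα : Fintype.card α = 3)
    (hu : GrossSubstitutes univ u) : IsMergeOfUnitDemands u := by
  have : Nontrivial α := Fintype.one_lt_card_iff_nontrivial.1 (by omega)
  have hmerge : threeLayerMerge u = u :=
    funext fun S => le_antisymm
      (mergeVal_unitDemand_singletons_le hu.1
        (monotone_mergeVal (monotone_unitDemand (topMarginal_nonneg hu.1)))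
        (fun _ _ => marginalLayers_add_le hu) S)
      (le_threeLayerMerge hα hu S)
  rw [← hmerge]
  exact ((isUnitDemand_unitDemand univ (topMarginal_nonneg hu.1)).isMergeOfUnitDemands.mergeVal
    (isUnitDemand_unitDemand univ (minPairMarginal_nonneg hu.1))).mergeVal
    (isUnitDemand_unitDemand univ fun _ => hu.1.2.1 _ (subset_univ _))

end SmallGroundSets

theorem gs_is_merge_of_unit_demands_general (n : ℕ) (h3 : n ≤ 3)
    (u : Finset (Fin n) → ℝ)
    (hu : GrossSubstitutes (Finset.univ : Finset (Fin n)) u) :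
    ∃ L : List (Finset (Fin n) × (Finset (Fin n) → ℝ)),
      L ≠ [] ∧ (∀ p ∈ L, IsUnitDemand p.1 p.2) ∧
      (mergeList L).1 = Finset.univ ∧ u = (mergeList L).2 := by
  rcases (by omega : n ≤ 1 ∨ n = 2 ∨ n = 3) with hn | rfl | rfl
  · exact isMergeOfUnitDemands_of_card_le_one ((Fintype.card_fin n).trans_le hn) hu.1
  · exact isMergeOfUnitDemands_of_card_eq_two (Fintype.card_fin 2) hu
  · exact isMergeOfUnitDemands_of_card_eq_three (Fintype.card_fin 3) hu

/-- For `1 ≤ n ≤ 3`, every gross substitutes valuation on `[n]` is a merge of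
finitely many unit demand valuations on subsets of `[n]`. -/
theorem gs_is_merge_of_unit_demands (n : ℕ) (h1 : 1 ≤ n) (h3 : n ≤ 3)
    (u : Finset (Fin n) → ℝ)
    (hu : GrossSubstitutes (Finset.univ : Finset (Fin n)) u) :
    ∃ L : List (Finset (Fin n) × (Finset (Fin n) → ℝ)),
      L ≠ [] ∧ (∀ p ∈ L, IsUnitDemand p.1 p.2) ∧
      (mergeList L).1 = Finset.univ ∧ u = (mergeList L).2 :=
  gs_is_merge_of_unit_demands_general n h3 u hu
end

section
/- Let M be a matroid on ground set [n] and let w ∈ ℝ^n satisfy w_i > 0 for all i ∈ [n]. Then the weighted matroid rank valuation ρ^w is irreducible under merging if and only if M is irreducible under matroid union. -/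
open Finset

variable {α : Type*} [DecidableEq α]

/-- A (finite) matroid with ground set `E`, given by its independent sets. -/
structure FinMatroid (α : Type*) [DecidableEq α] where
  E : Finset α
  Indep : Finset α → Prop
  indep_empty : Indep ∅
  indep_subset : ∀ ⦃I J : Finset α⦄, Indep J → I ⊆ J → Indep I
  indep_aug : ∀ ⦃I J : Finset α⦄, Indep I → Indep J → I.card < J.card →
    ∃ e ∈ J, e ∉ I ∧ Indep (insert e I)
  subset_ground : ∀ ⦃I : Finset α⦄, Indep I → I ⊆ E

/-- The weighted matroid rank valuation:
`ρ^w(T) = max { ∑_{i ∈ I} w i : I independent, I ⊆ T }`. -/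
noncomputable def weightedRank (M : FinMatroid α) (w : α → ℝ) (T : Finset α) : ℝ :=
  sSup {x : ℝ | ∃ I : Finset α, M.Indep I ∧ I ⊆ T ∧ x = ∑ i ∈ I, w i}

/-- `M` is the matroid union of `M1` and `M2`. -/
def IsMatroidUnion (M M1 M2 : FinMatroid α) : Prop :=
  M.E = M1.E ∪ M2.E ∧
    ∀ I : Finset α, M.Indep I ↔
      ∃ I1 I2 : Finset α, M1.Indep I1 ∧ M2.Indep I2 ∧ I = I1 ∪ I2

/-- A matroid is irreducible under matroid union if whenever it is a union of
two matroids, one of them equals the matroid itself. -/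
def MatroidIrreducible (M : FinMatroid α) : Prop :=
  ∀ M1 M2 : FinMatroid α, IsMatroidUnion M M1 M2 → M1 = M ∨ M2 = M

/-- A valuation with ground set the full set `[n]` is irreducible under merging
if whenever it is the merge of two gross substitutes valuations whose ground
sets cover `[n]`, it equals one of them. -/
def IrreducibleVal [Fintype α] (v : Finset α → ℝ) : Prop :=
  ∀ (E1 E2 : Finset α) (u1 u2 : Finset α → ℝ),
    GrossSubstitutes E1 u1 → GrossSubstitutes E2 u2 → E1 ∪ E2 = Finset.univ →
    v = mergeVal E1 E2 u1 u2 → v = u1 ∨ v = u2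


section Aux

namespace FinMatroid
attribute [local instance] Classical.propDecidable

noncomputable def fRank (M : FinMatroid α) (Z : Finset α) : ℕ :=
  (Z.powerset.filter M.Indep).sup Finset.card

variable {M : FinMatroid α}

lemma card_le_fRank {I Z : Finset α} (hI : M.Indep I) (hIZ : I ⊆ Z) :
    I.card ≤ M.fRank Z :=
  Finset.le_sup (by simp [Finset.mem_filter, Finset.mem_powerset, hI, hIZ])

lemma exists_fRank (M : FinMatroid α) (Z : Finset α) :
    ∃ I, M.Indep I ∧ I ⊆ Z ∧ I.card = M.fRank Z := by
  have hne : (Z.powerset.filter M.Indep).Nonempty :=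
    ⟨∅, by simp [Finset.mem_filter, M.indep_empty]⟩
  obtain ⟨I, hI, hEq⟩ := Finset.exists_mem_eq_sup _ hne Finset.card
  simp only [Finset.mem_filter, Finset.mem_powerset] at hI
  exact ⟨I, hI.2, hI.1, hEq.symm⟩

lemma exists_maximal {I Z : Finset α} (hI : M.Indep I) (hIZ : I ⊆ Z) :
    ∃ K, M.Indep K ∧ I ⊆ K ∧ K ⊆ Z ∧ ∀ e ∈ Z, e ∉ K → ¬ M.Indep (insert e K) := by
  generalize hn : Z.card - I.card = n
  induction n generalizing I with
  | zero =>
    have hZI : Z.card ≤ I.card := by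
      have := Finset.card_le_card hIZ
      omega
    have : I = Z := Finset.eq_of_subset_of_card_le hIZ hZI
    subst this
    exact ⟨I, hI, Finset.Subset.refl I, Finset.Subset.refl I, fun e he hne => absurd he hne⟩
  | succ n ih =>
    by_cases h : ∃ e ∈ Z, e ∉ I ∧ M.Indep (insert e I)
    · obtain ⟨e, heZ, heI, hind⟩ := h
      have hsub : insert e I ⊆ Z := Finset.insert_subset heZ hIZ
      have hcard : (insert e I).card = I.card + 1 := Finset.card_insert_of_notMem heI
      have hle : (insert e I).card ≤ Z.card := Finset.card_le_card hsub
      obtain ⟨K, h1, h2, h3, h4⟩ := ih hind hsub (by omega)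
      exact ⟨K, h1, (Finset.subset_insert e I).trans h2, h3, h4⟩
    · push_neg at h
      exact ⟨I, hI, Finset.Subset.refl I, hIZ, h⟩

lemma fRank_eq_of_maximal {K Z : Finset α} (hK : M.Indep K) (hKZ : K ⊆ Z)
    (hmax : ∀ e ∈ Z, e ∉ K → ¬ M.Indep (insert e K)) : M.fRank Z = K.card := by
  refine le_antisymm ?_ (card_le_fRank hK hKZ)
  obtain ⟨I, hI, hIZ, hIc⟩ := exists_fRank M Z
  rw [← hIc]
  by_contra hlt
  push_neg at hlt
  obtain ⟨e, heI, heK, hind⟩ := M.indep_aug hK hI hlt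
  exact hmax e (hIZ heI) heK hind

lemma fRank_indep {J : Finset α} (hJ : M.Indep J) : M.fRank J = J.card :=
  fRank_eq_of_maximal hJ (Finset.Subset.refl J) (fun e he hne => absurd he hne)

lemma fRank_insert_dep {J : Finset α} {i : α} (hJ : M.Indep J)
    (hdep : ¬ M.Indep (insert i J)) : M.fRank (insert i J) = J.card := by
  refine fRank_eq_of_maximal hJ (Finset.subset_insert i J) (fun e he hne hind => ?_)
  rcases Finset.mem_insert.mp he with rfl | h
  · exact hdep hind
  · exact hne h

lemma fRank_union_eq {A B : Finset α}
    (h : ∀ x ∈ B, M.fRank (insert x A) = M.fRank A) :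
    M.fRank (A ∪ B) = M.fRank A := by
  obtain ⟨I, hI, hIA, hIc⟩ := exists_fRank M A
  obtain ⟨K, hK, hIK, hKA, hmax⟩ := exists_maximal hI hIA
  have hKc : K.card = M.fRank A := le_antisymm (card_le_fRank hK hKA)
    (hIc ▸ Finset.card_le_card hIK)
  rw [← hKc]
  refine fRank_eq_of_maximal hK (hKA.trans Finset.subset_union_left) ?_
  intro e he heK hind
  rcases Finset.mem_union.mp he with hA | hB
  · exact hmax e hA heK hind
  · have h1 : (insert e K).card ≤ M.fRank (insert e A) :=
      card_le_fRank hind (Finset.insert_subset_insert e hKA)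
    rw [h e hB, ← hKc, Finset.card_insert_of_notMem heK] at h1
    omega

lemma fRank_insert_of_subset {X A : Finset α} {x : α} (hXA : X ⊆ A)
    (h : M.fRank (insert x X) = M.fRank X) :
    M.fRank (insert x A) = M.fRank A := by
  obtain ⟨IX, hIX, hIXX, hIXc⟩ := exists_fRank M X
  obtain ⟨K, hK, hIK, hKA, hmax⟩ := exists_maximal hIX (hIXX.trans hXA)
  have hKc : M.fRank A = K.card := fRank_eq_of_maximal hK hKA hmax
  rw [hKc]
  refine fRank_eq_of_maximal hK (hKA.trans (Finset.subset_insert x A)) ?_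
  intro e he heK hind
  rcases Finset.mem_insert.mp he with rfl | hA
  · -- e = x, x ∉ K
    have hind2 : M.Indep (insert e IX) :=
      M.indep_subset hind (Finset.insert_subset_insert e hIK)
    have heIX : e ∉ IX := fun hc => heK (hIK hc)
    have h1 : (insert e IX).card ≤ M.fRank (insert e X) :=
      card_le_fRank hind2 (Finset.insert_subset_insert e hIXX)
    rw [h, ← hIXc, Finset.card_insert_of_notMem heIX] at h1
    omega
  · exact hmax e hA heK hind

/-- Symmetric exchange for independent sets. -/
lemma sym_exchange {I J : Finset α} {i : α} (hI : M.Indep I) (hJ : M.Indep J)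
    (hiI : i ∈ I) (hiJ : i ∉ J) (hdep : ¬ M.Indep (insert i J)) :
    ∃ j ∈ J, j ∉ I ∧ M.Indep (insert j (I.erase i)) ∧ M.Indep (insert i (J.erase j)) := by
  set C := J.filter (fun j => M.Indep (insert i (J.erase j))) with hCdef
  have hCJ : C ⊆ J := Finset.filter_subset _ _
  have hCind : M.Indep C := M.indep_subset hJ hCJ
  have hJne : J.Nonempty := by
    rcases Finset.eq_empty_or_nonempty J with rfl | h
    · exact absurd (M.indep_subset hI (by simp [hiI])) hdep
    · exact h
  have hCdep : ¬ M.Indep (insert i C) := by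
    intro hind
    have hsub : insert i C ⊆ insert i J := Finset.insert_subset_insert i hCJ
    obtain ⟨K, hK, hK1, hK2, hKmax⟩ := M.exists_maximal hind hsub
    have hKcard : K.card = J.card := by
      have h1 := M.fRank_eq_of_maximal hK hK2 hKmax
      have h2 := M.fRank_insert_dep hJ hdep
      omega
    have hiK : i ∈ K := hK1 (Finset.mem_insert_self i C)
    have h1 : K.erase i ⊆ J := by
      intro e he
      obtain ⟨hne, heK⟩ := Finset.mem_erase.mp he
      rcases Finset.mem_insert.mp (hK2 heK) with rfl | h
      · exact absurd rfl hne
      · exact h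
    have hcard : (K.erase i).card = J.card - 1 := by
      rw [Finset.card_erase_of_mem hiK, hKcard]
    have hsd : (J \ K.erase i).card = 1 := by
      rw [Finset.card_sdiff_of_subset h1, hcard]
      have := Finset.card_pos.mpr hJne
      omega
    obtain ⟨j0, hj0⟩ := Finset.card_eq_one.mp hsd
    have hj0J : j0 ∈ J := by
      have : j0 ∈ J \ K.erase i := hj0 ▸ Finset.mem_singleton_self j0
      exact (Finset.mem_sdiff.mp this).1
    have hj0K : j0 ∉ K.erase i := by
      have : j0 ∈ J \ K.erase i := hj0 ▸ Finset.mem_singleton_self j0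
      exact (Finset.mem_sdiff.mp this).2
    have hKeq : K.erase i = J.erase j0 := by
      apply Finset.eq_of_subset_of_card_le
      · intro e he
        refine Finset.mem_erase.mpr ⟨fun hc => ?_, h1 he⟩
        exact hj0K (hc ▸ he)
      · rw [Finset.card_erase_of_mem hj0J, hcard]
    have hKi : K = insert i (J.erase j0) := by
      rw [← hKeq, Finset.insert_erase hiK]
    have hj0C : j0 ∈ C := by
      rw [hCdef, Finset.mem_filter]
      exact ⟨hj0J, hKi ▸ hK⟩
    have : j0 ∈ K := hK1 (Finset.mem_insert_of_mem hj0C)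
    have hj0i : j0 ≠ i := fun hc => hiJ (hc ▸ hj0J)
    exact hj0K (Finset.mem_erase.mpr ⟨hj0i, this⟩)
  by_contra hcon
  push_neg at hcon
  have hIe : M.Indep (I.erase i) := M.indep_subset hI (Finset.erase_subset i I)
  have key : ∀ x ∈ C, M.fRank (insert x (I.erase i)) = M.fRank (I.erase i) := by
    intro x hx
    obtain ⟨hxJ, hxC⟩ := Finset.mem_filter.mp hx
    by_cases hxI : x ∈ I
    · have hxi : x ≠ i := fun hc => hiJ (hc ▸ hxJ)
      rw [Finset.insert_eq_self.mpr (Finset.mem_erase.mpr ⟨hxi, hxI⟩)]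
    · have hdep2 : ¬ M.Indep (insert x (I.erase i)) := fun h => hcon x hxJ hxI h hxC
      rw [M.fRank_insert_dep hIe hdep2, M.fRank_indep hIe]
  have h1 : M.fRank ((I.erase i) ∪ C) = M.fRank (I.erase i) := M.fRank_union_eq key
  have h2 : M.fRank (insert i C) = M.fRank C := by
    rw [M.fRank_insert_dep hCind hCdep, M.fRank_indep hCind]
  have h3 : M.fRank (insert i ((I.erase i) ∪ C)) = M.fRank ((I.erase i) ∪ C) :=
    M.fRank_insert_of_subset Finset.subset_union_right h2
  have h4 : I.card ≤ M.fRank (insert i ((I.erase i) ∪ C)) := by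
    refine M.card_le_fRank hI ?_
    intro e he
    by_cases hei : e = i
    · subst hei; exact Finset.mem_insert_self e _
    · exact Finset.mem_insert_of_mem (Finset.mem_union_left _
        (Finset.mem_erase.mpr ⟨hei, he⟩))
  rw [h3, h1, M.fRank_indep hIe, Finset.card_erase_of_mem hiI] at h4
  have := Finset.card_pos.mpr ⟨i, hiI⟩
  omega

end FinMatroid

namespace FinMatroid
variable {M : FinMatroid α} {w : α → ℝ}

variable {M : FinMatroid α} {w : α → ℝ}

lemma wr_set_finite (M : FinMatroid α) (w : α → ℝ) (T : Finset α) :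
    {x : ℝ | ∃ I : Finset α, M.Indep I ∧ I ⊆ T ∧ x = ∑ i ∈ I, w i}.Finite := by
  apply Set.Finite.subset (Set.Finite.image (fun I : Finset α => ∑ i ∈ I, w i)
    (T.powerset.finite_toSet))
  rintro x ⟨I, _, hIT, rfl⟩
  exact ⟨I, by simpa using hIT, rfl⟩

lemma wr_set_nonempty (M : FinMatroid α) (w : α → ℝ) (T : Finset α) :
    {x : ℝ | ∃ I : Finset α, M.Indep I ∧ I ⊆ T ∧ x = ∑ i ∈ I, w i}.Nonempty :=
  ⟨0, ∅, M.indep_empty, Finset.empty_subset T, by simp⟩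

lemma wr_le {I T : Finset α} (hI : M.Indep I) (hIT : I ⊆ T) :
    ∑ i ∈ I, w i ≤ weightedRank M w T :=
  le_csSup (wr_set_finite M w T).bddAbove ⟨I, hI, hIT, rfl⟩

lemma wr_exists (M : FinMatroid α) (w : α → ℝ) (T : Finset α) :
    ∃ I, M.Indep I ∧ I ⊆ T ∧ weightedRank M w T = ∑ i ∈ I, w i :=
  (wr_set_nonempty M w T).csSup_mem (wr_set_finite M w T)

lemma wr_le_of_forall {T : Finset α} {c : ℝ}
    (h : ∀ I, M.Indep I → I ⊆ T → ∑ i ∈ I, w i ≤ c) : weightedRank M w T ≤ c := by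
  refine csSup_le (wr_set_nonempty M w T) ?_
  rintro x ⟨I, hI, hIT, rfl⟩
  exact h I hI hIT

lemma wr_nonneg (M : FinMatroid α) (w : α → ℝ) (T : Finset α) : 0 ≤ weightedRank M w T := by
  have := wr_le (M := M) (w := w) M.indep_empty (Finset.empty_subset T)
  simpa using this

lemma wr_empty (M : FinMatroid α) (w : α → ℝ) : weightedRank M w ∅ = 0 := by
  obtain ⟨I, _, hIT, hv⟩ := wr_exists M w ∅
  rw [Finset.subset_empty.mp hIT] at hv
  simpa using hv

lemma wr_mono {S T : Finset α} (hST : S ⊆ T) : weightedRank M w S ≤ weightedRank M w T := by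
  refine wr_le_of_forall fun I hI hIS => wr_le hI (hIS.trans hST)

lemma wr_le_sum (hw : ∀ i, 0 ≤ w i) (T : Finset α) :
    weightedRank M w T ≤ ∑ i ∈ T, w i := by
  refine wr_le_of_forall fun I _ hIT =>
    Finset.sum_le_sum_of_subset_of_nonneg hIT fun i _ _ => hw i

lemma sum_eq_of_subset {w : α → ℝ} (hw : ∀ i, 0 < w i) {J T : Finset α} (hJT : J ⊆ T)
    (hsum : ∑ i ∈ T, w i ≤ ∑ i ∈ J, w i) : J = T := by
  by_contra hne
  have hss : J ⊂ T := Finset.ssubset_iff_subset_ne.mpr ⟨hJT, hne⟩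
  obtain ⟨x, hxT, hxJ⟩ := Finset.exists_of_ssubset hss
  have := Finset.sum_lt_sum_of_subset hJT hxT hxJ (hw x) (fun j _ _ => (hw j).le)
  linarith

lemma indep_iff_wr (hw : ∀ i, 0 < w i) (T : Finset α) :
    M.Indep T ↔ weightedRank M w T = ∑ i ∈ T, w i := by
  constructor
  · intro hT
    exact le_antisymm (wr_le_sum (fun i => (hw i).le) T) (wr_le hT (Finset.Subset.refl T))
  · intro hT
    obtain ⟨I, hI, hIT, hv⟩ := wr_exists M w T
    have : I = T := sum_eq_of_subset hw hIT (by rw [← hv, ← hT])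
    exact this ▸ hI

theorem gs_weightedRank (M : FinMatroid α) (w : α → ℝ) (hw : ∀ i, 0 ≤ w i) (E : Finset α) :
    GrossSubstitutes E (weightedRank M w) := by
  refine ⟨⟨wr_empty M w, fun S _ => wr_nonneg M w S, fun S T hST _ => wr_mono hST⟩, ?_⟩
  intro S T _ _ i hi
  obtain ⟨hiS, hiT⟩ := Finset.mem_sdiff.mp hi
  obtain ⟨I, hI, hIS, hSval⟩ := wr_exists M w S
  obtain ⟨J, hJ, hJT, hTval⟩ := wr_exists M w T
  by_cases hiI : i ∈ I
  · have hiJ : i ∉ J := fun h => hiT (hJT h)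
    have hsumI := Finset.sum_erase_add I w hiI
    by_cases hd : M.Indep (insert i J)
    · left
      have h1 : ∑ x ∈ I.erase i, w x ≤ weightedRank M w (S.erase i) :=
        wr_le (M.indep_subset hI (Finset.erase_subset i I))
          (fun x hx => Finset.mem_erase.mpr ⟨(Finset.mem_erase.mp hx).1, hIS (Finset.mem_erase.mp hx).2⟩)
      have h2 : ∑ x ∈ insert i J, w x ≤ weightedRank M w (insert i T) :=
        wr_le hd (Finset.insert_subset_insert i hJT)
      rw [Finset.sum_insert hiJ] at h2
      rw [hSval, hTval]
      linarith
    · obtain ⟨j, hjJ, hjI, hind1, hind2⟩ := sym_exchange hI hJ hiI hiJ hd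
      have hji : j ≠ i := fun hc => hiJ (hc ▸ hjJ)
      have hjIe : j ∉ I.erase i := fun h => hjI (Finset.mem_of_mem_erase h)
      have hiJe : i ∉ J.erase j := fun h => hiJ (Finset.mem_of_mem_erase h)
      have hsumJ := Finset.sum_erase_add J w hjJ
      have hs1 : ∑ x ∈ insert j (I.erase i), w x = w j + (∑ x ∈ I.erase i, w x) :=
        Finset.sum_insert hjIe
      have hs2 : ∑ x ∈ insert i (J.erase j), w x = w i + (∑ x ∈ J.erase j, w x) :=
        Finset.sum_insert hiJe
      by_cases hjS : j ∈ S
      · left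
        have h1 : ∑ x ∈ insert j (I.erase i), w x ≤ weightedRank M w (S.erase i) := by
          refine wr_le hind1 ?_
          intro x hx
          rcases Finset.mem_insert.mp hx with rfl | hx'
          · exact Finset.mem_erase.mpr ⟨hji, hjS⟩
          · obtain ⟨hxi, hxI⟩ := Finset.mem_erase.mp hx'
            exact Finset.mem_erase.mpr ⟨hxi, hIS hxI⟩
        have h2 : ∑ x ∈ insert i (J.erase j), w x ≤ weightedRank M w (insert i T) := by
          refine wr_le hind2 ?_
          intro x hx
          rcases Finset.mem_insert.mp hx with rfl | hx'
          · exact Finset.mem_insert_self x T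
          · exact Finset.mem_insert_of_mem (hJT (Finset.mem_of_mem_erase hx'))
        rw [hSval, hTval]
        linarith
      · right
        refine ⟨j, Finset.mem_sdiff.mpr ⟨hJT hjJ, hjS⟩, ?_⟩
        have h1 : ∑ x ∈ insert j (I.erase i), w x ≤ weightedRank M w (insert j (S.erase i)) := by
          refine wr_le hind1 (Finset.insert_subset_insert j ?_)
          intro x hx
          obtain ⟨hxi, hxI⟩ := Finset.mem_erase.mp hx
          exact Finset.mem_erase.mpr ⟨hxi, hIS hxI⟩
        have h2 : ∑ x ∈ insert i (J.erase j), w x ≤ weightedRank M w ((insert i T).erase j) := by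
          refine wr_le hind2 ?_
          intro x hx
          rcases Finset.mem_insert.mp hx with rfl | hx'
          · exact Finset.mem_erase.mpr ⟨hji.symm, Finset.mem_insert_self x T⟩
          · obtain ⟨hxj, hxJ⟩ := Finset.mem_erase.mp hx'
            exact Finset.mem_erase.mpr ⟨hxj, Finset.mem_insert_of_mem (hJT hxJ)⟩
        rw [hSval, hTval]
        linarith
  · left
    have h1 : weightedRank M w S ≤ weightedRank M w (S.erase i) := by
      rw [hSval]
      exact wr_le hI fun x hx => Finset.mem_erase.mpr ⟨fun hc => hiI (hc ▸ hx), hIS hx⟩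
    have h2 : weightedRank M w T ≤ weightedRank M w (insert i T) :=
      wr_mono (Finset.subset_insert i T)
    linarith


end FinMatroid

lemma merge_set_finite (E1 E2 : Finset α) (u1 u2 : Finset α → ℝ) (S : Finset α) :
    {x : ℝ | ∃ S1 S2 : Finset α, S = S1 ∪ S2 ∧ Disjoint S1 S2 ∧
      S1 ⊆ E1 ∧ S2 ⊆ E2 ∧ x = u1 S1 + u2 S2}.Finite := by
  apply Set.Finite.subset (Set.Finite.image (fun p : Finset α × Finset α => u1 p.1 + u2 p.2)
    ((S.powerset.finite_toSet).prod (S.powerset.finite_toSet)))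
  rintro x ⟨S1, S2, rfl, _, _, _, rfl⟩
  exact ⟨⟨S1, S2⟩, ⟨Finset.mem_coe.mpr (Finset.mem_powerset.mpr Finset.subset_union_left),
    Finset.mem_coe.mpr (Finset.mem_powerset.mpr Finset.subset_union_right)⟩, rfl⟩

lemma merge_split (E1 E2 S : Finset α) (hcov : S ⊆ E1 ∪ E2) :
    S = (S ∩ E1) ∪ (S \ (S ∩ E1)) ∧ Disjoint (S ∩ E1) (S \ (S ∩ E1)) ∧
      (S ∩ E1) ⊆ E1 ∧ (S \ (S ∩ E1)) ⊆ E2 := by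
  refine ⟨(Finset.union_sdiff_of_subset Finset.inter_subset_left).symm,
    Finset.disjoint_sdiff, Finset.inter_subset_right, ?_⟩
  intro x hx
  obtain ⟨hxS, hxn⟩ := Finset.mem_sdiff.mp hx
  have hxE1 : x ∉ E1 := fun h => hxn (Finset.mem_inter.mpr ⟨hxS, h⟩)
  rcases Finset.mem_union.mp (hcov hxS) with h | h
  · exact absurd h hxE1
  · exact h

lemma merge_set_nonempty {E1 E2 : Finset α} (u1 u2 : Finset α → ℝ) {S : Finset α}
    (hcov : S ⊆ E1 ∪ E2) :
    {x : ℝ | ∃ S1 S2 : Finset α, S = S1 ∪ S2 ∧ Disjoint S1 S2 ∧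
      S1 ⊆ E1 ∧ S2 ⊆ E2 ∧ x = u1 S1 + u2 S2}.Nonempty := by
  obtain ⟨h1, h2, h3, h4⟩ := merge_split E1 E2 S hcov
  exact ⟨_, _, _, h1, h2, h3, h4, rfl⟩

lemma le_merge {E1 E2 : Finset α} {u1 u2 : Finset α → ℝ} {S S1 S2 : Finset α}
    (h : S = S1 ∪ S2) (hd : Disjoint S1 S2) (h1 : S1 ⊆ E1) (h2 : S2 ⊆ E2) :
    u1 S1 + u2 S2 ≤ mergeVal E1 E2 u1 u2 S :=
  le_csSup (merge_set_finite E1 E2 u1 u2 S).bddAbove ⟨S1, S2, h, hd, h1, h2, rfl⟩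

lemma merge_exists {E1 E2 : Finset α} (u1 u2 : Finset α → ℝ) {S : Finset α}
    (hcov : S ⊆ E1 ∪ E2) :
    ∃ S1 S2 : Finset α, S = S1 ∪ S2 ∧ Disjoint S1 S2 ∧ S1 ⊆ E1 ∧ S2 ⊆ E2 ∧
      mergeVal E1 E2 u1 u2 S = u1 S1 + u2 S2 :=
  (merge_set_nonempty u1 u2 hcov).csSup_mem (merge_set_finite E1 E2 u1 u2 S)

lemma merge_le_of_forall {E1 E2 : Finset α} {u1 u2 : Finset α → ℝ} {S : Finset α} {c : ℝ}
    (hcov : S ⊆ E1 ∪ E2)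
    (h : ∀ S1 S2 : Finset α, S = S1 ∪ S2 → Disjoint S1 S2 → S1 ⊆ E1 → S2 ⊆ E2 →
      u1 S1 + u2 S2 ≤ c) :
    mergeVal E1 E2 u1 u2 S ≤ c := by
  refine csSup_le (merge_set_nonempty u1 u2 hcov) ?_
  rintro x ⟨S1, S2, h1, h2, h3, h4, rfl⟩
  exact h S1 S2 h1 h2 h3 h4

lemma merge_congr {E1 E2 : Finset α} {u1 u2 u1' u2' : Finset α → ℝ}
    (h1 : ∀ S ⊆ E1, u1' S = u1 S) (h2 : ∀ S ⊆ E2, u2' S = u2 S) :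
    mergeVal E1 E2 u1' u2' = mergeVal E1 E2 u1 u2 := by
  funext S
  unfold mergeVal
  congr 1
  ext x
  constructor
  · rintro ⟨S1, S2, a, b, c, d, rfl⟩
    exact ⟨S1, S2, a, b, c, d, by rw [h1 S1 c, h2 S2 d]⟩
  · rintro ⟨S1, S2, a, b, c, d, rfl⟩
    exact ⟨S1, S2, a, b, c, d, by rw [h1 S1 c, h2 S2 d]⟩

lemma gs_congr {E : Finset α} {u u' : Finset α → ℝ} (hg : GrossSubstitutes E u)
    (h : ∀ S ⊆ E, u' S = u S) : GrossSubstitutes E u' := by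
  obtain ⟨⟨hz, hnn, hmono⟩, hex⟩ := hg
  refine ⟨⟨by rw [h ∅ (Finset.empty_subset E)]; exact hz,
    fun S hS => by rw [h S hS]; exact hnn S hS,
    fun S T hST hTE => by rw [h S (hST.trans hTE), h T hTE]; exact hmono hST hTE⟩, ?_⟩
  intro S T hS hT i hi
  obtain ⟨hiS, hiT⟩ := Finset.mem_sdiff.mp hi
  have hiE : i ∈ E := hS hiS
  have hSe : S.erase i ⊆ E := (Finset.erase_subset i S).trans hS
  have hTi : insert i T ⊆ E := Finset.insert_subset hiE hT
  rcases hex hS hT i hi with hc | ⟨j, hj, hc⟩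
  · left
    rw [h S hS, h T hT, h _ hSe, h _ hTi]
    exact hc
  · right
    obtain ⟨hjT, hjS⟩ := Finset.mem_sdiff.mp hj
    refine ⟨j, hj, ?_⟩
    rw [h S hS, h T hT, h _ (Finset.insert_subset (hT hjT) hSe),
      h _ ((Finset.erase_subset j (insert i T)).trans hTi)]
    exact hc

lemma FinMatroid.ext' {M1 M2 : FinMatroid α} (hE : M1.E = M2.E)
    (hI : ∀ I, M1.Indep I ↔ M2.Indep I) : M1 = M2 := by
  cases M1
  cases M2
  simp only [FinMatroid.mk.injEq]
  exact ⟨hE, funext fun I => propext (hI I)⟩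

/-- marginal bound for a GS valuation -/
lemma gs_single {E : Finset α} {u : Finset α → ℝ} (hg : GrossSubstitutes E u)
    {A : Finset α} {i : α} (hA : insert i A ⊆ E) : u (insert i A) ≤ u A + u {i} := by
  by_cases hiA : i ∈ A
  · rw [Finset.insert_eq_self.mpr hiA]
    have : ({i} : Finset α) ⊆ E := Finset.singleton_subset_iff.mpr (hA (Finset.mem_insert_self i A))
    have := hg.1.2.1 {i} this
    linarith
  · have hii : i ∈ insert i A \ ∅ := by simp
    rcases hg.2 hA (Finset.empty_subset E) i hii with hc | ⟨j, hj, _⟩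
    · rw [Finset.erase_insert hiA, hg.1.1] at hc
      simpa using hc
    · simp at hj

/-- subadditivity relative to a subset -/
lemma gs_le_add {E : Finset α} {u : Finset α → ℝ} (hg : GrossSubstitutes E u)
    {A B : Finset α} (hBA : B ⊆ A) (hA : A ⊆ E) :
    u A ≤ u B + ∑ i ∈ A \ B, u {i} := by
  generalize hn : (A \ B).card = n
  induction n generalizing A with
  | zero =>
    have : A \ B = ∅ := Finset.card_eq_zero.mp hn
    have hAB : A = B := Finset.Subset.antisymm (fun x hx => by
      by_contra hxB
      exact absurd (Finset.mem_sdiff.mpr ⟨hx, hxB⟩) (by simp [this])) hBA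
    simp [hAB, this]
  | succ n ih =>
    have hne : (A \ B).Nonempty := Finset.card_pos.mp (by omega)
    obtain ⟨i, hi⟩ := hne
    obtain ⟨hiA, hiB⟩ := Finset.mem_sdiff.mp hi
    have hBA' : B ⊆ A.erase i := fun x hx => Finset.mem_erase.mpr
      ⟨fun hc => hiB (hc ▸ hx), hBA hx⟩
    have hA' : A.erase i ⊆ E := (Finset.erase_subset i A).trans hA
    have hsd : (A.erase i) \ B = (A \ B).erase i := by
      ext x
      simp only [Finset.mem_sdiff, Finset.mem_erase]
      tauto
    have hcard : ((A.erase i) \ B).card = n := by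
      rw [hsd, Finset.card_erase_of_mem hi, hn]
      omega
    have h1 := ih hBA' hA' hcard
    have h2 : u A ≤ u (A.erase i) + u {i} := by
      have := gs_single hg (A := A.erase i) (i := i) (by rw [Finset.insert_erase hiA]; exact hA)
      rwa [Finset.insert_erase hiA] at this
    have h3 : ∑ x ∈ A \ B, u {x} = ∑ x ∈ (A.erase i) \ B, u {x} + u {i} := by
      rw [hsd]
      exact (Finset.sum_erase_add (A \ B) _ hi).symm
    linarith


lemma gs_ub {E : Finset α} {u : Finset α → ℝ} {w : α → ℝ}
    (hg : GrossSubstitutes E u) (hub : ∀ i ∈ E, u {i} ≤ w i)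
    {I : Finset α} (hIE : I ⊆ E) : u I ≤ ∑ i ∈ I, w i := by
  have h1 := gs_le_add hg (Finset.empty_subset I) hIE
  rw [hg.1.1, Finset.sdiff_empty] at h1
  have h2 : ∑ i ∈ I, u {i} ≤ ∑ i ∈ I, w i :=
    Finset.sum_le_sum fun i hi => hub i (hIE hi)
  linarith

lemma exists_factor_matroid {E : Finset α} {u : Finset α → ℝ} {w : α → ℝ}
    (hg : GrossSubstitutes E u) (hub : ∀ i ∈ E, u {i} ≤ w i) :
    ∃ N : FinMatroid α, N.E = E ∧ ∀ I, (N.Indep I ↔ I ⊆ E ∧ u I = ∑ i ∈ I, w i) := by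
  have ub := fun {I} (h : I ⊆ E) => gs_ub hg hub h
  refine ⟨⟨E, fun I => I ⊆ E ∧ u I = ∑ i ∈ I, w i, ?_, ?_, ?_, fun I hI => hI.1⟩,
    rfl, fun I => Iff.rfl⟩
  · exact ⟨Finset.empty_subset E, by rw [hg.1.1, Finset.sum_empty]⟩
  · -- subset closed
    rintro J I ⟨hIE, hIu⟩ hJI
    have hJE : J ⊆ E := hJI.trans hIE
    refine ⟨hJE, le_antisymm (ub hJE) ?_⟩
    have h1 := gs_le_add hg hJI hIE
    have h2 : ∑ i ∈ I \ J, u {i} ≤ ∑ i ∈ I \ J, w i :=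
      Finset.sum_le_sum fun i hi => hub i (hIE (Finset.mem_sdiff.mp hi).1)
    have h3 : ∑ i ∈ I \ J, w i + ∑ i ∈ J, w i = ∑ i ∈ I, w i := Finset.sum_sdiff hJI
    linarith
  · -- augmentation
    rintro I J ⟨hIE, hIu⟩ hPJ hcard
    have key : ∀ n (J : Finset α), (J ⊆ E ∧ u J = ∑ i ∈ J, w i) → I.card < J.card →
        (J \ I).card ≤ n →
        ∃ e ∈ J, e ∉ I ∧ (insert e I ⊆ E ∧ u (insert e I) = ∑ i ∈ insert e I, w i) := by
      intro n
      induction n with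
      | zero =>
        intro J hPJ hcard hle
        have : J \ I = ∅ := Finset.card_eq_zero.mp (by omega)
        have : J ⊆ I := fun x hx => by
          by_contra hxI
          exact absurd (Finset.mem_sdiff.mpr ⟨hx, hxI⟩) (by simp [this])
        have := Finset.card_le_card this
        omega
      | succ n ih =>
        intro J hPJ hcard hle
        obtain ⟨hJE, hJu⟩ := hPJ
        have hne : (J \ I).Nonempty := by
          rw [← Finset.card_pos]
          by_contra hc
          push_neg at hc
          have : J ⊆ I := fun x hx => by
            by_contra hxI
            have : (J \ I).Nonempty := ⟨x, Finset.mem_sdiff.mpr ⟨hx, hxI⟩⟩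
            have := Finset.card_pos.mpr this
            omega
          have := Finset.card_le_card this
          omega
        obtain ⟨i, hi⟩ := hne
        obtain ⟨hiJ, hiI⟩ := Finset.mem_sdiff.mp hi
        have hiE : i ∈ E := hJE hiJ
        have hJeE : J.erase i ⊆ E := (Finset.erase_subset i J).trans hJE
        have hsJ : ∑ x ∈ J.erase i, w x + w i = ∑ x ∈ J, w x := Finset.sum_erase_add J w hiJ
        rcases hg.2 hJE hIE i hi with hc | ⟨j, hj, hc⟩
        · have b1 : u (J.erase i) ≤ ∑ x ∈ J.erase i, w x := ub hJeE
          have hins : insert i I ⊆ E := Finset.insert_subset hiE hIE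
          have b2 : u (insert i I) ≤ ∑ x ∈ insert i I, w x := ub hins
          have sI : ∑ x ∈ insert i I, w x = w i + ∑ x ∈ I, w x := Finset.sum_insert hiI
          refine ⟨i, hiJ, hiI, hins, ?_⟩
          linarith
        · obtain ⟨hjI, hjJ⟩ := Finset.mem_sdiff.mp hj
          have hji : j ≠ i := fun hc' => hiI (hc' ▸ hjI)
          have hjJe : j ∉ J.erase i := fun h => hjJ (Finset.mem_of_mem_erase h)
          have hiIe : i ∉ I.erase j := fun h => hiI (Finset.mem_of_mem_erase h)
          set J' := insert j (J.erase i) with hJ'def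
          have hJ'E : J' ⊆ E := Finset.insert_subset (hIE hjI) hJeE
          have hXeq : (insert i I).erase j = insert i (I.erase j) :=
            Finset.erase_insert_of_ne hji.symm
          have hXE : insert i (I.erase j) ⊆ E :=
            Finset.insert_subset hiE ((Finset.erase_subset j I).trans hIE)
          have bJ' : u J' ≤ ∑ x ∈ J', w x := ub hJ'E
          have bX : u (insert i (I.erase j)) ≤ ∑ x ∈ insert i (I.erase j), w x := ub hXE
          have sJ' : ∑ x ∈ J', w x = w j + ∑ x ∈ J.erase i, w x := Finset.sum_insert hjJe
          have sX : ∑ x ∈ insert i (I.erase j), w x = w i + ∑ x ∈ I.erase j, w x :=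
            Finset.sum_insert hiIe
          have sI' : ∑ x ∈ I.erase j, w x + w j = ∑ x ∈ I, w x := Finset.sum_erase_add I w hjI
          rw [hXeq] at hc
          have hPJ' : J' ⊆ E ∧ u J' = ∑ x ∈ J', w x := ⟨hJ'E, by linarith⟩
          have hcardJ' : J'.card = J.card := by
            rw [hJ'def, Finset.card_insert_of_notMem hjJe, Finset.card_erase_of_mem hiJ]
            have : 0 < J.card := Finset.card_pos.mpr ⟨i, hiJ⟩
            omega
          have hsd : J' \ I = (J \ I).erase i := by
            ext x
            simp only [hJ'def, Finset.mem_sdiff, Finset.mem_erase, Finset.mem_insert]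
            constructor
            · rintro ⟨rfl | ⟨hxi, hxJ⟩, hxI⟩
              · exact absurd hjI hxI
              · exact ⟨hxi, hxJ, hxI⟩
            · rintro ⟨hxi, hxJ, hxI⟩
              exact ⟨Or.inr ⟨hxi, hxJ⟩, hxI⟩
          have hcard' : (J' \ I).card ≤ n := by
            rw [hsd, Finset.card_erase_of_mem hi]
            omega
          obtain ⟨e, heJ', heI, hP⟩ := ih J' hPJ' (hcardJ' ▸ hcard) hcard'
          rcases Finset.mem_insert.mp heJ' with rfl | heJ
          · exact absurd hjI heI
          · exact ⟨e, Finset.mem_of_mem_erase heJ, heI, hP⟩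
    exact key (J \ I).card J hPJ hcard (le_refl _)


end Aux

/-- A weighted matroid rank valuation (with strictly positive weights) is
irreducible under merging iff the matroid is irreducible under matroid union. -/
theorem weightedRank_irreducible_iff (n : ℕ) (M : FinMatroid (Fin n))
    (hE : M.E = Finset.univ) (w : Fin n → ℝ) (hw : ∀ i, 0 < w i) :
    IrreducibleVal (weightedRank M w) ↔ MatroidIrreducible M := by
  classical
  have hw0 : ∀ i, 0 ≤ w i := fun i => (hw i).le
  set v := weightedRank M w with hvdef
  constructor
  · -- IrreducibleVal → MatroidIrreducible
    rintro hirr M1 M2 ⟨hEU, hIU⟩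
    have hcov' : M1.E ∪ M2.E = Finset.univ := by rw [← hEU, hE]
    set ρ1 := weightedRank M1 w with hρ1
    set ρ2 := weightedRank M2 w with hρ2
    -- v equals merge of the two weighted ranks
    have hmerge : ∀ S, v S = mergeVal M1.E M2.E ρ1 ρ2 S := by
      intro S
      have hScov : S ⊆ M1.E ∪ M2.E := by rw [hcov']; exact Finset.subset_univ S
      apply le_antisymm
      · obtain ⟨I, hI, hIS, hval⟩ := FinMatroid.wr_exists M w S
        obtain ⟨I1, I2, hI1, hI2, hIeq⟩ := (hIU I).1 hI
        set I2' := I2 \ I1 with hI2'def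
        have hI2' : M2.Indep I2' := M2.indep_subset hI2 Finset.sdiff_subset
        set S1 := (S ∩ M1.E) \ I2' with hS1def
        set S2 := S \ S1 with hS2def
        have hS1S : S1 ⊆ S := Finset.sdiff_subset.trans Finset.inter_subset_left
        have hsplit : S = S1 ∪ S2 := (Finset.union_sdiff_of_subset hS1S).symm
        have hdisj : Disjoint S1 S2 := Finset.disjoint_sdiff
        have hS1E : S1 ⊆ M1.E := Finset.sdiff_subset.trans Finset.inter_subset_right
        have hS2E : S2 ⊆ M2.E := by
          intro x hx
          obtain ⟨hxS, hxS1⟩ := Finset.mem_sdiff.mp hx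
          by_cases hxI2' : x ∈ I2'
          · exact M2.subset_ground hI2' hxI2'
          · have hxE1 : x ∉ M1.E := fun hc =>
              hxS1 (Finset.mem_sdiff.mpr ⟨Finset.mem_inter.mpr ⟨hxS, hc⟩, hxI2'⟩)
            rcases Finset.mem_union.mp (hScov hxS) with h | h
            · exact absurd h hxE1
            · exact h
        have hI1S1 : I1 ⊆ S1 := by
          intro x hx
          refine Finset.mem_sdiff.mpr ⟨Finset.mem_inter.mpr
            ⟨hIS (hIeq ▸ Finset.mem_union_left I2 hx), M1.subset_ground hI1 hx⟩, ?_⟩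
          rw [hI2'def]
          exact fun hc => (Finset.mem_sdiff.mp hc).2 hx
        have hI2'S2 : I2' ⊆ S2 := by
          intro x hx
          refine Finset.mem_sdiff.mpr ⟨hIS (hIeq ▸ Finset.mem_union_right I1
            (Finset.mem_sdiff.mp hx).1), ?_⟩
          rw [hS1def]
          exact fun hc => (Finset.mem_sdiff.mp hc).2 hx
        have hIu : I = I1 ∪ I2' := by
          rw [hI2'def, Finset.union_sdiff_self_eq_union, hIeq]
        have hIdisj : Disjoint I1 I2' := Finset.disjoint_sdiff
        have hsum : ∑ i ∈ I, w i = ∑ i ∈ I1, w i + ∑ i ∈ I2', w i := by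
          rw [hIu, Finset.sum_union hIdisj]
        have h1 : ∑ i ∈ I1, w i ≤ ρ1 S1 := FinMatroid.wr_le hI1 hI1S1
        have h2 : ∑ i ∈ I2', w i ≤ ρ2 S2 := FinMatroid.wr_le hI2' hI2'S2
        have h3 : ρ1 S1 + ρ2 S2 ≤ mergeVal M1.E M2.E ρ1 ρ2 S :=
          le_merge hsplit hdisj hS1E hS2E
        have hvS : v S = ∑ i ∈ I, w i := hval
        linarith
      · refine merge_le_of_forall hScov ?_
        rintro S1 S2 rfl hdisj hS1E hS2E
        obtain ⟨I1, hI1, hI1S, hv1⟩ := FinMatroid.wr_exists M1 w S1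
        obtain ⟨I2, hI2, hI2S, hv2⟩ := FinMatroid.wr_exists M2 w S2
        have hIind : M.Indep (I1 ∪ I2) := (hIU (I1 ∪ I2)).2 ⟨I1, I2, hI1, hI2, rfl⟩
        have hIdisj : Disjoint I1 I2 := hdisj.mono hI1S hI2S
        have hsub : I1 ∪ I2 ⊆ S1 ∪ S2 := Finset.union_subset_union hI1S hI2S
        have := FinMatroid.wr_le (w := w) hIind hsub
        rw [Finset.sum_union hIdisj] at this
        have e1 : ρ1 S1 = ∑ i ∈ I1, w i := hv1
        have e2 : ρ2 S2 = ∑ i ∈ I2, w i := hv2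
        have hvv : v (S1 ∪ S2) = weightedRank M w (S1 ∪ S2) := rfl
        linarith
    -- corrupted factors
    set u1 := fun S : Finset (Fin n) => if S ⊆ M1.E then ρ1 S else v S + 1 with hu1def
    set u2 := fun S : Finset (Fin n) => if S ⊆ M2.E then ρ2 S else v S + 1 with hu2def
    have hagree1 : ∀ S ⊆ M1.E, u1 S = ρ1 S := fun S hS => if_pos hS
    have hagree2 : ∀ S ⊆ M2.E, u2 S = ρ2 S := fun S hS => if_pos hS
    have hg1 : GrossSubstitutes M1.E u1 :=
      gs_congr (FinMatroid.gs_weightedRank M1 w hw0 M1.E) hagree1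
    have hg2 : GrossSubstitutes M2.E u2 :=
      gs_congr (FinMatroid.gs_weightedRank M2 w hw0 M2.E) hagree2
    have hveq : v = mergeVal M1.E M2.E u1 u2 := by
      rw [merge_congr hagree1 hagree2]
      funext S
      exact hmerge S
    rcases hirr M1.E M2.E u1 u2 hg1 hg2 hcov' hveq with h | h
    · left
      have hE1 : M1.E = Finset.univ := by
        by_contra hc
        have hns : ¬ (Finset.univ ⊆ M1.E) := fun hcc => hc (Finset.univ_subset_iff.mp hcc)
        have h1 : u1 Finset.univ = v Finset.univ + 1 := if_neg hns
        have h2 : v Finset.univ = u1 Finset.univ := congrFun h Finset.univ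
        linarith
      have hveq1 : ∀ S, v S = ρ1 S := by
        intro S
        have : u1 S = ρ1 S := hagree1 S (by rw [hE1]; exact Finset.subset_univ S)
        rw [← this]
        exact congrFun h S
      refine FinMatroid.ext' (by rw [hE1, hE]) fun I => ?_
      rw [FinMatroid.indep_iff_wr (M := M1) hw I, FinMatroid.indep_iff_wr (M := M) hw I,
        ← hρ1, ← hvdef, hveq1]
    · right
      have hE2 : M2.E = Finset.univ := by
        by_contra hc
        have hns : ¬ (Finset.univ ⊆ M2.E) := fun hcc => hc (Finset.univ_subset_iff.mp hcc)
        have h1 : u2 Finset.univ = v Finset.univ + 1 := if_neg hns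
        have h2 : v Finset.univ = u2 Finset.univ := congrFun h Finset.univ
        linarith
      have hveq2 : ∀ S, v S = ρ2 S := by
        intro S
        have : u2 S = ρ2 S := hagree2 S (by rw [hE2]; exact Finset.subset_univ S)
        rw [← this]
        exact congrFun h S
      refine FinMatroid.ext' (by rw [hE2, hE]) fun I => ?_
      rw [FinMatroid.indep_iff_wr (M := M2) hw I, FinMatroid.indep_iff_wr (M := M) hw I,
        ← hρ2, ← hvdef, hveq2]
  · -- MatroidIrreducible → IrreducibleVal
    intro hM E1 E2 u1 u2 hg1 hg2 hcov hveq
    have hub1 : ∀ i ∈ E1, u1 {i} ≤ w i := by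
      intro i hi
      have h1 : u1 {i} + u2 ∅ ≤ mergeVal E1 E2 u1 u2 {i} :=
        le_merge (by rw [Finset.union_empty]) (Finset.disjoint_empty_right _)
          (Finset.singleton_subset_iff.mpr hi) (Finset.empty_subset E2)
      rw [hg2.1.1, add_zero] at h1
      have h2 : v {i} ≤ ∑ x ∈ ({i} : Finset (Fin n)), w x :=
        FinMatroid.wr_le_sum hw0 {i}
      rw [Finset.sum_singleton] at h2
      have h3 : v {i} = mergeVal E1 E2 u1 u2 {i} := congrFun hveq {i}
      linarith
    have hub2 : ∀ i ∈ E2, u2 {i} ≤ w i := by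
      intro i hi
      have h1 : u1 ∅ + u2 {i} ≤ mergeVal E1 E2 u1 u2 {i} :=
        le_merge (by rw [Finset.empty_union]) (Finset.disjoint_empty_left _)
          (Finset.empty_subset E1) (Finset.singleton_subset_iff.mpr hi)
      rw [hg1.1.1, zero_add] at h1
      have h2 : v {i} ≤ ∑ x ∈ ({i} : Finset (Fin n)), w x :=
        FinMatroid.wr_le_sum hw0 {i}
      rw [Finset.sum_singleton] at h2
      have h3 : v {i} = mergeVal E1 E2 u1 u2 {i} := congrFun hveq {i}
      linarith
    obtain ⟨N1, hN1E, hN1I⟩ := exists_factor_matroid hg1 hub1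
    obtain ⟨N2, hN2E, hN2I⟩ := exists_factor_matroid hg2 hub2
    have hunion : IsMatroidUnion M N1 N2 := by
      refine ⟨by rw [hE, hN1E, hN2E, hcov], fun I => ?_⟩
      constructor
      · intro hI
        have hIcov : I ⊆ E1 ∪ E2 := by rw [hcov]; exact Finset.subset_univ I
        obtain ⟨S1, S2, hsplit, hdisj, hS1E, hS2E, hmval⟩ := merge_exists u1 u2 hIcov
        have hvI : v I = ∑ i ∈ I, w i := (FinMatroid.indep_iff_wr hw I).1 hI
        have hmI : v I = u1 S1 + u2 S2 := by rw [hveq]; exact hmval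
        have b1 : u1 S1 ≤ ∑ i ∈ S1, w i := gs_ub hg1 hub1 hS1E
        have b2 : u2 S2 ≤ ∑ i ∈ S2, w i := gs_ub hg2 hub2 hS2E
        have hsum : ∑ i ∈ I, w i = ∑ i ∈ S1, w i + ∑ i ∈ S2, w i := by
          rw [hsplit, Finset.sum_union hdisj]
        have e1 : u1 S1 = ∑ i ∈ S1, w i := by linarith
        have e2 : u2 S2 = ∑ i ∈ S2, w i := by linarith
        exact ⟨S1, S2, (hN1I S1).2 ⟨hS1E, e1⟩, (hN2I S2).2 ⟨hS2E, e2⟩, hsplit⟩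
      · rintro ⟨I1, I2, h1, h2, rfl⟩
        set I2' := I2 \ I1 with hI2'def
        have hI2' : N2.Indep I2' := N2.indep_subset h2 Finset.sdiff_subset
        obtain ⟨hI1E, he1⟩ := (hN1I I1).1 h1
        obtain ⟨hI2'E, he2⟩ := (hN2I I2').1 hI2'
        have hsplit : I1 ∪ I2 = I1 ∪ I2' := by
          rw [hI2'def, Finset.union_sdiff_self_eq_union]
        have hdisj : Disjoint I1 I2' := Finset.disjoint_sdiff
        have hge : u1 I1 + u2 I2' ≤ v (I1 ∪ I2) := by
          rw [hveq]
          exact le_merge hsplit hdisj hI1E hI2'E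
        have hle : v (I1 ∪ I2) ≤ ∑ i ∈ I1 ∪ I2, w i := FinMatroid.wr_le_sum hw0 _
        have hsum : ∑ i ∈ I1 ∪ I2, w i = ∑ i ∈ I1, w i + ∑ i ∈ I2', w i := by
          rw [hsplit, Finset.sum_union hdisj]
        refine (FinMatroid.indep_iff_wr hw (I1 ∪ I2)).2 ?_
        rw [he1, he2] at hge
        linarith
    rcases hM N1 N2 hunion with h | h
    · left
      have hE1 : E1 = Finset.univ := by rw [← hN1E, h, hE]
      funext S
      have hSE1 : S ⊆ E1 := by rw [hE1]; exact Finset.subset_univ S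
      have hle : u1 S ≤ v S := by
        have h1 : u1 S + u2 ∅ ≤ mergeVal E1 E2 u1 u2 S :=
          le_merge (by rw [Finset.union_empty]) (Finset.disjoint_empty_right _)
            hSE1 (Finset.empty_subset E2)
        rw [hg2.1.1, add_zero] at h1
        rw [hveq]
        exact h1
      have hge : v S ≤ u1 S := by
        obtain ⟨I, hI, hIS, hval⟩ := FinMatroid.wr_exists M w S
        have hIN1 : N1.Indep I := by rw [h]; exact hI
        obtain ⟨hIE, heI⟩ := (hN1I I).1 hIN1
        have hmono : u1 I ≤ u1 S := hg1.1.2.2 hIS hSE1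
        have hvS : v S = ∑ i ∈ I, w i := hval
        linarith
      linarith
    · right
      have hE2 : E2 = Finset.univ := by rw [← hN2E, h, hE]
      funext S
      have hSE2 : S ⊆ E2 := by rw [hE2]; exact Finset.subset_univ S
      have hle : u2 S ≤ v S := by
        have h1 : u1 ∅ + u2 S ≤ mergeVal E1 E2 u1 u2 S :=
          le_merge (by rw [Finset.empty_union]) (Finset.disjoint_empty_left _)
            (Finset.empty_subset E1) hSE2
        rw [hg1.1.1, zero_add] at h1
        rw [hveq]
        exact h1
      have hge : v S ≤ u2 S := by
        obtain ⟨I, hI, hIS, hval⟩ := FinMatroid.wr_exists M w S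
        have hIN2 : N2.Indep I := by rw [h]; exact hI
        obtain ⟨hIE, heI⟩ := (hN2I I).1 hIN2
        have hmono : u2 I ≤ u2 S := hg2.1.2.2 hIS hSE2
        have hvS : v S = ∑ i ∈ I, w i := hval
        linarith
      linarith
end

section
/- Let n ≥ 4, let π be any set partition of [n], and let a, b be real numbers with 0 < a < b < 2a. Then the partition valuation v^{π,a,b} is a gross substitutes valuation on [n]. -/
open Finset

variable {α : Type*} [DecidableEq α]

/-- The partition valuation `v^{π,a,b}`: value `0` at `∅`, value `a` on nonempty
sets contained in a single part of `π`, and value `b` otherwise. -/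
noncomputable def partitionVal {E : Finset α} (π : Finpartition E) (a b : ℝ)
    (I : Finset α) : ℝ :=
  if I = ∅ then 0 else if ∃ p ∈ π.parts, I ⊆ p then a else b

/-! `v = v^{π,a,b}` takes only the values `0`, `a`, `b`. Removing `i` from `S` lowers `v S`
only when `S = {i}` or when `S \ {i}` lies in one part `q ∌ i`; otherwise monotonicity gives
the first alternative of the exchange property. In these two cases (with `T` nonempty; `T = ∅` is
where `b ≤ 2a` enters) one swaps `i` for some `j ∈ T \ q`, chosen so that `(T ∪ {i}) \ {j}` still
meets two parts whenever `T` does. -/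

namespace Finpartition

variable {E : Finset α} (π : Finpartition E)

lemma exists_mem_notMem_erase_not_subset {T p q : Finset α} (hT : T ⊆ E)
    (hTparts : ¬ ∃ r ∈ π.parts, T ⊆ r) (hp : p ∈ π.parts) (hpq : Disjoint p q)
    (hTq : ¬ T ⊆ q) : ∃ j ∈ T, j ∉ q ∧ ¬ T.erase j ⊆ p := by
  obtain ⟨t, htT, htq⟩ := not_subset.mp hTq
  by_cases hTt : T.erase t ⊆ p
  · have htp : t ∉ p := fun htp =>
      hTparts ⟨p, hp, insert_erase htT ▸ insert_subset htp hTt⟩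
    obtain ⟨y, hy⟩ : (T.erase t).Nonempty := by
      refine nonempty_iff_ne_empty.mpr fun h => ?_
      obtain ⟨r, hr, htr⟩ := π.exists_mem (hT htT)
      exact hTparts ⟨r, hr, insert_erase htT ▸ h ▸ singleton_subset_iff.mpr htr⟩
    exact ⟨y, mem_of_mem_erase hy, disjoint_left.mp hpq (hTt hy),
      fun h => htp (h (mem_erase.mpr ⟨(ne_of_mem_erase hy).symm, htT⟩))⟩
  · exact ⟨t, htT, htq, hTt⟩

end Finpartition

section partitionVal

variable {E : Finset α} {π : Finpartition E} {a b : ℝ}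

lemma partitionVal_eq_of_subset {I p : Finset α} (hI : I.Nonempty) (hp : p ∈ π.parts)
    (hIp : I ⊆ p) : partitionVal π a b I = a := by
  rw [partitionVal, if_neg hI.ne_empty, if_pos ⟨p, hp, hIp⟩]

lemma partitionVal_eq_of_not_subset {I p : Finset α} {x : α} (hp : p ∈ π.parts) (hxp : x ∈ p)
    (hxI : x ∈ I) (hIp : ¬ I ⊆ p) : partitionVal π a b I = b := by
  refine if_neg (ne_empty_of_mem hxI) |>.trans (if_neg ?_)
  rintro ⟨r, hr, hIr⟩
  exact hIp (π.eq_of_mem_parts hr hp (hIr hxI) hxp ▸ hIr)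

lemma partitionVal_singleton {x : α} (hx : x ∈ E) : partitionVal π a b {x} = a := by
  obtain ⟨p, hp, hxp⟩ := π.exists_mem hx
  exact partitionVal_eq_of_subset (singleton_nonempty x) hp (singleton_subset_iff.mpr hxp)

lemma partitionVal_le_of_subset (ha : 0 ≤ a) {I p : Finset α} (hp : p ∈ π.parts)
    (hIp : I ⊆ p) : partitionVal π a b I ≤ a := by
  unfold partitionVal
  split_ifs with _ hparts
  exacts [ha, le_rfl, absurd ⟨p, hp, hIp⟩ hparts]

lemma le_partitionVal (hab : a ≤ b) {I : Finset α} (hI : I.Nonempty) :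
    a ≤ partitionVal π a b I := by
  rw [partitionVal, if_neg hI.ne_empty]
  split_ifs <;> linarith

lemma partitionVal_le (ha : 0 ≤ a) (hab : a ≤ b) (I : Finset α) : partitionVal π a b I ≤ b := by
  rw [partitionVal]
  split_ifs <;> linarith

lemma partitionVal_nonneg (ha : 0 ≤ a) (hab : a ≤ b) (I : Finset α) :
    0 ≤ partitionVal π a b I := by
  rw [partitionVal]
  split_ifs <;> linarith

lemma partitionVal_mono (ha : 0 ≤ a) (hab : a ≤ b) {S T : Finset α} (hST : S ⊆ T) :
    partitionVal π a b S ≤ partitionVal π a b T := by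
  rcases S.eq_empty_or_nonempty with rfl | hS
  · rw [partitionVal, if_pos rfl]
    exact partitionVal_nonneg ha hab T
  by_cases hT : ∃ p ∈ π.parts, T ⊆ p
  · obtain ⟨p, hp, hTp⟩ := hT
    rw [partitionVal_eq_of_subset hS hp (hST.trans hTp),
      partitionVal_eq_of_subset (hS.mono hST) hp hTp]
  · exact (partitionVal_le ha hab S).trans_eq
      ((if_neg (hS.mono hST).ne_empty).trans (if_neg hT)).symm

lemma partitionVal_insert_le_add (ha : 0 ≤ a) (hab : a ≤ b) (hb : b ≤ 2 * a) (i : α)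
    (A : Finset α) :
    partitionVal π a b (insert i A) ≤ partitionVal π a b A + partitionVal π a b {i} := by
  rcases A.eq_empty_or_nonempty with rfl | hA
  · simp [partitionVal]
  linarith [partitionVal_le (π := π) ha hab (insert i A), le_partitionVal (π := π) hab hA,
    le_partitionVal (π := π) hab (singleton_nonempty i)]

lemma isValuation_partitionVal (ha : 0 ≤ a) (hab : a ≤ b) :
    IsValuation E (partitionVal π a b) :=
  ⟨if_pos rfl, fun S _ => partitionVal_nonneg ha hab S,
    fun _ _ hST _ => partitionVal_mono ha hab hST⟩

lemma exists_le_partitionVal_insert_erase (ha : 0 ≤ a) (hab : a ≤ b) {T p q : Finset α} {i : α}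
    (hT : T ⊆ E) (hp : p ∈ π.parts) (hip : i ∈ p) (hpq : Disjoint p q) (hiT : i ∉ T)
    (hTq : ¬ T ⊆ q) : ∃ j ∈ T, j ∉ q ∧
      partitionVal π a b T ≤ partitionVal π a b ((insert i T).erase j) := by
  by_cases hTparts : ∃ r ∈ π.parts, T ⊆ r
  · obtain ⟨r, hr, hTr⟩ := hTparts
    obtain ⟨t, htT, htq⟩ := not_subset.mp hTq
    have hit : i ∈ (insert i T).erase t := mem_erase.mpr ⟨ne_of_mem_of_not_mem htT hiT |>.symm,
      mem_insert_self i T⟩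
    exact ⟨t, htT, htq, (partitionVal_le_of_subset ha hr hTr).trans (le_partitionVal hab ⟨i, hit⟩)⟩
  · obtain ⟨j, hjT, hjq, hTj⟩ := π.exists_mem_notMem_erase_not_subset hT hTparts hp hpq hTq
    refine ⟨j, hjT, hjq, ?_⟩
    rw [erase_insert_of_ne (ne_of_mem_of_not_mem hjT hiT).symm,
      partitionVal_eq_of_not_subset hp hip (mem_insert_self i _)
        fun h => hTj ((subset_insert i _).trans h)]
    exact partitionVal_le ha hab T

lemma partitionVal_singleton_exchange (ha : 0 ≤ a) (hab : a ≤ b) {T : Finset α} {i : α}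
    (hi : i ∈ E) (hT : T ⊆ E) (hTne : T.Nonempty) (hiT : i ∉ T) :
    ∃ j ∈ T \ {i}, partitionVal π a b {i} + partitionVal π a b T ≤
      partitionVal π a b {j} + partitionVal π a b ((insert i T).erase j) := by
  obtain ⟨p, hp, hip⟩ := π.exists_mem hi
  obtain ⟨j, hjT, -, hj⟩ := exists_le_partitionVal_insert_erase ha hab hT hp hip
    (disjoint_empty_right p) hiT fun h => hTne.ne_empty (subset_empty.mp h)
  refine ⟨j, mem_sdiff.mpr ⟨hjT, notMem_singleton.mpr (ne_of_mem_of_not_mem hjT hiT)⟩, ?_⟩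
  rw [partitionVal_singleton hi, partitionVal_singleton (hT hjT)]
  linarith

lemma partitionVal_exchange (ha : 0 ≤ a) (hab : a ≤ b) (hb : b ≤ 2 * a) {S T : Finset α} {i : α}
    (hS : S ⊆ E) (hT : T ⊆ E) (hiS : i ∈ S) (hiT : i ∉ T) :
    partitionVal π a b S + partitionVal π a b T ≤
        partitionVal π a b (S.erase i) + partitionVal π a b (insert i T) ∨
      ∃ j ∈ T \ S, partitionVal π a b S + partitionVal π a b T ≤
        partitionVal π a b (insert j (S.erase i)) + partitionVal π a b ((insert i T).erase j) := by
  have hvS := partitionVal_le (π := π) ha hab S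
  by_cases hSS' : partitionVal π a b S ≤ partitionVal π a b (S.erase i)
  · exact .inl (add_le_add hSS' (partitionVal_mono ha hab (subset_insert i T)))
  rcases T.eq_empty_or_nonempty with rfl | ⟨t, ht⟩
  · left
    simpa [insert_erase hiS, partitionVal] using partitionVal_insert_le_add (π := π) ha hab hb i
      (S.erase i)
  rcases (S.erase i).eq_empty_or_nonempty with hS' | ⟨s, hs⟩
  · obtain rfl : S = {i} :=
      ((erase_eq_empty_iff S i).mp hS').resolve_left (ne_empty_of_mem hiS)
    obtain ⟨j, hj, hle⟩ := partitionVal_singleton_exchange ha hab (hS hiS) hT ⟨t, ht⟩ hiT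
    exact .inr ⟨j, hj, by rwa [hS', insert_empty_eq]⟩
  obtain ⟨q, hq, hsq⟩ := π.exists_mem (hS (mem_of_mem_erase hs))
  have hS'q : S.erase i ⊆ q := by
    by_contra h
    linarith [partitionVal_eq_of_not_subset (a := a) (b := b) hq hsq hs h]
  have hvS' : partitionVal π a b (S.erase i) = a := partitionVal_eq_of_subset ⟨s, hs⟩ hq hS'q
  have hiq : i ∉ q := fun hiq => by
    linarith [partitionVal_le_of_subset (π := π) (b := b) ha hq
      (insert_erase hiS ▸ insert_subset hiq hS'q)]
  obtain ⟨p, hp, hip⟩ := π.exists_mem (hS hiS)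
  have hpq : Disjoint p q := π.disjoint hp hq fun h => hiq (h ▸ hip)
  by_cases hTq : T ⊆ q
  · left
    linarith [partitionVal_le_of_subset (π := π) (b := b) ha hq hTq,
      partitionVal_eq_of_not_subset (a := a) (b := b) hq (hTq ht) (mem_insert_of_mem ht)
        fun h => hiq (h (mem_insert_self i T))]
  obtain ⟨j, hjT, hjq, hj⟩ := exists_le_partitionVal_insert_erase ha hab hT hp hip hpq hiT hTq
  right
  refine ⟨j, mem_sdiff.mpr ⟨hjT, fun hjS => hjq (hS'q (mem_erase.mpr
    ⟨ne_of_mem_of_not_mem hjT hiT, hjS⟩))⟩, ?_⟩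
  linarith [partitionVal_eq_of_not_subset (a := a) (b := b) hq hsq (mem_insert_of_mem hs)
    fun h => hjq (h (mem_insert_self j _))]

theorem grossSubstitutes_partitionVal (ha : 0 ≤ a) (hab : a ≤ b) (hb : b ≤ 2 * a) :
    GrossSubstitutes E (partitionVal π a b) :=
  ⟨isValuation_partitionVal ha hab, fun _ _ hS hT _ hi =>
    partitionVal_exchange ha hab hb hS hT (mem_sdiff.mp hi).1 (mem_sdiff.mp hi).2⟩

end partitionVal

theorem partitionVal_grossSubstitutes_general (n : ℕ)
    (π : Finpartition (Finset.univ : Finset (Fin n))) (a b : ℝ)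
    (ha : 0 < a) (hab : a < b) (hb : b < 2 * a) :
    GrossSubstitutes (Finset.univ : Finset (Fin n)) (partitionVal π a b) :=
  grossSubstitutes_partitionVal ha.le hab.le hb.le

/-- For `n ≥ 4`, every partition valuation `v^{π,a,b}` with `0 < a < b < 2a`
is a gross substitutes valuation on `[n]`. -/
theorem partitionVal_grossSubstitutes (n : ℕ) (hn : 4 ≤ n)
    (π : Finpartition (Finset.univ : Finset (Fin n))) (a b : ℝ)
    (ha : 0 < a) (hab : a < b) (hb : b < 2 * a) :
    GrossSubstitutes (Finset.univ : Finset (Fin n)) (partitionVal π a b) :=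
  partitionVal_grossSubstitutes_general n π a b ha hab hb
end

section
/- Let n ≥ 4, let a, b be real numbers with 0 < a < b < 2a, and let π be a set partition of [n] in which every part has cardinality at least 2. Then the partition valuation v^{π,a,b} is irreducible under merging: whenever v^{π,a,b} = u * u' for gross substitutes valuations u and u' on subsets of [n], then v^{π,a,b} = u or v^{π,a,b} = u'. -/
open Finset

variable {α : Type*} [DecidableEq α]

section AuxLemmas

lemma mergeSet_finite [Fintype α] (E1 E2 : Finset α) (u1 u2 : Finset α → ℝ) (S : Finset α) :
    {x : ℝ | ∃ S1 S2 : Finset α, S = S1 ∪ S2 ∧ Disjoint S1 S2 ∧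
      S1 ⊆ E1 ∧ S2 ⊆ E2 ∧ x = u1 S1 + u2 S2}.Finite := by
  apply Set.Finite.subset (Set.finite_range fun p : Finset α × Finset α => u1 p.1 + u2 p.2)
  rintro x ⟨S1, S2, -, -, -, -, rfl⟩
  exact ⟨(S1, S2), rfl⟩

lemma le_mergeVal [Fintype α] {E1 E2 : Finset α} {u1 u2 : Finset α → ℝ} {S1 S2 : Finset α}
    (hd : Disjoint S1 S2) (h1 : S1 ⊆ E1) (h2 : S2 ⊆ E2) :
    u1 S1 + u2 S2 ≤ mergeVal E1 E2 u1 u2 (S1 ∪ S2) :=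
  le_csSup (mergeSet_finite E1 E2 u1 u2 _).bddAbove ⟨S1, S2, rfl, hd, h1, h2, rfl⟩

lemma mergeVal_exists [Fintype α] {E1 E2 : Finset α} (hcov : E1 ∪ E2 = Finset.univ)
    (u1 u2 : Finset α → ℝ) (S : Finset α) :
    ∃ S1 S2 : Finset α, S = S1 ∪ S2 ∧ Disjoint S1 S2 ∧ S1 ⊆ E1 ∧ S2 ⊆ E2 ∧
      mergeVal E1 E2 u1 u2 S = u1 S1 + u2 S2 := by
  have hsub2 : S \ E1 ⊆ E2 := by
    intro x hx
    rcases mem_sdiff.1 hx with ⟨-, hx1⟩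
    have : x ∈ E1 ∪ E2 := by rw [hcov]; exact mem_univ x
    exact (mem_union.1 this).resolve_left hx1
  have hSu : S = (S ∩ E1) ∪ (S \ E1) := by
    ext x; simp only [mem_union, mem_inter, mem_sdiff]; tauto
  have hdis : Disjoint (S ∩ E1) (S \ E1) := by
    rw [Finset.disjoint_left]
    intro x hx1 hx2
    exact (mem_sdiff.1 hx2).2 (mem_inter.1 hx1).2
  have hne : Set.Nonempty {x : ℝ | ∃ S1 S2 : Finset α, S = S1 ∪ S2 ∧ Disjoint S1 S2 ∧
      S1 ⊆ E1 ∧ S2 ⊆ E2 ∧ x = u1 S1 + u2 S2} :=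
    ⟨u1 (S ∩ E1) + u2 (S \ E1), S ∩ E1, S \ E1, hSu, hdis, inter_subset_right, hsub2, rfl⟩
  have hmem := hne.csSup_mem (mergeSet_finite E1 E2 u1 u2 S)
  obtain ⟨S1, S2, h1, h2, h3, h4, h5⟩ := hmem
  exact ⟨S1, S2, h1, h2, h3, h4, h5⟩

lemma mergeVal_comm (E1 E2 : Finset α) (u1 u2 : Finset α → ℝ) :
    mergeVal E1 E2 u1 u2 = mergeVal E2 E1 u2 u1 := by
  funext S
  unfold mergeVal
  congr 1
  ext x
  constructor
  · rintro ⟨S1, S2, h, hd, h1, h2, rfl⟩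
    exact ⟨S2, S1, by rw [h, union_comm], hd.symm, h2, h1, add_comm _ _⟩
  · rintro ⟨S1, S2, h, hd, h1, h2, rfl⟩
    exact ⟨S2, S1, by rw [h, union_comm], hd.symm, h2, h1, add_comm _ _⟩

lemma gs_zero_of_singletons {E : Finset α} {u : Finset α → ℝ}
    (hu : GrossSubstitutes E u) (h0 : ∀ i ∈ E, u {i} = 0) :
    ∀ S, S ⊆ E → u S = 0 := by
  intro S
  induction S using Finset.strongInduction with
  | _ S ih =>
    intro hSE
    rcases S.eq_empty_or_nonempty with rfl | ⟨i, hi⟩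
    · exact hu.1.1
    have key := hu.2 hSE (empty_subset E) i (mem_sdiff.2 ⟨hi, notMem_empty i⟩)
    rcases key with h | ⟨j, hj, -⟩
    · have h1 : u (S.erase i) = 0 :=
        ih _ (erase_ssubset hi) ((erase_subset i S).trans hSE)
      have h2 : u {i} = 0 := h0 i (hSE hi)
      have h3 : u ∅ = 0 := hu.1.1
      have h4 : 0 ≤ u S := hu.1.2.1 S hSE
      have h5 : insert i (∅ : Finset α) = {i} := rfl
      rw [h5] at h
      linarith
    · simp at hj

lemma pv_empty {E : Finset α} (π : Finpartition E) (a b : ℝ) :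
    partitionVal π a b ∅ = 0 := by
  rw [partitionVal, if_pos rfl]

lemma pv_singleton {E : Finset α} (π : Finpartition E) (a b : ℝ) {i : α} (hi : i ∈ E) :
    partitionVal π a b {i} = a := by
  obtain ⟨p, hp, hip⟩ := π.exists_mem hi
  rw [partitionVal, if_neg (by simp), if_pos ⟨p, hp, singleton_subset_iff.2 hip⟩]

lemma pv_le_b {E : Finset α} (π : Finpartition E) {a b : ℝ} (hab : a ≤ b) {I : Finset α}
    (hI : I ≠ ∅) : partitionVal π a b I ≤ b := by
  rw [partitionVal, if_neg hI]
  split_ifs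
  · exact hab
  · exact le_refl b

lemma pv_pair_same {E : Finset α} (π : Finpartition E) (a b : ℝ) {i j : α} {p : Finset α}
    (hp : p ∈ π.parts) (hi : i ∈ p) (hj : j ∈ p) :
    partitionVal π a b {i, j} = a := by
  rw [partitionVal, if_neg (by simp),
    if_pos ⟨p, hp, insert_subset_iff.2 ⟨hi, singleton_subset_iff.2 hj⟩⟩]

lemma pair_contra {n : ℕ} {a b : ℝ} (hab : a ≤ b) (hb : b < 2 * a)
    {π : Finpartition (Finset.univ : Finset (Fin n))}
    {E1 E2 : Finset (Fin n)} {u1 u2 : Finset (Fin n) → ℝ}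
    (hv : partitionVal π a b = mergeVal E1 E2 u1 u2)
    {i j : Fin n} (hne : i ≠ j) (hi : i ∈ E1) (hui : u1 {i} = a)
    (hj : j ∈ E2) (huj : u2 {j} = a) : False := by
  have h := le_mergeVal (u1 := u1) (u2 := u2)
    (Finset.disjoint_singleton.2 hne) (singleton_subset_iff.2 hi) (singleton_subset_iff.2 hj)
  rw [← hv, hui, huj] at h
  have hle : partitionVal π a b ({i} ∪ {j}) ≤ b := pv_le_b π hab (by simp [Finset.union_eq_empty])
  linarith

lemma aux_main {n : ℕ} {a b : ℝ} (ha : 0 < a)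
    {π : Finpartition (Finset.univ : Finset (Fin n))}
    (hparts : ∀ p ∈ π.parts, 2 ≤ p.card)
    {E1 E2 : Finset (Fin n)} {u1 u2 : Finset (Fin n) → ℝ}
    (hu1 : GrossSubstitutes E1 u1) (hu2 : GrossSubstitutes E2 u2)
    (hcov : E1 ∪ E2 = Finset.univ)
    (hv : partitionVal π a b = mergeVal E1 E2 u1 u2)
    (hall : ∀ i, i ∈ E1 ∧ u1 {i} = a) :
    partitionVal π a b = u1 := by
  have hE1 : ∀ S : Finset (Fin n), S ⊆ E1 :=
    fun S x hx => (hall x).1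
  -- u2 singletons are zero
  have h2sing : ∀ j ∈ E2, u2 {j} = 0 := by
    intro j hj
    obtain ⟨p, hp, hjp⟩ := π.exists_mem (mem_univ j)
    have h2p : 1 < p.card := by have := hparts p hp; omega
    obtain ⟨i, hip, hij⟩ := Finset.exists_mem_ne h2p j
    have h := le_mergeVal (u1 := u1) (u2 := u2)
      (Finset.disjoint_singleton.2 hij) (singleton_subset_iff.2 (hall i).1)
      (singleton_subset_iff.2 hj)
    rw [← hv, (hall i).2] at h
    have hvp : partitionVal π a b ({i} ∪ {j}) = a := pv_pair_same π a b hp hip hjp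
    have hnn : 0 ≤ u2 {j} := hu2.1.2.1 _ (singleton_subset_iff.2 hj)
    rw [hvp] at h
    linarith
  have h2zero : ∀ S, S ⊆ E2 → u2 S = 0 := gs_zero_of_singletons hu2 h2sing
  funext S
  obtain ⟨S1, S2, hS, hd, h1, h2, heq⟩ := mergeVal_exists hcov u1 u2 S
  have hup : partitionVal π a b S ≤ u1 S := by
    rw [hv, heq, h2zero S2 h2]
    have : S1 ⊆ S := hS ▸ subset_union_left
    have := hu1.1.2.2 this (hE1 S)
    linarith
  have hlo : u1 S ≤ partitionVal π a b S := by
    have h := le_mergeVal (u1 := u1) (u2 := u2)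
      (Finset.disjoint_empty_right S) (hE1 S) (empty_subset E2)
    rw [union_empty, ← hv, hu2.1.1] at h
    linarith
  linarith

end AuxLemmas

/-- For `n ≥ 4` and a partition of `[n]` all of whose parts have size at least
two, the partition valuation `v^{π,a,b}` (with `0 < a < b < 2a`) is
irreducible under merging. -/
theorem partitionVal_irreducible (n : ℕ) (hn : 4 ≤ n) (a b : ℝ)
    (ha : 0 < a) (hab : a < b) (hb : b < 2 * a)
    (π : Finpartition (Finset.univ : Finset (Fin n)))
    (hparts : ∀ p ∈ π.parts, 2 ≤ p.card) :
    IrreducibleVal (partitionVal π a b) := by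
  intro E1 E2 u1 u2 hu1 hu2 hcov hv
  have hsing : ∀ i : Fin n, (i ∈ E1 ∧ u1 {i} = a) ∨ (i ∈ E2 ∧ u2 {i} = a) := by
    intro i
    obtain ⟨S1, S2, hS, hd, h1, h2, heq⟩ := mergeVal_exists hcov u1 u2 {i}
    have hvi : partitionVal π a b {i} = a := pv_singleton π a b (mem_univ i)
    rw [hv, heq] at hvi
    have hS1 : S1 ⊆ {i} := hS ▸ subset_union_left
    rcases subset_singleton_iff.1 hS1 with rfl | rfl
    · have hS2 : S2 = {i} := by rw [hS, empty_union]
      subst hS2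
      right
      refine ⟨singleton_subset_iff.1 h2, ?_⟩
      rw [hu1.1.1, zero_add] at hvi
      exact hvi
    · have hS2 : S2 ⊆ {i} := hS ▸ subset_union_right
      have hiS2 : i ∉ S2 := Finset.disjoint_singleton_left.1 hd
      rcases subset_singleton_iff.1 hS2 with rfl | rfl
      · left
        refine ⟨singleton_subset_iff.1 h1, ?_⟩
        rw [hu2.1.1, add_zero] at hvi
        exact hvi
      · exact absurd (mem_singleton_self i) hiS2
  by_cases hP : ∀ i, i ∈ E1 ∧ u1 {i} = a
  · exact Or.inl (aux_main ha hparts hu1 hu2 hcov hv hP)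
  by_cases hQ : ∀ i, i ∈ E2 ∧ u2 {i} = a
  · refine Or.inr (aux_main ha hparts hu2 hu1 (by rw [union_comm]; exact hcov) ?_ hQ)
    rw [hv]
    exact mergeVal_comm E1 E2 u1 u2
  obtain ⟨i0, hi0⟩ := not_forall.1 hP
  obtain ⟨j0, hj0⟩ := not_forall.1 hQ
  have hQ0 : i0 ∈ E2 ∧ u2 {i0} = a := (hsing i0).resolve_left hi0
  have hP0 : j0 ∈ E1 ∧ u1 {j0} = a := (hsing j0).resolve_right hj0
  exfalso
  rcases eq_or_ne j0 i0 with rfl | hne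
  · obtain ⟨k, hk⟩ := Fintype.exists_ne_of_one_lt_card (by simp; omega) j0
    rcases hsing k with hPk | hQk
    · exact pair_contra hab.le hb hv hk hPk.1 hPk.2 hQ0.1 hQ0.2
    · exact pair_contra hab.le hb hv hk.symm hP0.1 hP0.2 hQk.1 hQk.2
  · exact pair_contra hab.le hb hv hne hP0.1 hP0.2 hQ0.1 hQ0.2
end

section
/- Let P ⊆ [0,1]^n be an M♮ lattice polytope such that the function ρ_P, defined by ρ_P(I) = max{ Σ_{i∈I} x_i : x ∈ P } for I ⊆ [n], is the rank function of a matroid on [n] that is irreducible under matroid union. Then P is M-irreducible: whenever P = (P¹ + P²) ∩ [0,1]^n for M♮ lattice polytopes P¹, P² ⊆ [0,1]^n (with + the Minkowski sum), then P = P¹ or P = P². -/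
open Finset

variable {α : Type*} [DecidableEq α]

/-- The 0/1 indicator vector of a subset `S ⊆ [n]` in `ℝ^n`. -/
def indicVec {n : ℕ} (S : Finset (Fin n)) : Fin n → ℝ :=
  fun i => if i ∈ S then 1 else 0

/-- A family of subsets of `[n]` is M♮-convex. -/
def MConvexFamily {n : ℕ} (F : Set (Finset (Fin n))) : Prop :=
  ∀ X ∈ F, ∀ Y ∈ F, ∀ i ∈ X \ Y,
    (X.erase i ∈ F ∧ insert i Y ∈ F) ∨
      ∃ j ∈ Y \ X, insert j (X.erase i) ∈ F ∧ (insert i Y).erase j ∈ F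

/-- An M♮ lattice polytope in `[0,1]^n`: the convex hull of the indicator
vectors of a nonempty M♮-convex family of subsets of `[n]`. -/
def IsMNatPolytope {n : ℕ} (P : Set (Fin n → ℝ)) : Prop :=
  ∃ F : Set (Finset (Fin n)), F.Nonempty ∧ MConvexFamily F ∧
    P = convexHull ℝ (indicVec '' F)

/-- `ρ_P(I) = max { ∑_{i ∈ I} x i : x ∈ P }`. -/
noncomputable def rhoP {n : ℕ} (P : Set (Fin n → ℝ)) (I : Finset (Fin n)) : ℝ :=
  sSup {r : ℝ | ∃ x ∈ P, r = ∑ i ∈ I, x i}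

/-- The rank function of a matroid: the maximum cardinality of an independent
subset of `T`. -/
noncomputable def rankFn (M : FinMatroid α) (T : Finset α) : ℕ :=
  sSup {k : ℕ | ∃ I : Finset α, M.Indep I ∧ I ⊆ T ∧ I.card = k}

namespace FinMatroid

variable (M : FinMatroid α)

lemma rank_set_nonempty (T : Finset α) :
    {k : ℕ | ∃ I : Finset α, M.Indep I ∧ I ⊆ T ∧ I.card = k}.Nonempty :=
  ⟨0, ∅, M.indep_empty, empty_subset _, card_empty⟩

lemma rank_set_bdd (T : Finset α) :
    BddAbove {k : ℕ | ∃ I : Finset α, M.Indep I ∧ I ⊆ T ∧ I.card = k} := by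
  refine ⟨T.card, fun k hk => ?_⟩
  obtain ⟨I, _, hsub, hcard⟩ := hk
  exact hcard ▸ card_le_card hsub

lemma card_le_rank {I T : Finset α} (hI : M.Indep I) (hsub : I ⊆ T) :
    I.card ≤ rankFn M T :=
  le_csSup (M.rank_set_bdd T) ⟨I, hI, hsub, rfl⟩

lemma rank_le_card (T : Finset α) : rankFn M T ≤ T.card := by
  refine csSup_le (M.rank_set_nonempty T) ?_
  rintro k ⟨I, _, hsub, rfl⟩
  exact card_le_card hsub

lemma rank_mono {T T' : Finset α} (h : T ⊆ T') : rankFn M T ≤ rankFn M T' := by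
  refine csSup_le (M.rank_set_nonempty T) ?_
  rintro k ⟨I, hI, hsub, rfl⟩
  exact M.card_le_rank hI (hsub.trans h)

lemma rank_empty : rankFn M (∅ : Finset α) = 0 :=
  Nat.le_antisymm (by simpa using M.rank_le_card ∅) (Nat.zero_le _)

/-- a maximum-cardinality independent subset exists and has cardinality `rankFn`. -/
lemma exists_max_indep (T : Finset α) :
    ∃ J, M.Indep J ∧ J ⊆ T ∧ J.card = rankFn M T := by
  have := Nat.sSup_mem (M.rank_set_nonempty T) (M.rank_set_bdd T)
  obtain ⟨J, hJ, hsub, hcard⟩ := this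
  exact ⟨J, hJ, hsub, hcard⟩

/-- extension of an independent subset to a maximum one. -/
lemma exists_basis_superset {J0 T : Finset α} (hJ0 : M.Indep J0) (hsub : J0 ⊆ T) :
    ∃ J, M.Indep J ∧ J ⊆ T ∧ J0 ⊆ J ∧ J.card = rankFn M T := by
  set S : Set ℕ := {k | ∃ J, M.Indep J ∧ J ⊆ T ∧ J0 ⊆ J ∧ J.card = k} with hS
  have hne : S.Nonempty := ⟨J0.card, J0, hJ0, hsub, Finset.Subset.refl _, rfl⟩
  have hbdd : BddAbove S := by
    refine ⟨T.card, fun k hk => ?_⟩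
    obtain ⟨J, _, hJT, _, rfl⟩ := hk
    exact card_le_card hJT
  obtain ⟨J, hJ, hJT, hJ0J, hcard⟩ := Nat.sSup_mem hne hbdd
  refine ⟨J, hJ, hJT, hJ0J, ?_⟩
  have hle : J.card ≤ rankFn M T := M.card_le_rank hJ hJT
  rcases Nat.lt_or_ge J.card (rankFn M T) with hlt | hge
  · exfalso
    obtain ⟨J', hJ', hJ'T, hcard'⟩ := M.exists_max_indep T
    rw [← hcard'] at hlt
    obtain ⟨e, heJ', heJ, hind⟩ := M.indep_aug hJ hJ' hlt
    have : (insert e J).card ∈ S :=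
      ⟨insert e J, hind, insert_subset (hJ'T heJ') hJT,
        hJ0J.trans (subset_insert _ _), rfl⟩
    have hle2 : (insert e J).card ≤ sSup S := le_csSup hbdd this
    rw [card_insert_of_notMem heJ, hcard] at hle2
    omega
  · omega

lemma indep_iff_rank_eq_card {I : Finset α} :
    M.Indep I ↔ rankFn M I = I.card := by
  constructor
  · intro h
    exact Nat.le_antisymm (M.rank_le_card I) (M.card_le_rank h (Finset.Subset.refl _))
  · intro h
    obtain ⟨J, hJ, hsub, hcard⟩ := M.exists_max_indep I
    have : J = I := Finset.eq_of_subset_of_card_le hsub (by omega)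
    exact this ▸ hJ

lemma rank_insert_le (T : Finset α) (a : α) :
    rankFn M (insert a T) ≤ rankFn M T + 1 := by
  obtain ⟨J, hJ, hsub, hcard⟩ := M.exists_max_indep (insert a T)
  rw [← hcard]
  have h1 : M.Indep (J.erase a) := M.indep_subset hJ (erase_subset _ _)
  have h2 : J.erase a ⊆ T := by
    intro x hx
    have := hsub (mem_of_mem_erase hx)
    rcases mem_insert.mp this with h | h
    · exact absurd h (ne_of_mem_erase hx)
    · exact h
  have hr := M.card_le_rank h1 h2
  by_cases h : a ∈ J
  · rw [Finset.card_erase_of_mem h] at hr; omega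
  · rw [Finset.erase_eq_of_notMem h] at hr; omega

lemma rank_submod (A B : Finset α) :
    rankFn M (A ∪ B) + rankFn M (A ∩ B) ≤ rankFn M A + rankFn M B := by
  obtain ⟨J0, hJ0, hJ0sub, hJ0card⟩ := M.exists_max_indep (A ∩ B)
  obtain ⟨J, hJ, hJsub, hJ0J, hJcard⟩ :=
    M.exists_basis_superset hJ0 (hJ0sub.trans inter_subset_union)
  have h1 : (J ∩ A).card ≤ rankFn M A :=
    M.card_le_rank (M.indep_subset hJ (inter_subset_left)) inter_subset_right
  have h2 : (J ∩ B).card ≤ rankFn M B :=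
    M.card_le_rank (M.indep_subset hJ (inter_subset_left)) inter_subset_right
  have hcap : J0 ⊆ J ∩ (A ∩ B) := subset_inter hJ0J hJ0sub
  have h3 : rankFn M (A ∩ B) ≤ (J ∩ (A ∩ B)).card := hJ0card ▸ card_le_card hcap
  have h4 : J ∩ A ∪ J ∩ B = J := by
    rw [← Finset.inter_union_distrib_left]
    exact Finset.inter_eq_left.mpr hJsub
  have h5 : J ∩ A ∩ (J ∩ B) = J ∩ (A ∩ B) := by
    ext x; simp [Finset.mem_inter]; tauto
  have := Finset.card_union_add_card_inter (J ∩ A) (J ∩ B)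
  rw [h4, h5] at this
  omega

lemma rank_union_le (A B : Finset α) :
    rankFn M (A ∪ B) ≤ rankFn M A + rankFn M B := by
  have := M.rank_submod A B
  omega

lemma rank_absorb {C B : Finset α} {y : α}
    (h : rankFn M (insert y C) = rankFn M C) (hCB : C ⊆ B) :
    rankFn M (insert y B) = rankFn M B := by
  by_cases hy : y ∈ B
  · rw [Finset.insert_eq_self.mpr hy]
  · have hsub := M.rank_submod (insert y C) B
    have h1 : insert y C ∪ B = insert y B := by
      rw [Finset.insert_union, Finset.union_eq_right.mpr hCB]
    have h2 : insert y C ∩ B = C := by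
      ext x
      simp only [Finset.mem_inter, Finset.mem_insert]
      constructor
      · rintro ⟨h | h, hB⟩
        · exact absurd (h ▸ hB) hy
        · exact h
      · intro h; exact ⟨Or.inr h, hCB h⟩
    rw [h1, h2] at hsub
    have hmono : rankFn M B ≤ rankFn M (insert y B) :=
      M.rank_mono (subset_insert _ _)
    omega

lemma rank_absorb_union {C B S : Finset α}
    (h : ∀ y ∈ S, rankFn M (insert y C) = rankFn M C) (hCB : C ⊆ B) :
    rankFn M (B ∪ S) = rankFn M B := by
  induction S using Finset.induction_on with
  | empty => simp
  | @insert a S ha IH =>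
      rw [Finset.union_insert]
      have h2 : rankFn M (B ∪ S) = rankFn M B := IH (fun y hy => h y (mem_insert_of_mem hy))
      have h3 : rankFn M (insert a (B ∪ S)) = rankFn M (B ∪ S) := by
        refine M.rank_absorb ?_ (hCB.trans subset_union_left)
        exact h a (mem_insert_self _ _)
      rw [h3, h2]

end FinMatroid
namespace FinMatroid

variable {α : Type*} [DecidableEq α] (M : FinMatroid α)

/-- Contraction of `M` by an independent set `K`. -/
def contract (K : Finset α) (hK : M.Indep K) : FinMatroid α where
  E := M.E
  Indep I := Disjoint I K ∧ M.Indep (I ∪ K)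
  indep_empty := ⟨Finset.disjoint_left.mpr (by simp), by simpa using hK⟩
  indep_subset := by
    rintro I J ⟨hd, hind⟩ hsub
    exact ⟨Finset.disjoint_of_subset_left hsub hd,
      M.indep_subset hind (Finset.union_subset_union_left hsub)⟩
  indep_aug := by
    rintro I J ⟨hdI, hindI⟩ ⟨hdJ, hindJ⟩ hcard
    have hc : (I ∪ K).card < (J ∪ K).card := by
      rw [Finset.card_union_of_disjoint hdI, Finset.card_union_of_disjoint hdJ]
      omega
    obtain ⟨e, he, heI, hind⟩ := M.indep_aug hindI hindJ hc
    have heK : e ∉ K := fun h => heI (Finset.mem_union_right _ h)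
    have heJ : e ∈ J := by
      rcases Finset.mem_union.mp he with h | h
      · exact h
      · exact absurd h heK
    refine ⟨e, heJ, fun h => heI (Finset.mem_union_left _ h), ?_, ?_⟩
    · exact Finset.disjoint_insert_left.mpr ⟨heK, hdI⟩
    · have : insert e I ∪ K = insert e (I ∪ K) := by
        rw [Finset.insert_union]
      rw [this]; exact hind
  subset_ground := by
    rintro I ⟨hd, hind⟩
    exact (Finset.subset_union_left).trans (M.subset_ground hind)

lemma rank_contract {K : Finset α} (hK : M.Indep K) {A : Finset α}
    (hdisj : Disjoint A K) :
    rankFn (M.contract K hK) A + K.card = rankFn M (A ∪ K) := by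
  obtain ⟨J, hJ, hJA, hJcard⟩ := (M.contract K hK).exists_max_indep A
  obtain ⟨hJd, hJind⟩ := hJ
  -- ≤ :
  have hle : rankFn (M.contract K hK) A + K.card ≤ rankFn M (A ∪ K) := by
    have : (J ∪ K).card ≤ rankFn M (A ∪ K) :=
      M.card_le_rank hJind (Finset.union_subset_union_left hJA)
    rw [Finset.card_union_of_disjoint hJd] at this
    omega
  -- ≥ :
  have hKsub : K ⊆ A ∪ K := Finset.subset_union_right
  obtain ⟨L, hL, hLsub, hKL, hLcard⟩ := M.exists_basis_superset hK hKsub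
  have hJ' : (M.contract K hK).Indep (L \ K) := by
    refine ⟨Finset.sdiff_disjoint, ?_⟩
    have : L \ K ∪ K = L ∪ K := Finset.sdiff_union_self_eq_union
    rw [this, Finset.union_eq_left.mpr hKL]
    exact hL
  have hsubA : L \ K ⊆ A := by
    intro x hx
    obtain ⟨hxL, hxK⟩ := Finset.mem_sdiff.mp hx
    rcases Finset.mem_union.mp (hLsub hxL) with h | h
    · exact h
    · exact absurd h hxK
  have hge : (L \ K).card ≤ rankFn (M.contract K hK) A :=
    (M.contract K hK).card_le_rank hJ' hsubA
  have hcardL : (L \ K).card + K.card = L.card := by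
    rw [Finset.card_sdiff_of_subset hKL]
    have := Finset.card_le_card hKL
    omega
  omega

/-- Truncation of `M` to rank at most `m`. -/
def truncate (m : ℕ) : FinMatroid α where
  E := M.E
  Indep I := M.Indep I ∧ I.card ≤ m
  indep_empty := ⟨M.indep_empty, by simp⟩
  indep_subset := by
    rintro I J ⟨hind, hcard⟩ hsub
    exact ⟨M.indep_subset hind hsub, (Finset.card_le_card hsub).trans hcard⟩
  indep_aug := by
    rintro I J ⟨hindI, hcardI⟩ ⟨hindJ, hcardJ⟩ hcard
    obtain ⟨e, he, heI, hind⟩ := M.indep_aug hindI hindJ hcard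
    refine ⟨e, he, heI, hind, ?_⟩
    rw [Finset.card_insert_of_notMem heI]
    omega
  subset_ground := fun I h => M.subset_ground h.1

end FinMatroid
namespace FinMatroid

variable {α : Type*} [DecidableEq α]

lemma rank_singleton_le (M : FinMatroid α) (t : α) : rankFn M {t} ≤ 1 := by
  simpa using M.rank_le_card {t}

lemma indep_singleton_iff (M : FinMatroid α) (t : α) :
    M.Indep {t} ↔ rankFn M {t} = 1 := by
  rw [M.indep_iff_rank_eq_card, Finset.card_singleton]

lemma rank_singleton_eq_zero (M : FinMatroid α) {t : α} (h : ¬ M.Indep {t}) :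
    rankFn M {t} = 0 := by
  have h1 := M.rank_singleton_le t
  rcases Nat.lt_or_ge (rankFn M {t}) 1 with h2 | h2
  · omega
  · exact absurd ((M.indep_singleton_iff t).mpr (by omega)) h

lemma rank_erase_lower (M : FinMatroid α) {I : Finset α} {t : α} (ht : t ∈ I) :
    rankFn M I ≤ rankFn M (I.erase t) + 1 := by
  have := M.rank_insert_le (I.erase t) t
  rwa [Finset.insert_erase ht] at this

/-- Edmonds' partition criterion for two matroids. -/
theorem partition_crit_aux :
    ∀ (k : ℕ) (N1 N2 : FinMatroid α) (I : Finset α), I.card ≤ k →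
      (∀ A ⊆ I, A.card ≤ rankFn N1 A + rankFn N2 A) →
      ∃ I1 I2, N1.Indep I1 ∧ N2.Indep I2 ∧ I = I1 ∪ I2 := by
  intro k
  induction k with
  | zero =>
      intro N1 N2 I hcard _
      have : I = ∅ := Finset.card_eq_zero.mp (Nat.le_zero.mp hcard)
      exact ⟨∅, ∅, N1.indep_empty, N2.indep_empty, by simp [this]⟩
  | succ k IH =>
      intro N1 N2 I hcard H
      rcases Finset.eq_empty_or_nonempty I with hI | hI
      · exact ⟨∅, ∅, N1.indep_empty, N2.indep_empty, by simp [hI]⟩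
      -- the single-element contraction step
      have step : ∀ (P Q : FinMatroid α) (t : α), t ∈ I →
          (∀ A ⊆ I, A.card ≤ rankFn P A + rankFn Q A) →
          (∀ T, T ⊆ I → T.Nonempty → T ≠ I →
            (T.card : ℤ) < rankFn P T + rankFn Q T) →
          (hPt : P.Indep {t}) →
          (rankFn Q (I.erase t) = rankFn Q I ∨ I.card < rankFn P I + rankFn Q I) →
          ∃ I1 I2, P.Indep I1 ∧ Q.Indep I2 ∧ I = I1 ∪ I2 := by
        intro P Q t htI HP hstrict hPt hgood
        set C := P.contract {t} hPt with hC
        have hcardE : (I.erase t).card ≤ k := by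
          have := Finset.card_erase_of_mem htI
          omega
        have HC : ∀ A ⊆ I.erase t, A.card ≤ rankFn C A + rankFn Q A := by
          intro A hA
          rcases Finset.eq_empty_or_nonempty A with rfl | hAne
          · simp
          have hdisjA : Disjoint A {t} := by
            simp only [Finset.disjoint_singleton_right]
            intro h
            exact (Finset.notMem_erase t I) (hA h)
          have hrc : rankFn C A + 1 = rankFn P (A ∪ {t}) := by
            have := P.rank_contract hPt hdisjA
            simpa using this
          have hAt : A ∪ {t} = insert t A := by
            ext x; simp [Finset.mem_union, Finset.mem_insert, or_comm]
          have htA : t ∉ A := by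
            intro h; exact (Finset.notMem_erase t I) (hA h)
          have hsubI : insert t A ⊆ I :=
            Finset.insert_subset htI (hA.trans (Finset.erase_subset _ _))
          have hcardins : (insert t A).card = A.card + 1 :=
            Finset.card_insert_of_notMem htA
          by_cases hfull : insert t A = I
          · -- A = I.erase t
            rcases hgood with hg | hg
            · -- rankFn Q (I.erase t) = rankFn Q I
              have hAeq : A = I.erase t := by
                apply Finset.Subset.antisymm hA
                intro x hx
                have hxI : x ∈ I := Finset.mem_of_mem_erase hx
                have : x ∈ insert t A := hfull ▸ hxI
                rcases Finset.mem_insert.mp this with h | h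
                · exact absurd (h ▸ hx) (Finset.notMem_erase t I)
                · exact h
              have hHI := HP I (Finset.Subset.refl I)
              have hrQ : rankFn Q A = rankFn Q I := hAeq ▸ hg
              have : rankFn P I = rankFn C A + 1 := by rw [← hfull, ← hAt, ← hrc]
              have hcardI : I.card = A.card + 1 := by rw [← hfull, hcardins]
              omega
            · -- strict at I
              have hrQ2 : rankFn Q I ≤ rankFn Q A + 1 := by
                have := Q.rank_insert_le A t
                rwa [hfull] at this
              have : rankFn P I = rankFn C A + 1 := by rw [← hfull, ← hAt, ← hrc]
              have hcardI : I.card = A.card + 1 := by rw [← hfull, hcardins]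
              omega
          · -- proper subset: strict inequality
            have hstr := hstrict (insert t A) hsubI ⟨t, Finset.mem_insert_self _ _⟩ hfull
            have hrQ2 : rankFn Q (insert t A) ≤ rankFn Q A + 1 := Q.rank_insert_le A t
            have : rankFn P (insert t A) = rankFn C A + 1 := by rw [← hAt, ← hrc]
            omega
        obtain ⟨K1, K2, hK1, hK2, hunion⟩ := IH C Q (I.erase t) hcardE HC
        refine ⟨insert t K1, K2, ?_, hK2, ?_⟩
        · obtain ⟨hd, hind⟩ := hK1
          have : insert t K1 = K1 ∪ {t} := by
            ext x; simp [Finset.mem_union, Finset.mem_insert, or_comm]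
          rw [this]
          exact hind
        · have : I = insert t (I.erase t) := (Finset.insert_erase htI).symm
          rw [this, hunion, Finset.insert_union]
      -- find a good element and orientation
      by_cases hproper : ∃ T, T ⊆ I ∧ T.Nonempty ∧ T ≠ I ∧
          T.card = rankFn N1 T + rankFn N2 T
      · -- Case 1 : proper nonempty tight set
        obtain ⟨T, hTI, hTne, hTneq, hTtight⟩ := hproper
        have hTcard : T.card < I.card := by
          have h1 : T.card ≤ I.card := Finset.card_le_card hTI
          rcases Nat.lt_or_ge T.card I.card with h | h
          · exact h
          · exact absurd (Finset.eq_of_subset_of_card_le hTI (by omega)) hTneq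
        obtain ⟨T1, T2, hT1, hT2, hTeq⟩ := IH N1 N2 T (by omega)
          (fun A hA => H A (hA.trans hTI))
        set T2' := T2 \ T1 with hT2'
        have hT2'ind : N2.Indep T2' := N2.indep_subset hT2 (Finset.sdiff_subset)
        have hTeq' : T = T1 ∪ T2' := by
          rw [hTeq, hT2']
          ext x; simp only [Finset.mem_union, Finset.mem_sdiff]; tauto
        have hdisjT : Disjoint T1 T2' := Finset.disjoint_sdiff
        have hcards : T1.card + T2'.card = T.card := by
          rw [hTeq', Finset.card_union_of_disjoint hdisjT]
        have hT1T : T1 ⊆ T := hTeq' ▸ Finset.subset_union_left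
        have hT2T : T2' ⊆ T := hTeq' ▸ Finset.subset_union_right
        have hr1 : T1.card ≤ rankFn N1 T := N1.card_le_rank hT1 hT1T
        have hr2 : T2'.card ≤ rankFn N2 T := N2.card_le_rank hT2'ind hT2T
        have hT1card : T1.card = rankFn N1 T := by omega
        have hT2card : T2'.card = rankFn N2 T := by omega
        -- absorption
        have habs : ∀ (N : FinMatroid α) (Tk : Finset α), N.Indep Tk → Tk ⊆ T →
            Tk.card = rankFn N T → ∀ A : Finset α, rankFn N (A ∪ Tk ∪ (T \ Tk)) = rankFn N (A ∪ Tk) := by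
          intro N Tk hind hsub hcard' A
          refine N.rank_absorb_union ?_ Finset.subset_union_right
          intro y hy
          have hyT : y ∈ T := Finset.mem_sdiff.mp hy |>.1
          have h1 : rankFn N (insert y Tk) ≤ rankFn N T :=
            N.rank_mono (Finset.insert_subset hyT hsub)
          have h2 : rankFn N Tk = Tk.card := (N.indep_iff_rank_eq_card).mp hind
          have h3 : rankFn N Tk ≤ rankFn N (insert y Tk) :=
            N.rank_mono (Finset.subset_insert _ _)
          omega
        have hunionT : ∀ (Tk : Finset α), Tk ⊆ T → ∀ A : Finset α,
            A ∪ Tk ∪ (T \ Tk) = A ∪ T := by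
          intro Tk hsub A
          ext x
          simp only [Finset.mem_union, Finset.mem_sdiff]
          constructor
          · rintro ((h | h) | ⟨h, _⟩)
            · exact Or.inl h
            · exact Or.inr (hsub h)
            · exact Or.inr h
          · rintro (h | h)
            · exact Or.inl (Or.inl h)
            · by_cases hx : x ∈ Tk
              · exact Or.inl (Or.inr hx)
              · exact Or.inr ⟨h, hx⟩
        set C1 := N1.contract T1 hT1 with hC1
        set C2 := N2.contract T2' hT2'ind with hC2
        have HC : ∀ A ⊆ I \ T, A.card ≤ rankFn C1 A + rankFn C2 A := by
          intro A hA
          have hdisjT1 : Disjoint A T1 := by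
            refine Finset.disjoint_left.mpr (fun x hx hxT => ?_)
            exact (Finset.mem_sdiff.mp (hA hx)).2 (hT1T hxT)
          have hdisjT2 : Disjoint A T2' := by
            refine Finset.disjoint_left.mpr (fun x hx hxT => ?_)
            exact (Finset.mem_sdiff.mp (hA hx)).2 (hT2T hxT)
          have hrc1 : rankFn C1 A + T1.card = rankFn N1 (A ∪ T1) :=
            N1.rank_contract hT1 hdisjT1
          have hrc2 : rankFn C2 A + T2'.card = rankFn N2 (A ∪ T2') :=
            N2.rank_contract hT2'ind hdisjT2
          have he1 : rankFn N1 (A ∪ T1) = rankFn N1 (A ∪ T) := by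
            rw [← hunionT T1 hT1T A]; exact (habs N1 T1 hT1 hT1T hT1card A).symm
          have he2 : rankFn N2 (A ∪ T2') = rankFn N2 (A ∪ T) := by
            rw [← hunionT T2' hT2T A]; exact (habs N2 T2' hT2'ind hT2T hT2card A).symm
          have hdisjAT : Disjoint A T := by
            refine Finset.disjoint_left.mpr (fun x hx hxT => ?_)
            exact (Finset.mem_sdiff.mp (hA hx)).2 hxT
          have hsubI : A ∪ T ⊆ I :=
            Finset.union_subset ((hA.trans (Finset.sdiff_subset))) hTI
          have hH := H (A ∪ T) hsubI
          have hcardAT : (A ∪ T).card = A.card + T.card :=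
            Finset.card_union_of_disjoint hdisjAT
          omega
        have hcardsd : (I \ T).card ≤ k := by
          have h1 : (I \ T).card = I.card - T.card := Finset.card_sdiff_of_subset hTI
          have h2 : T.card ≥ 1 := Finset.card_pos.mpr hTne
          omega
        obtain ⟨K1, K2, hK1, hK2, hKeq⟩ := IH C1 C2 (I \ T) hcardsd HC
        obtain ⟨hK1d, hK1i⟩ := hK1
        obtain ⟨hK2d, hK2i⟩ := hK2
        refine ⟨K1 ∪ T1, K2 ∪ T2', hK1i, hK2i, ?_⟩
        have : I = (I \ T) ∪ T := by
          rw [Finset.sdiff_union_self_eq_union, Finset.union_eq_left.mpr hTI]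
        rw [this, hKeq, hTeq']
        ext x
        simp only [Finset.mem_union]
        tauto
      · -- Case 2 : no proper nonempty tight set
        push_neg at hproper
        have hstrict : ∀ T, T ⊆ I → T.Nonempty → T ≠ I →
            (T.card : ℤ) < rankFn N1 T + rankFn N2 T := by
          intro T h1 h2 h3
          have h4 := H T h1
          have h5 := hproper T h1 h2 h3
          omega
        have hstrict' : ∀ T, T ⊆ I → T.Nonempty → T ≠ I →
            (T.card : ℤ) < rankFn N2 T + rankFn N1 T := by
          intro T h1 h2 h3
          have := hstrict T h1 h2 h3
          omega
        have Hsym : ∀ A ⊆ I, A.card ≤ rankFn N2 A + rankFn N1 A := by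
          intro A hA
          have := H A hA
          omega
        obtain ⟨t, htI⟩ := hI
        have hHt := H {t} (Finset.singleton_subset_iff.mpr htI)
        rw [Finset.card_singleton] at hHt
        have hside : N1.Indep {t} ∨ N2.Indep {t} := by
          have h1 := N1.rank_singleton_le t
          have h2 := N2.rank_singleton_le t
          rcases Nat.lt_or_ge (rankFn N1 {t}) 1 with h | h
          · exact Or.inr ((N2.indep_singleton_iff t).mpr (by omega))
          · exact Or.inl ((N1.indep_singleton_iff t).mpr (by omega))
        by_cases htight : I.card = rankFn N1 I + rankFn N2 I
        · -- tight case
          have herase_sub : I.erase t ⊆ I := Finset.erase_subset _ _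
          rcases hside with h1 | h2
          · by_cases hg2 : rankFn N2 (I.erase t) = rankFn N2 I
            · exact step N1 N2 t htI H hstrict h1 (Or.inl hg2)
            · have hco2 : rankFn N2 (I.erase t) + 1 ≤ rankFn N2 I := by
                have := N2.rank_mono herase_sub
                omega
              by_cases h2 : N2.Indep {t}
              · by_cases hg1 : rankFn N1 (I.erase t) = rankFn N1 I
                · obtain ⟨I2, I1, hI2, hI1, he⟩ :=
                    step N2 N1 t htI Hsym hstrict' h2 (Or.inl hg1)
                  exact ⟨I1, I2, hI1, hI2, by rw [he, Finset.union_comm]⟩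
                · have hco1 : rankFn N1 (I.erase t) + 1 ≤ rankFn N1 I := by
                    have := N1.rank_mono herase_sub
                    omega
                  exfalso
                  rcases Finset.eq_empty_or_nonempty (I.erase t) with he | hne
                  · -- I = {t}
                    have hIt : I = {t} := by
                      have := Finset.insert_erase htI
                      rw [he] at this
                      simpa using this.symm
                    have hr1 : rankFn N1 {t} = 1 := (N1.indep_singleton_iff t).mp h1
                    have hr2 : rankFn N2 {t} = 1 := (N2.indep_singleton_iff t).mp h2
                    rw [hIt] at htight
                    rw [hr1, hr2, Finset.card_singleton] at htight
                    omega
                  · have hne2 : I.erase t ≠ I := by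
                      intro h
                      exact (Finset.notMem_erase t I) (by rw [h]; exact htI)
                    have hs := hstrict (I.erase t) herase_sub hne hne2
                    have hce : (I.erase t).card = I.card - 1 :=
                      Finset.card_erase_of_mem htI
                    have hIpos : 1 ≤ I.card := Finset.card_pos.mpr ⟨t, htI⟩
                    omega
              · -- {t} dep in N2 : loop, but coloop: contradiction
                exfalso
                have hr0 : rankFn N2 {t} = 0 := N2.rank_singleton_eq_zero h2
                have hsub : rankFn N2 I ≤ rankFn N2 (I.erase t) + rankFn N2 {t} := by
                  have := N2.rank_union_le (I.erase t) {t}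
                  have heq : I.erase t ∪ {t} = I := by
                    ext x
                    simp only [Finset.mem_union, Finset.mem_erase, Finset.mem_singleton]
                    constructor
                    · rintro (⟨_, h⟩ | h)
                      · exact h
                      · exact h ▸ htI
                    · intro h
                      by_cases hx : x = t
                      · exact Or.inr hx
                      · exact Or.inl ⟨hx, h⟩
                  rwa [heq] at this
                omega
          · -- N2.Indep {t} ; symmetric
            by_cases hg1 : rankFn N1 (I.erase t) = rankFn N1 I
            · obtain ⟨I2, I1, hI2, hI1, he⟩ :=
                step N2 N1 t htI Hsym hstrict' h2 (Or.inl hg1)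
              exact ⟨I1, I2, hI1, hI2, by rw [he, Finset.union_comm]⟩
            · have hco1 : rankFn N1 (I.erase t) + 1 ≤ rankFn N1 I := by
                have := N1.rank_mono (Finset.erase_subset t I)
                omega
              by_cases h1 : N1.Indep {t}
              · by_cases hg2 : rankFn N2 (I.erase t) = rankFn N2 I
                · exact step N1 N2 t htI H hstrict h1 (Or.inl hg2)
                · have hco2 : rankFn N2 (I.erase t) + 1 ≤ rankFn N2 I := by
                    have := N2.rank_mono (Finset.erase_subset t I)
                    omega
                  exfalso
                  rcases Finset.eq_empty_or_nonempty (I.erase t) with he | hne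
                  · have hIt : I = {t} := by
                      have := Finset.insert_erase htI
                      rw [he] at this
                      simpa using this.symm
                    have hr1 : rankFn N1 {t} = 1 := (N1.indep_singleton_iff t).mp h1
                    have hr2 : rankFn N2 {t} = 1 := (N2.indep_singleton_iff t).mp h2
                    rw [hIt] at htight
                    rw [hr1, hr2, Finset.card_singleton] at htight
                    omega
                  · have hne2 : I.erase t ≠ I := by
                      intro h
                      exact (Finset.notMem_erase t I) (by rw [h]; exact htI)
                    have hs := hstrict (I.erase t) (Finset.erase_subset t I) hne hne2
                    have hce : (I.erase t).card = I.card - 1 :=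
                      Finset.card_erase_of_mem htI
                    have hIpos : 1 ≤ I.card := Finset.card_pos.mpr ⟨t, htI⟩
                    omega
              · exfalso
                have hr0 : rankFn N1 {t} = 0 := N1.rank_singleton_eq_zero h1
                have hsub : rankFn N1 I ≤ rankFn N1 (I.erase t) + rankFn N1 {t} := by
                  have := N1.rank_union_le (I.erase t) {t}
                  have heq : I.erase t ∪ {t} = I := by
                    ext x
                    simp only [Finset.mem_union, Finset.mem_erase, Finset.mem_singleton]
                    constructor
                    · rintro (⟨_, h⟩ | h)
                      · exact h
                      · exact h ▸ htI
                    · intro h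
                      by_cases hx : x = t
                      · exact Or.inr hx
                      · exact Or.inl ⟨hx, h⟩
                  rwa [heq] at this
                omega
        · -- not tight : any t works with its side
          have hnt : I.card < rankFn N1 I + rankFn N2 I := by
            have := H I (Finset.Subset.refl I)
            omega
          rcases hside with h1 | h2
          · exact step N1 N2 t htI H hstrict h1 (Or.inr hnt)
          · obtain ⟨I2, I1, hI2, hI1, he⟩ :=
              step N2 N1 t htI Hsym hstrict' h2 (Or.inr (by omega))
            exact ⟨I1, I2, hI1, hI2, by rw [he, Finset.union_comm]⟩

theorem partition_crit (N1 N2 : FinMatroid α) (I : Finset α)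
    (H : ∀ A ⊆ I, A.card ≤ rankFn N1 A + rankFn N2 A) :
    ∃ I1 I2, N1.Indep I1 ∧ N2.Indep I2 ∧ I = I1 ∪ I2 :=
  partition_crit_aux I.card N1 N2 I (le_refl _) H

end FinMatroid
section MnatFamilies

open Finset

variable {n : ℕ}

/-- interval/peeling property of M♮ families. -/
lemma mconvex_peel {F : Set (Finset (Fin n))} (hF : MConvexFamily F) :
    ∀ (k : ℕ) (B X A : Finset (Fin n)), (B \ X).card ≤ k → B ∈ F → A ∈ F →
      A ⊆ X → X ⊆ B → X ∈ F := by
  intro k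
  induction k with
  | zero =>
      intro B X A hk hB _ _ hXB
      have : B \ X = ∅ := Finset.card_eq_zero.mp (Nat.le_zero.mp hk)
      have hBX : B ⊆ X := by
        intro x hx
        by_contra hxX
        exact (Finset.notMem_empty x) (this ▸ Finset.mem_sdiff.mpr ⟨hx, hxX⟩)
      rwa [← Finset.Subset.antisymm hXB hBX] at hB
  | succ k IH =>
      intro B X A hk hB hA hAX hXB
      rcases Finset.eq_empty_or_nonempty (B \ X) with hempty | ⟨i, hi⟩
      · have hBX : B ⊆ X := by
          intro x hx
          by_contra hxX
          exact (Finset.notMem_empty x) (hempty ▸ Finset.mem_sdiff.mpr ⟨hx, hxX⟩)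
        rwa [← Finset.Subset.antisymm hXB hBX] at hB
      · obtain ⟨hiB, hiX⟩ := Finset.mem_sdiff.mp hi
        have hiA : i ∉ A := fun h => hiX (hAX h)
        rcases hF B hB A hA i (Finset.mem_sdiff.mpr ⟨hiB, hiA⟩) with ⟨h1, _⟩ | ⟨j, hj, _, _⟩
        · refine IH (B.erase i) X A ?_ h1 hA hAX ?_
          · have : B.erase i \ X = (B \ X).erase i := by
              ext x; simp only [Finset.mem_sdiff, Finset.mem_erase]; tauto
            rw [this, Finset.card_erase_of_mem hi]
            omega
          · intro x hx
            exact Finset.mem_erase.mpr ⟨fun h => hiX (h ▸ hx), hXB hx⟩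
        · obtain ⟨hjA, hjB⟩ := Finset.mem_sdiff.mp hj
          exact absurd (hXB (hAX hjA)) hjB

/-- Phase 1: push a member containing `I` into `I ∪ Y`. -/
lemma mconvex_toward {F : Set (Finset (Fin n))} (hF : MConvexFamily F) :
    ∀ (k : ℕ) (X Y I : Finset (Fin n)), (X \ (I ∪ Y)).card ≤ k → X ∈ F → Y ∈ F →
      I ⊆ X → ∃ X' ∈ F, I ⊆ X' ∧ X' ⊆ I ∪ Y := by
  intro k
  induction k with
  | zero =>
      intro X Y I hk hX _ hIX
      refine ⟨X, hX, hIX, ?_⟩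
      intro x hx
      by_contra hxn
      have : x ∈ X \ (I ∪ Y) := Finset.mem_sdiff.mpr ⟨hx, hxn⟩
      have := Finset.card_pos.mpr ⟨x, this⟩
      omega
  | succ k IH =>
      intro X Y I hk hX hY hIX
      rcases Finset.eq_empty_or_nonempty (X \ (I ∪ Y)) with hempty | ⟨i, hi⟩
      · refine ⟨X, hX, hIX, ?_⟩
        intro x hx
        by_contra hxn
        exact (Finset.notMem_empty x) (hempty ▸ Finset.mem_sdiff.mpr ⟨hx, hxn⟩)
      · obtain ⟨hiX, hin⟩ := Finset.mem_sdiff.mp hi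
        have hiI : i ∉ I := fun h => hin (Finset.mem_union_left _ h)
        have hiY : i ∉ Y := fun h => hin (Finset.mem_union_right _ h)
        rcases hF X hX Y hY i (Finset.mem_sdiff.mpr ⟨hiX, hiY⟩) with ⟨h1, _⟩ | ⟨j, hj, h1, _⟩
        · refine IH (X.erase i) Y I ?_ h1 hY ?_
          · have : X.erase i \ (I ∪ Y) = (X \ (I ∪ Y)).erase i := by
              ext x; simp only [Finset.mem_sdiff, Finset.mem_erase]; tauto
            rw [this, Finset.card_erase_of_mem hi]
            omega
          · intro x hx
            exact Finset.mem_erase.mpr ⟨fun h => hiI (h ▸ hx), hIX hx⟩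
        · obtain ⟨hjY, hjX⟩ := Finset.mem_sdiff.mp hj
          refine IH (insert j (X.erase i)) Y I ?_ h1 hY ?_
          · have : insert j (X.erase i) \ (I ∪ Y) = (X \ (I ∪ Y)).erase i := by
              ext x
              simp only [Finset.mem_sdiff, Finset.mem_erase, Finset.mem_insert,
                Finset.mem_union]
              constructor
              · rintro ⟨h | ⟨hxi, hxX⟩, hxn⟩
                · exact absurd (Or.inr (h ▸ hjY)) hxn
                · exact ⟨hxi, hxX, hxn⟩
              · rintro ⟨hxi, hxX, hxn⟩
                exact ⟨Or.inr ⟨hxi, hxX⟩, hxn⟩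
            rw [this, Finset.card_erase_of_mem hi]
            omega
          · intro x hx
            exact Finset.mem_insert_of_mem
              (Finset.mem_erase.mpr ⟨fun h => hiI (h ▸ hx), hIX hx⟩)

/-- Augmentation for down-closures of M♮ families. -/
lemma mconvex_aug {F : Set (Finset (Fin n))} (hF : MConvexFamily F) :
    ∀ (k : ℕ) (I J X Y : Finset (Fin n)), (J \ I).card ≤ k → X ∈ F → Y ∈ F →
      I ⊆ X → J ⊆ Y → I.card < J.card →
      ∃ e ∈ J, e ∉ I ∧ ∃ Z ∈ F, insert e I ⊆ Z := by
  intro k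
  induction k with
  | zero =>
      intro I J X Y hk _ _ _ _ hcard
      exfalso
      have h1 : J \ I = ∅ := Finset.card_eq_zero.mp (Nat.le_zero.mp hk)
      have h2 : J ⊆ I := by
        intro x hx
        by_contra hxn
        exact (Finset.notMem_empty x) (h1 ▸ Finset.mem_sdiff.mpr ⟨hx, hxn⟩)
      have := Finset.card_le_card h2
      omega
  | succ k IH =>
      intro I J X Y hk hX hY hIX hJY hcard
      obtain ⟨X', hX', hIX', hX'sub⟩ :=
        mconvex_toward hF ((X \ (I ∪ Y)).card) X Y I (le_refl _) hX hY hIX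
      rcases Set.eq_empty_or_nonempty {x | x ∈ X' ∧ x ∈ J ∧ x ∉ I} with hcap | ⟨e, he⟩
      swap
      · obtain ⟨heX, heJ, heI⟩ := he
        exact ⟨e, heJ, heI, X', hX', Finset.insert_subset heX hIX'⟩
      · -- no element of J \ I lies in X'
        have hnocap : ∀ x, x ∈ X' → x ∈ J → x ∈ I := by
          intro x h1 h2
          by_contra h3
          exact (Set.eq_empty_iff_forall_notMem.mp hcap x) ⟨h1, h2, h3⟩
        have hJI : (J \ I).Nonempty := by
          rcases Finset.eq_empty_or_nonempty (J \ I) with h | h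
          · exfalso
            have h2 : J ⊆ I := by
              intro x hx
              by_contra hxn
              exact (Finset.notMem_empty x) (h ▸ Finset.mem_sdiff.mpr ⟨hx, hxn⟩)
            have := Finset.card_le_card h2
            omega
          · exact h
        obtain ⟨i, hi⟩ := hJI
        obtain ⟨hiJ, hiI⟩ := Finset.mem_sdiff.mp hi
        have hiX' : i ∉ X' := fun h => hiI (hnocap i h hiJ)
        have hiY : i ∈ Y := hJY hiJ
        rcases hF Y hY X' hX' i (Finset.mem_sdiff.mpr ⟨hiY, hiX'⟩) with ⟨_, h2⟩ | ⟨j, hj, h1, _⟩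
        · exact ⟨i, hiJ, hiI, insert i X', h2,
            Finset.insert_subset_insert _ hIX' |>.trans (Finset.Subset.refl _)⟩
        · obtain ⟨hjX', hjY⟩ := Finset.mem_sdiff.mp hj
          have hjI : j ∈ I := by
            rcases Finset.mem_union.mp (hX'sub hjX') with h | h
            · exact h
            · exact absurd h hjY
          have hjJ : j ∉ J := fun h => hjY (hJY h)
          set J' := insert j (J.erase i) with hJ'
          set Y' := insert j (Y.erase i) with hY'
          have hJ'sub : J' ⊆ Y' := by
            intro x hx
            rcases Finset.mem_insert.mp hx with h | h
            · exact h ▸ Finset.mem_insert_self _ _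
            · obtain ⟨hxi, hxJ⟩ := Finset.mem_erase.mp h
              exact Finset.mem_insert_of_mem (Finset.mem_erase.mpr ⟨hxi, hJY hxJ⟩)
          have hJ'card : J'.card = J.card := by
            rw [hJ', Finset.card_insert_of_notMem
              (fun h => hjJ (Finset.mem_of_mem_erase h)), Finset.card_erase_of_mem hiJ]
            have := Finset.card_pos.mpr ⟨i, hiJ⟩
            omega
          have hmeas : (J' \ I).card ≤ k := by
            have heq : J' \ I = (J \ I).erase i := by
              ext x
              simp only [Finset.mem_sdiff, Finset.mem_erase, Finset.mem_insert, hJ']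
              constructor
              · rintro ⟨h | ⟨hxi, hxJ⟩, hxI⟩
                · exact absurd (h ▸ hjI) hxI
                · exact ⟨hxi, hxJ, hxI⟩
              · rintro ⟨hxi, hxJ, hxI⟩
                exact ⟨Or.inr ⟨hxi, hxJ⟩, hxI⟩
            rw [heq, Finset.card_erase_of_mem hi]
            omega
          obtain ⟨e, heJ', heI, Z, hZ, hins⟩ :=
            IH I J' X' Y' hmeas hX' h1 hIX' hJ'sub (by omega)
          have heJ : e ∈ J := by
            rcases Finset.mem_insert.mp heJ' with h | h
            · exact absurd (h ▸ hjI) heI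
            · exact Finset.mem_of_mem_erase h
          exact ⟨e, heJ, heI, Z, hZ, hins⟩


/-- The matroid of subsets of members of an M♮ family. -/
noncomputable def downMatroid {F : Set (Finset (Fin n))} (hne : F.Nonempty)
    (hF : MConvexFamily F) : FinMatroid (Fin n) where
  E := Finset.univ
  Indep I := ∃ X ∈ F, I ⊆ X
  indep_empty := ⟨hne.choose, hne.choose_spec, Finset.empty_subset _⟩
  indep_subset := by
    rintro I J ⟨X, hX, hJX⟩ hIJ
    exact ⟨X, hX, hIJ.trans hJX⟩
  indep_aug := by
    rintro I J ⟨X, hX, hIX⟩ ⟨Y, hY, hJY⟩ hcard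
    obtain ⟨e, heJ, heI, Z, hZ, hins⟩ :=
      mconvex_aug hF ((J \ I).card) I J X Y (le_refl _) hX hY hIX hJY hcard
    exact ⟨e, heJ, heI, Z, hZ, hins⟩
  subset_ground := fun I _ => Finset.subset_univ I

lemma downMatroid_indep {F : Set (Finset (Fin n))} (hne : F.Nonempty)
    (hF : MConvexFamily F) (I : Finset (Fin n)) :
    (downMatroid hne hF).Indep I ↔ ∃ X ∈ F, I ⊆ X := Iff.rfl

lemma card_inter_le_rank_down {F : Set (Finset (Fin n))} (hne : F.Nonempty)
    (hF : MConvexFamily F) {X : Finset (Fin n)} (hX : X ∈ F) (T : Finset (Fin n)) :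
    (X ∩ T).card ≤ rankFn (downMatroid hne hF) T :=
  (downMatroid hne hF).card_le_rank ⟨X, hX, Finset.inter_subset_left⟩
    Finset.inter_subset_right

lemma exists_rank_down {F : Set (Finset (Fin n))} (hne : F.Nonempty)
    (hF : MConvexFamily F) (T : Finset (Fin n)) :
    ∃ X ∈ F, rankFn (downMatroid hne hF) T = (X ∩ T).card := by
  obtain ⟨J, hJ, hJT, hJcard⟩ := (downMatroid hne hF).exists_max_indep T
  obtain ⟨X, hX, hJX⟩ := hJ
  refine ⟨X, hX, ?_⟩
  have h1 : J ⊆ X ∩ T := Finset.subset_inter hJX hJT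
  have h2 : (X ∩ T).card ≤ rankFn (downMatroid hne hF) T :=
    card_inter_le_rank_down hne hF hX T
  have := Finset.card_le_card h1
  omega

/-- complements of an M♮ family form an M♮ family. -/
lemma mconvex_compl {F : Set (Finset (Fin n))} (hF : MConvexFamily F) :
    MConvexFamily ((fun X => Finset.univ \ X) '' F) := by
  rintro _ ⟨X, hX, rfl⟩ _ ⟨Y, hY, rfl⟩ i hi
  obtain ⟨hi1, hi2⟩ := Finset.mem_sdiff.mp hi
  have hiX : i ∉ X := (Finset.mem_sdiff.mp hi1).2
  have hiY : i ∈ Y := by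
    by_contra h
    exact hi2 (Finset.mem_sdiff.mpr ⟨Finset.mem_univ _, h⟩)
  rcases hF Y hY X hX i (Finset.mem_sdiff.mpr ⟨hiY, hiX⟩) with ⟨h1, h2⟩ | ⟨j, hj, h1, h2⟩
  · left
    constructor
    · refine ⟨insert i X, h2, ?_⟩
      ext x
      simp only [Finset.mem_sdiff, Finset.mem_erase, Finset.mem_insert, Finset.mem_univ,
        true_and]
      tauto
    · refine ⟨Y.erase i, h1, ?_⟩
      ext x
      simp only [Finset.mem_sdiff, Finset.mem_erase, Finset.mem_insert, Finset.mem_univ,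
        true_and]
      by_cases hx : x = i
      · subst hx; tauto
      · tauto
  · right
    obtain ⟨hjX, hjY⟩ := Finset.mem_sdiff.mp hj
    refine ⟨j, ?_, ?_, ?_⟩
    · refine Finset.mem_sdiff.mpr ⟨?_, ?_⟩
      · exact Finset.mem_sdiff.mpr ⟨Finset.mem_univ _, hjY⟩
      · intro h
        exact (Finset.mem_sdiff.mp h).2 hjX
    · refine ⟨(insert i X).erase j, h2, ?_⟩
      ext x
      simp only [Finset.mem_sdiff, Finset.mem_erase, Finset.mem_insert, Finset.mem_univ,
        true_and]
      by_cases hx : x = j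
      · subst hx; simp only [not_true_eq_false, false_and, true_and]; tauto
      · tauto
    · refine ⟨insert j (Y.erase i), h1, ?_⟩
      ext x
      simp only [Finset.mem_sdiff, Finset.mem_erase, Finset.mem_insert, Finset.mem_univ,
        true_and]
      by_cases hx : x = j
      · subst hx; tauto
      · by_cases hx2 : x = i
        · subst hx2; tauto
        · tauto

/-- upgrading a covering pair to a disjoint covering pair. -/
lemma cover_disjoint {F1 F2 : Set (Finset (Fin n))}
    (hF1 : MConvexFamily F1) (hF2 : MConvexFamily F2)
    {B1 B2 : Finset (Fin n)} (hB1 : B1 ∈ F1) (hB2 : B2 ∈ F2) (hd : Disjoint B1 B2) :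
    ∀ (k : ℕ) (A1 A2 : Finset (Fin n)), (A1 \ B1).card + (A2 \ B2).card ≤ k →
      A1 ∈ F1 → A2 ∈ F2 →
      ∃ C1 ∈ F1, ∃ C2 ∈ F2, Disjoint C1 C2 ∧ A1 ∪ A2 ⊆ C1 ∪ C2 := by
  intro k
  induction k with
  | zero =>
      intro A1 A2 hk hA1 hA2
      refine ⟨A1, hA1, A2, hA2, ?_, Finset.Subset.refl _⟩
      have h1 : A1 ⊆ B1 := by
        rw [← Finset.sdiff_eq_empty_iff_subset]
        exact Finset.card_eq_zero.mp (by omega)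
      have h2 : A2 ⊆ B2 := by
        rw [← Finset.sdiff_eq_empty_iff_subset]
        exact Finset.card_eq_zero.mp (by omega)
      exact Finset.disjoint_of_subset_left h1 (Finset.disjoint_of_subset_right h2 hd)
  | succ k IH =>
      intro A1 A2 hk hA1 hA2
      rcases Finset.eq_empty_or_nonempty (A1 ∩ A2) with hcap | ⟨x, hx⟩
      · refine ⟨A1, hA1, A2, hA2, ?_, Finset.Subset.refl _⟩
        rwa [Finset.disjoint_iff_inter_eq_empty]
      · obtain ⟨hx1, hx2⟩ := Finset.mem_inter.mp hx
        have hxor : x ∉ B1 ∨ x ∉ B2 := by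
          by_contra h
          push_neg at h
          exact (Finset.disjoint_left.mp hd h.1) h.2
        rcases hxor with hxB | hxB
        · -- remove x from A1, it stays covered by A2
          have hxd : x ∈ A1 \ B1 := Finset.mem_sdiff.mpr ⟨hx1, hxB⟩
          rcases hF1 A1 hA1 B1 hB1 x (Finset.mem_sdiff.mpr ⟨hx1, hxB⟩) with
            ⟨h1, _⟩ | ⟨j, hj, h1, _⟩
          · have hmeas : (A1.erase x \ B1).card + (A2 \ B2).card ≤ k := by
              have : A1.erase x \ B1 = (A1 \ B1).erase x := by
                ext y; simp only [Finset.mem_sdiff, Finset.mem_erase]; tauto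
              rw [this, Finset.card_erase_of_mem hxd]
              have := Finset.card_pos.mpr ⟨x, hxd⟩
              omega
            obtain ⟨C1, hC1, C2, hC2, hdis, hcov⟩ := IH (A1.erase x) A2 hmeas h1 hA2
            refine ⟨C1, hC1, C2, hC2, hdis, ?_⟩
            intro y hy
            rcases Finset.mem_union.mp hy with h | h
            · by_cases hyx : y = x
              · exact hcov (Finset.mem_union_right _ (hyx ▸ hx2))
              · exact hcov (Finset.mem_union_left _ (Finset.mem_erase.mpr ⟨hyx, h⟩))
            · exact hcov (Finset.mem_union_right _ h)
          · obtain ⟨hjB, hjA⟩ := Finset.mem_sdiff.mp hj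
            have hmeas : ((insert j (A1.erase x)) \ B1).card + (A2 \ B2).card ≤ k := by
              have : (insert j (A1.erase x)) \ B1 = (A1 \ B1).erase x := by
                ext y
                simp only [Finset.mem_sdiff, Finset.mem_erase, Finset.mem_insert]
                constructor
                · rintro ⟨h | ⟨hyx, hyA⟩, hyB⟩
                  · exact absurd (h ▸ hjB) hyB
                  · exact ⟨hyx, hyA, hyB⟩
                · rintro ⟨hyx, hyA, hyB⟩
                  exact ⟨Or.inr ⟨hyx, hyA⟩, hyB⟩
              rw [this, Finset.card_erase_of_mem hxd]
              have := Finset.card_pos.mpr ⟨x, hxd⟩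
              omega
            obtain ⟨C1, hC1, C2, hC2, hdis, hcov⟩ := IH (insert j (A1.erase x)) A2 hmeas h1 hA2
            refine ⟨C1, hC1, C2, hC2, hdis, ?_⟩
            intro y hy
            rcases Finset.mem_union.mp hy with h | h
            · by_cases hyx : y = x
              · exact hcov (Finset.mem_union_right _ (hyx ▸ hx2))
              · exact hcov (Finset.mem_union_left _
                  (Finset.mem_insert_of_mem (Finset.mem_erase.mpr ⟨hyx, h⟩)))
            · exact hcov (Finset.mem_union_right _ h)
        · -- symmetric : remove x from A2
          have hxd : x ∈ A2 \ B2 := Finset.mem_sdiff.mpr ⟨hx2, hxB⟩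
          rcases hF2 A2 hA2 B2 hB2 x (Finset.mem_sdiff.mpr ⟨hx2, hxB⟩) with
            ⟨h1, _⟩ | ⟨j, hj, h1, _⟩
          · have hmeas : (A1 \ B1).card + (A2.erase x \ B2).card ≤ k := by
              have : A2.erase x \ B2 = (A2 \ B2).erase x := by
                ext y; simp only [Finset.mem_sdiff, Finset.mem_erase]; tauto
              rw [this, Finset.card_erase_of_mem hxd]
              have := Finset.card_pos.mpr ⟨x, hxd⟩
              omega
            obtain ⟨C1, hC1, C2, hC2, hdis, hcov⟩ := IH A1 (A2.erase x) hmeas hA1 h1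
            refine ⟨C1, hC1, C2, hC2, hdis, ?_⟩
            intro y hy
            rcases Finset.mem_union.mp hy with h | h
            · exact hcov (Finset.mem_union_left _ h)
            · by_cases hyx : y = x
              · exact hcov (Finset.mem_union_left _ (hyx ▸ hx1))
              · exact hcov (Finset.mem_union_right _ (Finset.mem_erase.mpr ⟨hyx, h⟩))
          · obtain ⟨hjB, hjA⟩ := Finset.mem_sdiff.mp hj
            have hmeas : (A1 \ B1).card + ((insert j (A2.erase x)) \ B2).card ≤ k := by
              have : (insert j (A2.erase x)) \ B2 = (A2 \ B2).erase x := by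
                ext y
                simp only [Finset.mem_sdiff, Finset.mem_erase, Finset.mem_insert]
                constructor
                · rintro ⟨h | ⟨hyx, hyA⟩, hyB⟩
                  · exact absurd (h ▸ hjB) hyB
                  · exact ⟨hyx, hyA, hyB⟩
                · rintro ⟨hyx, hyA, hyB⟩
                  exact ⟨Or.inr ⟨hyx, hyA⟩, hyB⟩
              rw [this, Finset.card_erase_of_mem hxd]
              have := Finset.card_pos.mpr ⟨x, hxd⟩
              omega
            obtain ⟨C1, hC1, C2, hC2, hdis, hcov⟩ := IH A1 (insert j (A2.erase x)) hmeas hA1 h1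
            refine ⟨C1, hC1, C2, hC2, hdis, ?_⟩
            intro y hy
            rcases Finset.mem_union.mp hy with h | h
            · exact hcov (Finset.mem_union_left _ h)
            · by_cases hyx : y = x
              · exact hcov (Finset.mem_union_left _ (hyx ▸ hx1))
              · exact hcov (Finset.mem_union_right _
                  (Finset.mem_insert_of_mem (Finset.mem_erase.mpr ⟨hyx, h⟩)))

end MnatFamilies
section Geometry

open Finset

variable {n : ℕ}

lemma indic_mem_Icc (S : Finset (Fin n)) :
    indicVec S ∈ Set.Icc (0 : Fin n → ℝ) 1 := by
  constructor <;> intro i <;> simp only [indicVec, Pi.zero_apply, Pi.one_apply] <;>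
    split <;> norm_num

lemma convexHull_indic_subset_Icc (G : Set (Finset (Fin n))) :
    convexHull ℝ (indicVec '' G) ⊆ Set.Icc (0 : Fin n → ℝ) 1 := by
  apply convexHull_min
  · rintro _ ⟨S, _, rfl⟩
    exact indic_mem_Icc S
  · exact convex_Icc _ _

lemma linfun_isLinear (c : Fin n → ℝ) :
    IsLinearMap ℝ (fun v : Fin n → ℝ => ∑ i, c i * v i) := by
  constructor
  · intro x y
    simp [Pi.add_apply, mul_add, Finset.sum_add_distrib]
  · intro a x
    simp only [Pi.smul_apply, smul_eq_mul, Finset.mul_sum]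
    congr 1; ext i; ring

/-- every linear functional is minimized over the hull at some indicator. -/
lemma exists_indic_le {G : Set (Finset (Fin n))} (hne : G.Nonempty)
    {y : Fin n → ℝ} (hy : y ∈ convexHull ℝ (indicVec '' G)) (c : Fin n → ℝ) :
    ∃ A ∈ G, ∑ i, c i * indicVec A i ≤ ∑ i, c i * y i := by
  obtain ⟨A0, hA0, hmin⟩ := Set.exists_min_image G
    (fun A => ∑ i, c i * indicVec A i) (Set.toFinite G) hne
  refine ⟨A0, hA0, ?_⟩
  have hhull : convexHull ℝ (indicVec '' G) ⊆
      {v : Fin n → ℝ | (∑ i, c i * indicVec A0 i) ≤ ∑ i, c i * v i} := by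
    apply convexHull_min
    · rintro _ ⟨S, hS, rfl⟩
      exact hmin S hS
    · exact convex_halfSpace_ge (linfun_isLinear c) _
  exact hhull hy

lemma exists_indic_ge {G : Set (Finset (Fin n))} (hne : G.Nonempty)
    {y : Fin n → ℝ} (hy : y ∈ convexHull ℝ (indicVec '' G)) (c : Fin n → ℝ) :
    ∃ A ∈ G, ∑ i, c i * y i ≤ ∑ i, c i * indicVec A i := by
  obtain ⟨A, hA, h⟩ := exists_indic_le hne hy (fun i => - c i)
  refine ⟨A, hA, ?_⟩
  simp only [neg_mul, Finset.sum_neg_distrib, neg_le_neg_iff] at h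
  exact h

/-- `∑_{i ∈ I} v i` written with the indicator of `I` as coefficients. -/
lemma sum_indic_coeff (I : Finset (Fin n)) (v : Fin n → ℝ) :
    ∑ i, (if i ∈ I then (1 : ℝ) else 0) * v i = ∑ i ∈ I, v i := by
  have : ∀ i, (if i ∈ I then (1:ℝ) else 0) * v i = if i ∈ I then v i else 0 := by
    intro i; split <;> simp
  rw [Finset.sum_congr rfl (fun i _ => this i), Finset.sum_ite_mem]
  simp

lemma sum_indic_inter (I X : Finset (Fin n)) :
    ∑ i ∈ I, indicVec X i = ((X ∩ I).card : ℝ) := by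
  unfold indicVec
  rw [Finset.sum_ite_mem]
  simp [Finset.inter_comm]

end Geometry

section Geometry2

open Finset

variable {n : ℕ}

lemma sum_mul_indic (c : Fin n → ℝ) (A : Finset (Fin n)) :
    ∑ i, c i * indicVec A i = ∑ i ∈ A, c i := by
  unfold indicVec
  have : ∀ i, c i * (if i ∈ A then (1:ℝ) else 0) = if i ∈ A then c i else 0 := by
    intro i; split <;> simp
  rw [Finset.sum_congr rfl (fun i _ => this i), Finset.sum_ite_mem]
  simp

lemma indic_mem_conv {G : Set (Finset (Fin n))} {X : Finset (Fin n)} (hX : X ∈ G) :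
    indicVec X ∈ convexHull ℝ (indicVec '' G) :=
  subset_convexHull ℝ _ (Set.mem_image_of_mem _ hX)

lemma indic_empty : indicVec (∅ : Finset (Fin n)) = 0 := by
  funext i; simp [indicVec]

lemma indic_union_disjoint {C1 C2 : Finset (Fin n)} (h : Disjoint C1 C2) :
    indicVec (C1 ∪ C2) = indicVec C1 + indicVec C2 := by
  funext i
  simp only [indicVec, Pi.add_apply, Finset.mem_union]
  by_cases h1 : i ∈ C1
  · have h2 : i ∉ C2 := Finset.disjoint_left.mp h h1
    simp [h1, h2]
  · by_cases h2 : i ∈ C2 <;> simp [h1, h2]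

/-- 0/1 points of the hull are members of the family. -/
lemma mem_family_of_indic_mem {G : Set (Finset (Fin n))} (hne : G.Nonempty)
    {X : Finset (Fin n)} (h : indicVec X ∈ convexHull ℝ (indicVec '' G)) : X ∈ G := by
  set c : Fin n → ℝ := fun i => if i ∈ X then (-1 : ℝ) else 1 with hc
  obtain ⟨A, hA, hle⟩ := exists_indic_le hne h c
  have hval : ∀ B : Finset (Fin n), ∑ i, c i * indicVec B i =
      ((B \ X).card : ℝ) - ((B ∩ X).card : ℝ) := by
    intro B
    rw [sum_mul_indic]
    rw [← Finset.sum_inter_add_sum_sdiff B X c]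
    have e1 : ∑ i ∈ B ∩ X, c i = -((B ∩ X).card : ℝ) := by
      rw [Finset.sum_congr rfl (g := fun _ => (-1:ℝ))
        (fun i hi => by simp [hc, (Finset.mem_inter.mp hi).2])]
      simp
    have e2 : ∑ i ∈ B \ X, c i = ((B \ X).card : ℝ) := by
      rw [Finset.sum_congr rfl (g := fun _ => (1:ℝ))
        (fun i hi => by simp [hc, (Finset.mem_sdiff.mp hi).2])]
      simp
    rw [e1, e2]; ring
  rw [hval A, hval X] at hle
  simp only [Finset.sdiff_self, Finset.card_empty, Finset.inter_self] at hle
  have hsub : (A ∩ X).card ≤ X.card := Finset.card_le_card Finset.inter_subset_right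
  push_cast at hle
  have hn : (A \ X).card + X.card ≤ (A ∩ X).card := by
    have : ((A \ X).card : ℝ) + (X.card:ℝ) ≤ ((A ∩ X).card : ℝ) := by linarith
    exact_mod_cast this
  have hAX : A ⊆ X := by
    rw [← Finset.sdiff_eq_empty_iff_subset]
    exact Finset.card_eq_zero.mp (by omega)
  have hXA : X ⊆ A := by
    have heq : A ∩ X = X := Finset.eq_of_subset_of_card_le Finset.inter_subset_right
      (by omega)
    intro x hx
    exact (Finset.mem_inter.mp (heq ▸ hx)).1
  rw [Finset.Subset.antisymm hAX hXA] at hA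
  exact hA

lemma exists_subset_member {G : Set (Finset (Fin n))} (hne : G.Nonempty)
    {y : Fin n → ℝ} (hy : y ∈ convexHull ℝ (indicVec '' G))
    {X : Finset (Fin n)} (h0 : ∀ i, i ∉ X → y i = 0) : ∃ A ∈ G, A ⊆ X := by
  set c : Fin n → ℝ := fun i => if i ∈ X then (0 : ℝ) else 1 with hc
  obtain ⟨A, hA, hle⟩ := exists_indic_le hne hy c
  have hrhs : ∑ i, c i * y i = 0 := by
    apply Finset.sum_eq_zero
    intro i _
    by_cases hi : i ∈ X
    · simp [hc, hi]
    · simp [hc, hi, h0 i hi]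
  have hlhs : ∑ i, c i * indicVec A i = ((A \ X).card : ℝ) := by
    rw [sum_mul_indic, ← Finset.sum_inter_add_sum_sdiff A X c]
    have e1 : ∑ i ∈ A ∩ X, c i = 0 := by
      apply Finset.sum_eq_zero
      intro i hi
      simp [hc, (Finset.mem_inter.mp hi).2]
    have e2 : ∑ i ∈ A \ X, c i = ((A \ X).card : ℝ) := by
      rw [Finset.sum_congr rfl (g := fun _ => (1:ℝ))
        (fun i hi => by simp [hc, (Finset.mem_sdiff.mp hi).2])]
      simp
    rw [e1, e2]; ring
  rw [hrhs, hlhs] at hle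
  have : (A \ X).card = 0 := by exact_mod_cast le_antisymm hle (by positivity)
  refine ⟨A, hA, ?_⟩
  rw [← Finset.sdiff_eq_empty_iff_subset]
  exact Finset.card_eq_zero.mp this

lemma rho_bddAbove (P : Set (Fin n → ℝ)) (hP : P ⊆ Set.Icc 0 1) (I : Finset (Fin n)) :
    BddAbove {r : ℝ | ∃ x ∈ P, r = ∑ i ∈ I, x i} := by
  refine ⟨(I.card : ℝ), ?_⟩
  rintro r ⟨x, hx, rfl⟩
  calc ∑ i ∈ I, x i ≤ ∑ i ∈ I, (1:ℝ) := by
        apply Finset.sum_le_sum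
        intro i _
        exact (hP hx).2 i
    _ = (I.card : ℝ) := by simp

lemma card_inter_le_rho {F : Set (Finset (Fin n))} {X : Finset (Fin n)} (hX : X ∈ F)
    (I : Finset (Fin n)) :
    ((X ∩ I).card : ℝ) ≤ rhoP (convexHull ℝ (indicVec '' F)) I := by
  apply le_csSup (rho_bddAbove _ (convexHull_indic_subset_Icc F) I)
  exact ⟨indicVec X, indic_mem_conv hX, (sum_indic_inter I X).symm⟩

lemma exists_rho_attain {F : Set (Finset (Fin n))} (hne : F.Nonempty) (I : Finset (Fin n)) :
    ∃ X ∈ F, rhoP (convexHull ℝ (indicVec '' F)) I ≤ ((X ∩ I).card : ℝ) := by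
  obtain ⟨A0, hA0, hmax⟩ := Set.exists_max_image F
    (fun A => (A ∩ I).card) (Set.toFinite F) hne
  refine ⟨A0, hA0, ?_⟩
  apply Real.sSup_le
  · rintro r ⟨x, hx, rfl⟩
    obtain ⟨A, hA, hle⟩ := exists_indic_ge ⟨A0, hA0⟩ hx
      (fun i => if i ∈ I then (1:ℝ) else 0)
    rw [sum_indic_coeff] at hle
    have h2 : ∑ i, (if i ∈ I then (1:ℝ) else 0) * indicVec A i = ((A ∩ I).card : ℝ) := by
      rw [sum_indic_coeff, sum_indic_inter]
    rw [h2] at hle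
    calc ∑ i ∈ I, x i ≤ ((A ∩ I).card : ℝ) := hle
      _ ≤ ((A0 ∩ I).card : ℝ) := by exact_mod_cast hmax A hA
  · positivity

end Geometry2
section Constructions

open Finset

variable {α : Type*} [DecidableEq α]

/-- The free matroid on a ground set. -/
def freeOn (E0 : Finset α) : FinMatroid α where
  E := E0
  Indep I := I ⊆ E0
  indep_empty := Finset.empty_subset _
  indep_subset := fun _ _ hJ hIJ => hIJ.trans hJ
  indep_aug := by
    intro I J hI hJ hcard
    have hns : ¬ J ⊆ I := fun h => absurd (Finset.card_le_card h) (by omega)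
    obtain ⟨e, heJ, heI⟩ := Finset.not_subset.mp hns
    exact ⟨e, heJ, heI, Finset.insert_subset (hJ heJ) hI⟩
  subset_ground := fun _ h => h

/-- The rank-0 matroid on a ground set. -/
def loopyOn (E0 : Finset α) : FinMatroid α where
  E := E0
  Indep I := I = ∅
  indep_empty := rfl
  indep_subset := fun _ _ hJ hIJ => Finset.subset_empty.mp (hJ ▸ hIJ)
  indep_aug := by
    intro I J hI hJ hcard
    rw [hI, hJ] at hcard
    simp at hcard
  subset_ground := fun _ h => h ▸ Finset.empty_subset _

/-- Restriction of a matroid to a set containing all independent sets. -/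
def restrictTo (M : FinMatroid α) (E0 : Finset α)
    (h : ∀ I, M.Indep I → I ⊆ E0) : FinMatroid α where
  E := E0
  Indep := M.Indep
  indep_empty := M.indep_empty
  indep_subset := M.indep_subset
  indep_aug := M.indep_aug
  subset_ground := fun _ hI => h _ hI

end Constructions

section DP

open Finset Pointwise

variable {n : ℕ}

lemma compl_inter_eq (A T : Finset (Fin n)) : (Finset.univ \ A) ∩ T = T \ A := by
  ext x; simp [Finset.mem_sdiff, Finset.mem_inter, and_comm]

/-- existence of a disjoint pair of members. -/
lemma exists_disjoint_pair {F1 F2 : Set (Finset (Fin n))}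
    (hF1ne : F1.Nonempty) (hF2ne : F2.Nonempty)
    (hF1M : MConvexFamily F1) (hF2M : MConvexFamily F2)
    {X0 : Finset (Fin n)}
    (hX0 : indicVec X0 ∈ convexHull ℝ (indicVec '' F1) + convexHull ℝ (indicVec '' F2)) :
    ∃ B1 ∈ F1, ∃ B2 ∈ F2, Disjoint B1 B2 := by
  obtain ⟨y1, hy1, y2, hy2, hsum⟩ := Set.mem_add.mp hX0
  set G1 : Set (Finset (Fin n)) := (fun X => Finset.univ \ X) '' F1 with hG1
  set G2 : Set (Finset (Fin n)) := (fun X => Finset.univ \ X) '' F2 with hG2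
  have hG1ne : G1.Nonempty := hF1ne.image _
  have hG2ne : G2.Nonempty := hF2ne.image _
  have hG1M : MConvexFamily G1 := mconvex_compl hF1M
  have hG2M : MConvexFamily G2 := mconvex_compl hF2M
  set Nc1 := downMatroid hG1ne hG1M with hNc1
  set Nc2 := downMatroid hG2ne hG2M with hNc2
  have key : ∀ (G : Set (Finset (Fin n))) (hGne : G.Nonempty) (hGM : MConvexFamily G)
      (F : Set (Finset (Fin n))) (hGF : G = (fun X => Finset.univ \ X) '' F)
      (y : Fin n → ℝ), y ∈ convexHull ℝ (indicVec '' F) →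
      ∀ A : Finset (Fin n),
        (A.card : ℝ) - ∑ i ∈ A, y i ≤ (rankFn (downMatroid hGne hGM) A : ℝ) := by
    intro G hGne hGM F hGF y hy A
    obtain ⟨A1, hA1, hle⟩ := exists_indic_le (by
      rcases hGne with ⟨g, hg⟩
      rw [hGF] at hg
      obtain ⟨f, hf, _⟩ := hg
      exact ⟨f, hf⟩) hy (fun i => if i ∈ A then (1:ℝ) else 0)
    rw [sum_indic_coeff, sum_indic_coeff, sum_indic_inter] at hle
    have hmem : (Finset.univ \ A1) ∈ G := by
      rw [hGF]; exact ⟨A1, hA1, rfl⟩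
    have h3 : ((Finset.univ \ A1) ∩ A).card ≤ rankFn (downMatroid hGne hGM) A :=
      card_inter_le_rank_down hGne hGM hmem A
    rw [compl_inter_eq] at h3
    have h4 : (A \ A1).card + (A1 ∩ A).card = A.card := by
      rw [Finset.inter_comm]
      have := Finset.card_inter_add_card_sdiff A A1
      omega
    have h5 : ((A \ A1).card : ℝ) ≤ (rankFn (downMatroid hGne hGM) A : ℝ) := by
      exact_mod_cast h3
    have h6 : ((A \ A1).card : ℝ) + ((A1 ∩ A).card : ℝ) = (A.card : ℝ) := by
      exact_mod_cast h4
    linarith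
  have H : ∀ A ⊆ (Finset.univ : Finset (Fin n)),
      A.card ≤ rankFn Nc1 A + rankFn Nc2 A := by
    intro A _
    have k1 := key G1 hG1ne hG1M F1 hG1 y1 hy1 A
    have k2 := key G2 hG2ne hG2M F2 hG2 y2 hy2 A
    have hsumA : ∑ i ∈ A, y1 i + ∑ i ∈ A, y2 i = ((X0 ∩ A).card : ℝ) := by
      rw [← Finset.sum_add_distrib]
      have : ∀ i ∈ A, y1 i + y2 i = indicVec X0 i := by
        intro i _
        have := congrFun hsum i
        simpa using this
      rw [Finset.sum_congr rfl this, sum_indic_inter]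
    have hXA : ((X0 ∩ A).card : ℝ) ≤ (A.card : ℝ) := by
      exact_mod_cast Finset.card_le_card (Finset.inter_subset_right (s₁ := X0))
    have : (A.card : ℝ) ≤ (rankFn Nc1 A : ℝ) + (rankFn Nc2 A : ℝ) := by linarith
    exact_mod_cast this
  obtain ⟨J1, J2, hJ1, hJ2, huniv⟩ := FinMatroid.partition_crit Nc1 Nc2 Finset.univ H
  obtain ⟨C1, hC1, hJ1C⟩ := hJ1
  obtain ⟨C2, hC2, hJ2C⟩ := hJ2
  rw [hG1] at hC1
  rw [hG2] at hC2
  obtain ⟨B1, hB1, hB1e⟩ := hC1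
  obtain ⟨B2, hB2, hB2e⟩ := hC2
  refine ⟨B1, hB1, B2, hB2, ?_⟩
  rw [Finset.disjoint_left]
  intro x hx1 hx2
  have hxu : x ∈ (Finset.univ : Finset (Fin n)) := Finset.mem_univ x
  rw [huniv] at hxu
  rcases Finset.mem_union.mp hxu with h | h
  · have := hJ1C h
    rw [← hB1e] at this
    exact (Finset.mem_sdiff.mp this).2 hx1
  · have := hJ2C h
    rw [← hB2e] at this
    exact (Finset.mem_sdiff.mp this).2 hx2

end DP
section Core

open Finset Pointwise

variable {n : ℕ}

lemma core_branch
    (M : FinMatroid (Fin n)) (hE : M.E = Finset.univ) (hirr : MatroidIrreducible M)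
    {F F1 F2 : Set (Finset (Fin n))}
    (hFne : F.Nonempty) (hF1ne : F1.Nonempty) (hF2ne : F2.Nonempty)
    (hF1M : MConvexFamily F1) (hF2M : MConvexFamily F2)
    (hsum : ∀ X ∈ F, indicVec X ∈
      convexHull ℝ (indicVec '' F1) + convexHull ℝ (indicVec '' F2))
    (hmem : ∀ X : Finset (Fin n), indicVec X ∈
      convexHull ℝ (indicVec '' F1) + convexHull ℝ (indicVec '' F2) → X ∈ F)
    (hindepF : ∀ I, M.Indep I ↔ ∃ X ∈ F, I ⊆ X)
    (hiff1 : ∀ I : Finset (Fin n), (∃ X ∈ F1, I ⊆ X) ↔ M.Indep I)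
    (hr : 1 ≤ rankFn M Finset.univ) :
    F = F1 ∨ F = F2 := by
  classical
  obtain ⟨X0, hX0⟩ := hFne
  obtain ⟨B1, hB1, B2, hB2, hdisj⟩ :=
    exists_disjoint_pair hF1ne hF2ne hF1M hF2M (hsum X0 hX0)
  have hunion_mem : ∀ C1 ∈ F1, ∀ C2 ∈ F2, Disjoint C1 C2 → C1 ∪ C2 ∈ F := by
    intro C1 h1 C2 h2 hd
    apply hmem
    rw [indic_union_disjoint hd]
    exact Set.add_mem_add (indic_mem_conv h1) (indic_mem_conv h2)
  have hcovered : ∀ I1 I2 : Finset (Fin n), (∃ A ∈ F1, I1 ⊆ A) → (∃ A ∈ F2, I2 ⊆ A) →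
      M.Indep (I1 ∪ I2) := by
    rintro I1 I2 ⟨A1, hA1, hs1⟩ ⟨A2, hA2, hs2⟩
    obtain ⟨C1, hC1, C2, hC2, hd2, hcov⟩ :=
      cover_disjoint hF1M hF2M hB1 hB2 hdisj ((A1 \ B1).card + (A2 \ B2).card)
        A1 A2 (le_refl _) hA1 hA2
    rw [hindepF]
    exact ⟨C1 ∪ C2, hunion_mem _ hC1 _ hC2 hd2,
      (Finset.union_subset_union hs1 hs2).trans hcov⟩
  -- supports
  have hsupp : ∀ X ∈ F,
      (∃ y ∈ convexHull ℝ (indicVec '' F1), ∀ i, i ∉ X → y i = 0) ∧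
      (∃ y ∈ convexHull ℝ (indicVec '' F2), ∀ i, i ∉ X → y i = 0) := by
    intro X hX
    obtain ⟨y1, hy1, y2, hy2, hs⟩ := Set.mem_add.mp (hsum X hX)
    have hy1c := convexHull_indic_subset_Icc F1 hy1
    have hy2c := convexHull_indic_subset_Icc F2 hy2
    have hz : ∀ i, i ∉ X → (y1 i = 0 ∧ y2 i = 0) := by
      intro i hi
      have h0 : y1 i + y2 i = 0 := by
        have := congrFun hs i
        simpa [indicVec, hi] using this
      have hp1 : (0:ℝ) ≤ y1 i := hy1c.1 i
      have hp2 : (0:ℝ) ≤ y2 i := hy2c.1 i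
      constructor <;> linarith
    exact ⟨⟨y1, hy1, fun i hi => (hz i hi).1⟩, ⟨y2, hy2, fun i hi => (hz i hi).2⟩⟩
  -- the interval argument
  have alpha : ∀ (G : Set (Finset (Fin n))), G.Nonempty → MConvexFamily G →
      (∀ I : Finset (Fin n), (∃ X ∈ G, I ⊆ X) ↔ M.Indep I) →
      (∀ X ∈ F, ∃ y ∈ convexHull ℝ (indicVec '' G), ∀ i, i ∉ X → y i = 0) →
      ∀ X ∈ F, X ∈ G := by
    intro G hGne hGM hiffG hsuppG X hX
    have hXind : M.Indep X := (hindepF X).mpr ⟨X, hX, Finset.Subset.refl _⟩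
    obtain ⟨B, hBind, _, hXB, hBcard⟩ :=
      M.exists_basis_superset hXind (Finset.subset_univ X)
    obtain ⟨W, hW, hBW⟩ := (hiffG B).mpr hBind
    have hWind : M.Indep W := (hiffG W).mp ⟨W, hW, Finset.Subset.refl _⟩
    have hWcard : W.card ≤ rankFn M Finset.univ :=
      M.card_le_rank hWind (Finset.subset_univ _)
    have hBWeq : B = W := Finset.eq_of_subset_of_card_le hBW (by omega)
    obtain ⟨y, hy, hy0⟩ := hsuppG X hX
    obtain ⟨A1, hA1, hA1X⟩ := exists_subset_member hGne hy hy0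
    exact mconvex_peel hGM (B \ X).card B X A1 (le_refl _) (hBWeq ▸ hW) hA1 hA1X hXB
  by_cases h02 : (∅ : Finset (Fin n)) ∈ F2
  · left
    apply Set.Subset.antisymm
    · intro X hX
      exact alpha F1 hF1ne hF1M hiff1 (fun X' hX' => (hsupp X' hX').1) X hX
    · intro A1 hA1
      apply hmem
      have heq : indicVec A1 = indicVec A1 + indicVec (∅ : Finset (Fin n)) := by
        rw [indic_empty, add_zero]
      rw [heq]
      exact Set.add_mem_add (indic_mem_conv hA1) (indic_mem_conv h02)
  · -- truncation argument forces N2 = M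
    set N2 := downMatroid hF2ne hF2M with hN2
    set r := rankFn M Finset.univ with hrdef
    set Q := M.truncate (r - 1) with hQdef
    have hQunion : IsMatroidUnion M Q N2 := by
      constructor
      · show M.E = M.E ∪ Finset.univ
        rw [hE]
        simp
      · intro I
        constructor
        · intro hI
          by_cases hIc : I.card ≤ r - 1
          · exact ⟨I, ∅, ⟨hI, hIc⟩,
              ⟨hF2ne.choose, hF2ne.choose_spec, Finset.empty_subset _⟩, by simp⟩
          · have hIr : I.card = r := by
              have := M.card_le_rank hI (Finset.subset_univ I)
              omega
            obtain ⟨X, hXF, hIX⟩ := (hindepF I).mp hI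
            have hXI : X = I := by
              have hXind : M.Indep X := (hindepF X).mpr ⟨X, hXF, Finset.Subset.refl _⟩
              have := M.card_le_rank hXind (Finset.subset_univ X)
              exact (Finset.eq_of_subset_of_card_le hIX (by omega)).symm
            rw [hXI] at hXF
            obtain ⟨y, hy, hy0⟩ := (hsupp I hXF).2
            obtain ⟨B2', hB2', hB2'I⟩ := exists_subset_member hF2ne hy hy0
            have hB2ne : B2'.Nonempty := by
              rcases Finset.eq_empty_or_nonempty B2' with h | h
              · exact absurd (h ▸ hB2') h02
              · exact h
            refine ⟨I \ B2', B2',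
              ⟨M.indep_subset hI (Finset.sdiff_subset), ?_⟩,
              ⟨B2', hB2', Finset.Subset.refl _⟩,
              (Finset.sdiff_union_of_subset hB2'I).symm⟩
            have h1 : (I \ B2').card = I.card - B2'.card := Finset.card_sdiff_of_subset hB2'I
            have h2 : 1 ≤ B2'.card := Finset.card_pos.mpr hB2ne
            omega
        · rintro ⟨I1, I2, ⟨hI1ind, _⟩, hI2, rfl⟩
          exact hcovered I1 I2 ((hiff1 I1).mpr hI1ind) hI2
    rcases hirr Q N2 hQunion with hQM | hN2M
    · exfalso
      obtain ⟨B, hBind, _, _, hBcard⟩ :=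
        M.exists_basis_superset M.indep_empty (Finset.empty_subset Finset.univ)
      have hQB : Q.Indep B := by rw [hQM]; exact hBind
      have := hQB.2
      omega
    · have hiff2 : ∀ I : Finset (Fin n), (∃ X ∈ F2, I ⊆ X) ↔ M.Indep I := by
        intro I
        have heq : N2.Indep I = M.Indep I := by rw [hN2M]
        rw [← heq]
        exact Iff.rfl
      by_cases h01 : (∅ : Finset (Fin n)) ∈ F1
      · right
        apply Set.Subset.antisymm
        · intro X hX
          exact alpha F2 hF2ne hF2M hiff2 (fun X' hX' => (hsupp X' hX').2) X hX
        · intro A2 hA2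
          apply hmem
          have heq : indicVec A2 = indicVec (∅ : Finset (Fin n)) + indicVec A2 := by
            rw [indic_empty, zero_add]
          rw [heq]
          exact Set.add_mem_add (indic_mem_conv h01) (indic_mem_conv hA2)
      · exfalso
        have hB1ne : B1.Nonempty := by
          rcases Finset.eq_empty_or_nonempty B1 with h | h
          · exact absurd (h ▸ hB1) h01
          · exact h
        have hB2ne : B2.Nonempty := by
          rcases Finset.eq_empty_or_nonempty B2 with h | h
          · exact absurd (h ▸ hB2) h02
          · exact h
        have hWmem : B1 ∪ B2 ∈ F := hunion_mem _ hB1 _ hB2 hdisj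
        have hWind : M.Indep (B1 ∪ B2) :=
          (hindepF _).mpr ⟨_, hWmem, Finset.Subset.refl _⟩
        have hW2 : 2 ≤ (B1 ∪ B2).card := by
          have hu := Finset.card_union_of_disjoint hdisj
          have hp1 := Finset.card_pos.mpr hB1ne
          have hp2 := Finset.card_pos.mpr hB2ne
          omega
        have hr2 : 2 ≤ r := le_trans hW2 (M.card_le_rank hWind (Finset.subset_univ _))
        obtain ⟨B, hBind, _, _, hBcard⟩ :=
          M.exists_basis_superset M.indep_empty (Finset.empty_subset Finset.univ)
        by_cases hBu : B = Finset.univ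
        · -- M is free, n ≥ 2 : contradiction with irreducibility
          have hfree : ∀ I : Finset (Fin n), M.Indep I := fun I =>
            M.indep_subset hBind (hBu ▸ Finset.subset_univ I)
          have hn2 : 2 ≤ (Finset.univ : Finset (Fin n)).card := by
            rw [← hBu]
            omega
          obtain ⟨i0, hi0⟩ := Finset.card_pos.mp (by omega :
            0 < (Finset.univ : Finset (Fin n)).card)
          have hsplit : ({i0} : Finset (Fin n)) ∪ Finset.univ.erase i0 = Finset.univ := by
            ext x
            simp only [Finset.mem_union, Finset.mem_singleton, Finset.mem_erase,
              Finset.mem_univ, and_true, iff_true]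
            by_cases hx : x = i0
            · exact Or.inl hx
            · exact Or.inr hx
          have hU : IsMatroidUnion M (freeOn ({i0} : Finset (Fin n)))
              (freeOn (Finset.univ.erase i0)) := by
            constructor
            · show M.E = ({i0} : Finset (Fin n)) ∪ Finset.univ.erase i0
              rw [hE, hsplit]
            · intro I
              constructor
              · intro _
                refine ⟨I ∩ {i0}, I \ {i0}, Finset.inter_subset_right, ?_, ?_⟩
                · intro x hx
                  obtain ⟨hxI, hxi⟩ := Finset.mem_sdiff.mp hx
                  exact Finset.mem_erase.mpr
                    ⟨fun h => hxi (Finset.mem_singleton.mpr h), Finset.mem_univ _⟩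
                · ext x
                  simp only [Finset.mem_union, Finset.mem_inter, Finset.mem_sdiff,
                    Finset.mem_singleton]
                  tauto
              · intro _
                exact hfree I
          rcases hirr _ _ hU with h | h
          · have hEe := congrArg FinMatroid.E h
            rw [hE] at hEe
            have : ({i0} : Finset (Fin n)) = Finset.univ := hEe
            have := congrArg Finset.card this
            simp only [Finset.card_singleton] at this
            omega
          · have hEe := congrArg FinMatroid.E h
            rw [hE] at hEe
            have huniveq : Finset.univ.erase i0 = Finset.univ := hEe
            have := Finset.card_erase_of_mem (Finset.mem_univ i0)
            rw [huniveq] at this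
            omega
        · -- there is a loop : contradiction with irreducibility
          have hnsub : ¬ (Finset.univ : Finset (Fin n)) ⊆ B := by
            intro h
            exact hBu (Finset.Subset.antisymm (Finset.subset_univ _) h)
          obtain ⟨a, _, haB⟩ := Finset.not_subset.mp hnsub
          have hloop : ¬ M.Indep {a} := by
            intro h
            have hun : M.Indep (B ∪ {a}) :=
              hcovered B {a} ((hiff1 B).mpr hBind) ((hiff2 {a}).mpr h)
            have hdBa : Disjoint B ({a} : Finset (Fin n)) :=
              Finset.disjoint_singleton_right.mpr haB
            have hcardBa : (B ∪ {a}).card = r + 1 := by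
              rw [Finset.card_union_of_disjoint hdBa, Finset.card_singleton, hBcard]
            have := M.card_le_rank hun (Finset.subset_univ _)
            omega
          have hres : ∀ I, M.Indep I → I ⊆ Finset.univ.erase a := by
            intro I hI x hx
            refine Finset.mem_erase.mpr ⟨?_, Finset.mem_univ _⟩
            rintro rfl
            exact hloop (M.indep_subset hI (Finset.singleton_subset_iff.mpr hx))
          have hsplit : Finset.univ.erase a ∪ ({a} : Finset (Fin n)) = Finset.univ := by
            ext x
            simp only [Finset.mem_union, Finset.mem_erase, Finset.mem_singleton,
              Finset.mem_univ, and_true, iff_true]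
            by_cases hx : x = a
            · exact Or.inr hx
            · exact Or.inl hx
          have hU : IsMatroidUnion M (restrictTo M (Finset.univ.erase a) hres)
              (loopyOn ({a} : Finset (Fin n))) := by
            constructor
            · show M.E = Finset.univ.erase a ∪ ({a} : Finset (Fin n))
              rw [hE, hsplit]
            · intro I
              constructor
              · intro hI
                exact ⟨I, ∅, hI, rfl, by simp⟩
              · rintro ⟨I1, I2, hI1, hI2, rfl⟩
                have : I2 = ∅ := hI2
                rw [this, Finset.union_empty]
                exact hI1
          rcases hirr _ _ hU with h | h
          · have hEe := congrArg FinMatroid.E h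
            rw [hE] at hEe
            have huniveq : Finset.univ.erase a = Finset.univ := hEe
            have := Finset.card_erase_of_mem (Finset.mem_univ a)
            rw [huniveq] at this
            have : (0:ℕ) < (Finset.univ : Finset (Fin n)).card := by
              have hBne : B.Nonempty := Finset.card_pos.mp (by omega)
              obtain ⟨b, hb⟩ := hBne
              exact Finset.card_pos.mpr ⟨b, Finset.mem_univ b⟩
            omega
          · have hEe := congrArg FinMatroid.E h
            rw [hE] at hEe
            have haun : ({a} : Finset (Fin n)) = Finset.univ := hEe
            have hBne : B.Nonempty := Finset.card_pos.mp (by omega)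
            obtain ⟨b, hb⟩ := hBne
            have hbu : b ∈ ({a} : Finset (Fin n)) := haun ▸ Finset.mem_univ b
            have : b = a := Finset.mem_singleton.mp hbu
            exact haB (this ▸ hb)

end Core
section CoreMain

open Finset Pointwise

variable {n : ℕ}

lemma core_main
    (M : FinMatroid (Fin n)) (hE : M.E = Finset.univ) (hirr : MatroidIrreducible M)
    {F F1 F2 : Set (Finset (Fin n))}
    (hFne : F.Nonempty) (hF1ne : F1.Nonempty) (hF2ne : F2.Nonempty)
    (hF1M : MConvexFamily F1) (hF2M : MConvexFamily F2)
    (hsum : ∀ X ∈ F, indicVec X ∈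
      convexHull ℝ (indicVec '' F1) + convexHull ℝ (indicVec '' F2))
    (hmem : ∀ X : Finset (Fin n), indicVec X ∈
      convexHull ℝ (indicVec '' F1) + convexHull ℝ (indicVec '' F2) → X ∈ F)
    (hattain : ∀ A : Finset (Fin n), ∃ X ∈ F, rankFn M A = (X ∩ A).card)
    (hub : ∀ (A : Finset (Fin n)) (X : Finset (Fin n)), X ∈ F →
      (X ∩ A).card ≤ rankFn M A) :
    F = F1 ∨ F = F2 := by
  classical
  have hindepF : ∀ I, M.Indep I ↔ ∃ X ∈ F, I ⊆ X := by
    intro I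
    constructor
    · intro h
      have hrI : rankFn M I = I.card := (M.indep_iff_rank_eq_card).mp h
      obtain ⟨X, hX, hXr⟩ := hattain I
      refine ⟨X, hX, ?_⟩
      have h1 : X ∩ I ⊆ I := Finset.inter_subset_right
      have h2 : X ∩ I = I := Finset.eq_of_subset_of_card_le h1 (by omega)
      intro x hx
      have : x ∈ X ∩ I := by rw [h2]; exact hx
      exact (Finset.mem_inter.mp this).1
    · rintro ⟨X, hX, hIX⟩
      rw [M.indep_iff_rank_eq_card]
      have h1 : (X ∩ I).card ≤ rankFn M I := hub I X hX
      have h2 : X ∩ I = I := Finset.inter_eq_right.mpr hIX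
      have h3 := M.rank_le_card I
      rw [h2] at h1
      omega
  by_cases hr0 : rankFn M Finset.univ = 0
  · -- rank 0 : F = {∅} = F1
    left
    have hFempty : ∀ X ∈ F, X = ∅ := by
      intro X hX
      have hind : M.Indep X := (hindepF X).mpr ⟨X, hX, Finset.Subset.refl _⟩
      have := M.card_le_rank hind (Finset.subset_univ X)
      rw [hr0] at this
      exact Finset.card_eq_zero.mp (by omega)
    obtain ⟨X0, hX0⟩ := hFne
    obtain ⟨B1, hB1, B2, hB2, hdisj⟩ :=
      exists_disjoint_pair hF1ne hF2ne hF1M hF2M (hsum X0 hX0)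
    have hBF : B1 ∪ B2 ∈ F := by
      apply hmem
      rw [indic_union_disjoint hdisj]
      exact Set.add_mem_add (indic_mem_conv hB1) (indic_mem_conv hB2)
    have hBe := hFempty _ hBF
    rw [Finset.union_eq_empty] at hBe
    apply Set.Subset.antisymm
    · intro X hX
      rw [hFempty X hX, ← hBe.1]
      exact hB1
    · intro A1 hA1
      have hA1F : A1 ∈ F := by
        apply hmem
        have heq : indicVec A1 = indicVec A1 + indicVec B2 := by
          rw [hBe.2, indic_empty, add_zero]
        rw [heq]
        exact Set.add_mem_add (indic_mem_conv hA1) (indic_mem_conv hB2)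
      exact hA1F
  · have hr : 1 ≤ rankFn M Finset.univ := by omega
    set N1 := downMatroid hF1ne hF1M with hN1
    set N2 := downMatroid hF2ne hF2M with hN2
    -- rank subadditivity across the decomposition
    have hD5 : ∀ A : Finset (Fin n), rankFn M A ≤ rankFn N1 A + rankFn N2 A := by
      intro A
      obtain ⟨X, hX, hXr⟩ := hattain A
      obtain ⟨y1, hy1, y2, hy2, hs⟩ := Set.mem_add.mp (hsum X hX)
      obtain ⟨A1, hA1, hle1⟩ := exists_indic_ge hF1ne hy1
        (fun i => if i ∈ A then (1:ℝ) else 0)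
      obtain ⟨A2, hA2, hle2⟩ := exists_indic_ge hF2ne hy2
        (fun i => if i ∈ A then (1:ℝ) else 0)
      rw [sum_indic_coeff, sum_indic_coeff, sum_indic_inter] at hle1
      rw [sum_indic_coeff, sum_indic_coeff, sum_indic_inter] at hle2
      have hsumX : ∑ i ∈ A, y1 i + ∑ i ∈ A, y2 i = ((X ∩ A).card : ℝ) := by
        rw [← Finset.sum_add_distrib]
        have hpt : ∀ i ∈ A, y1 i + y2 i = indicVec X i := by
          intro i _
          have := congrFun hs i
          simpa using this
        rw [Finset.sum_congr rfl hpt, sum_indic_inter]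
      have c1 : ((A1 ∩ A).card : ℝ) ≤ (rankFn N1 A : ℝ) := by
        exact_mod_cast card_inter_le_rank_down hF1ne hF1M hA1 A
      have c2 : ((A2 ∩ A).card : ℝ) ≤ (rankFn N2 A : ℝ) := by
        exact_mod_cast card_inter_le_rank_down hF2ne hF2M hA2 A
      have : ((rankFn M A : ℕ) : ℝ) ≤ (rankFn N1 A : ℝ) + (rankFn N2 A : ℝ) := by
        rw [hXr]
        calc ((X ∩ A).card : ℝ) = ∑ i ∈ A, y1 i + ∑ i ∈ A, y2 i := hsumX.symm
          _ ≤ ((A1 ∩ A).card : ℝ) + ((A2 ∩ A).card : ℝ) := by linarith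
          _ ≤ (rankFn N1 A : ℝ) + (rankFn N2 A : ℝ) := by linarith
      exact_mod_cast this
    -- disjoint pair and covered-union independence (for the ← direction)
    obtain ⟨X0, hX0⟩ := hFne
    obtain ⟨B1, hB1, B2, hB2, hdisj⟩ :=
      exists_disjoint_pair hF1ne hF2ne hF1M hF2M (hsum X0 hX0)
    have hcovered : ∀ I1 I2 : Finset (Fin n), (∃ A ∈ F1, I1 ⊆ A) →
        (∃ A ∈ F2, I2 ⊆ A) → M.Indep (I1 ∪ I2) := by
      rintro I1 I2 ⟨A1, hA1, hs1⟩ ⟨A2, hA2, hs2⟩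
      obtain ⟨C1, hC1, C2, hC2, hd2, hcov⟩ :=
        cover_disjoint hF1M hF2M hB1 hB2 hdisj ((A1 \ B1).card + (A2 \ B2).card)
          A1 A2 (le_refl _) hA1 hA2
      rw [hindepF]
      refine ⟨C1 ∪ C2, ?_, (Finset.union_subset_union hs1 hs2).trans hcov⟩
      apply hmem
      rw [indic_union_disjoint hd2]
      exact Set.add_mem_add (indic_mem_conv hC1) (indic_mem_conv hC2)
    have hUnion : IsMatroidUnion M N1 N2 := by
      constructor
      · show M.E = Finset.univ ∪ Finset.univ
        rw [hE]
        simp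
      · intro I
        constructor
        · intro hI
          apply FinMatroid.partition_crit N1 N2 I
          intro A hA
          have hAind : M.Indep A := M.indep_subset hI hA
          have := (M.indep_iff_rank_eq_card).mp hAind
          have := hD5 A
          omega
        · rintro ⟨I1, I2, hI1, hI2, rfl⟩
          exact hcovered I1 I2 hI1 hI2
    rcases hirr N1 N2 hUnion with h1 | h2
    · have hiff1 : ∀ I : Finset (Fin n), (∃ X ∈ F1, I ⊆ X) ↔ M.Indep I := by
        intro I
        have heq : N1.Indep I = M.Indep I := by rw [h1]
        rw [← heq]
        exact Iff.rfl
      exact core_branch M hE hirr ⟨X0, hX0⟩ hF1ne hF2ne hF1M hF2M hsum hmem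
        hindepF hiff1 hr
    · have hiff2 : ∀ I : Finset (Fin n), (∃ X ∈ F2, I ⊆ X) ↔ M.Indep I := by
        intro I
        have heq : N2.Indep I = M.Indep I := by rw [h2]
        rw [← heq]
        exact Iff.rfl
      have hcomm : convexHull ℝ (indicVec '' F1) + convexHull ℝ (indicVec '' F2) =
          convexHull ℝ (indicVec '' F2) + convexHull ℝ (indicVec '' F1) :=
        add_comm _ _
      have hsum' : ∀ X ∈ F, indicVec X ∈
          convexHull ℝ (indicVec '' F2) + convexHull ℝ (indicVec '' F1) := by
        intro X hX
        rw [← hcomm]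
        exact hsum X hX
      have hmem' : ∀ X : Finset (Fin n), indicVec X ∈
          convexHull ℝ (indicVec '' F2) + convexHull ℝ (indicVec '' F1) → X ∈ F := by
        intro X hX
        rw [← hcomm] at hX
        exact hmem X hX
      have := core_branch M hE hirr ⟨X0, hX0⟩ hF2ne hF1ne hF2M hF1M hsum' hmem'
        hindepF hiff2 hr
      exact this.symm

end CoreMain
open Pointwise in
/-- If `ρ_P` is the rank function of a matroid on `[n]` that is irreducible
under matroid union, then the M♮ lattice polytope `P` is M-irreducible. -/
theorem mnatPolytope_irreducible (n : ℕ) (P : Set (Fin n → ℝ))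
    (hP : IsMNatPolytope P) (M : FinMatroid (Fin n)) (hE : M.E = Finset.univ)
    (hirr : MatroidIrreducible M)
    (hrank : ∀ I : Finset (Fin n), rhoP P I = (rankFn M I : ℝ)) :
    ∀ P1 P2 : Set (Fin n → ℝ), IsMNatPolytope P1 → IsMNatPolytope P2 →
      P = (P1 + P2) ∩ Set.Icc (0 : Fin n → ℝ) 1 → P = P1 ∨ P = P2 := by
  intro P1 P2 hP1 hP2 hEq
  obtain ⟨F, hFne, _, hPF⟩ := hP
  obtain ⟨F1, hF1ne, hF1M, hPF1⟩ := hP1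
  obtain ⟨F2, hF2ne, hF2M, hPF2⟩ := hP2
  subst hPF
  subst hPF1
  subst hPF2
  have hub : ∀ (A : Finset (Fin n)) (X : Finset (Fin n)), X ∈ F →
      (X ∩ A).card ≤ rankFn M A := by
    intro A X hX
    have h1 := card_inter_le_rho hX A
    rw [hrank A] at h1
    exact_mod_cast h1
  have hattain : ∀ A : Finset (Fin n), ∃ X ∈ F, rankFn M A = (X ∩ A).card := by
    intro A
    obtain ⟨X, hX, h1⟩ := exists_rho_attain hFne A
    rw [hrank A] at h1
    have h2 := hub A X hX
    refine ⟨X, hX, le_antisymm ?_ h2⟩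
    exact_mod_cast h1
  have hsum : ∀ X ∈ F, indicVec X ∈
      convexHull ℝ (indicVec '' F1) + convexHull ℝ (indicVec '' F2) := by
    intro X hX
    have h0 : indicVec X ∈ convexHull ℝ (indicVec '' F) := indic_mem_conv hX
    rw [hEq] at h0
    exact h0.1
  have hmem : ∀ X : Finset (Fin n), indicVec X ∈
      convexHull ℝ (indicVec '' F1) + convexHull ℝ (indicVec '' F2) → X ∈ F := by
    intro X h
    have h0 : indicVec X ∈ (convexHull ℝ (indicVec '' F1) +
        convexHull ℝ (indicVec '' F2)) ∩ Set.Icc (0 : Fin n → ℝ) 1 :=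
      ⟨h, indic_mem_Icc X⟩
    rw [← hEq] at h0
    exact mem_family_of_indic_mem hFne h0
  rcases core_main M hE hirr hFne hF1ne hF2ne hF1M hF2M hsum hmem hattain hub with h | h
  · left; rw [h]
  · right; rw [h]
end

section
/- Let P ⊆ [0,1]^n be an M♮ lattice polytope. Then the function ρ_P, defined by ρ_P(I) = max{ Σ_{i∈I} x_i : x ∈ P } for I ⊆ [n], is the rank function of a matroid on [n]; that is, ρ_P is integer-valued with 0 ≤ ρ_P(I) ≤ |I| for all I, is monotone (I ⊆ J implies ρ_P(I) ≤ ρ_P(J)), and is submodular (ρ_P(I∪J) + ρ_P(I∩J) ≤ ρ_P(I) + ρ_P(J) for all I, J ⊆ [n]). -/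
open Finset

variable {α : Type*} [DecidableEq α]

/-- A maximizer of a weight `w`, in an M♮-convex family, also maximizes
`|· ∩ C|` for suitable `C`. -/
lemma exchange_max {n : ℕ} {F : Set (Finset (Fin n))} (hM : MConvexFamily F)
    (w : Fin n → ℕ) {X : Finset (Fin n)} (hX : X ∈ F)
    (hXmax : ∀ Z ∈ F, ∑ i ∈ Z, w i ≤ ∑ i ∈ X, w i)
    (C : Finset (Fin n)) (hC1 : ∀ i ∈ C, 1 ≤ w i)
    (hC2 : ∀ i j : Fin n, i ∈ C → w i ≤ w j → j ∈ C) :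
    ∀ Z ∈ F, (Z ∩ C).card ≤ (X ∩ C).card := by
  classical
  by_contra hcon
  push_neg at hcon
  obtain ⟨Z0, hZ0F, hZ0⟩ := hcon
  set FF := (Set.toFinite F).toFinset with hFFdef
  have hmemFF : ∀ Z, Z ∈ FF ↔ Z ∈ F := fun Z => Set.Finite.mem_toFinset _
  set T := FF.filter (fun Y => (X ∩ C).card < (Y ∩ C).card) with hT
  have hTne : T.Nonempty := ⟨Z0, by
    rw [hT, Finset.mem_filter]; exact ⟨(hmemFF Z0).2 hZ0F, hZ0⟩⟩
  obtain ⟨Y, hYT, hYmin⟩ := T.exists_min_image (fun Y => (symmDiff X Y).card) hTne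
  rw [hT, Finset.mem_filter] at hYT
  obtain ⟨hYFF, hYlt⟩ := hYT
  have hYF : Y ∈ F := (hmemFF Y).1 hYFF
  have hns : ¬ (Y ∩ C ⊆ X) := by
    intro h
    have : Y ∩ C ⊆ X ∩ C := fun a ha => mem_inter.2 ⟨h ha, (mem_inter.1 ha).2⟩
    exact absurd (card_le_card this) (by omega)
  obtain ⟨i, hiYC, hiX⟩ := not_subset.1 hns
  have hiY : i ∈ Y := (mem_inter.1 hiYC).1
  have hiC : i ∈ C := (mem_inter.1 hiYC).2
  rcases hM Y hYF X hX i (mem_sdiff.2 ⟨hiY, hiX⟩) with ⟨_, hins⟩ | ⟨j, hj, hY'F, hX'F⟩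
  · have h1 := hXmax _ hins
    rw [Finset.sum_insert hiX] at h1
    have h2 := hC1 i hiC
    omega
  · obtain ⟨hjX, hjY⟩ := mem_sdiff.1 hj
    have hji : j ≠ i := fun h => hjY (h ▸ hiY)
    have hgX' := hXmax _ hX'F
    have hsum : ∑ k ∈ (insert i X).erase j, w k + w j = ∑ k ∈ X, w k + w i := by
      rw [Finset.sum_erase_add _ _ (mem_insert_of_mem hjX), Finset.sum_insert hiX]
      ring
    have hwij : w i ≤ w j := by omega
    have hjC : j ∈ C := hC2 i j hiC hwij
    set Y' := insert j (Y.erase i) with hY'def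
    have hY'C : (Y' ∩ C).card = (Y ∩ C).card := by
      have h1 : Y' ∩ C = insert j ((Y ∩ C).erase i) := by
        ext k
        simp only [hY'def, Finset.mem_inter, Finset.mem_insert, Finset.mem_erase]
        constructor
        · rintro ⟨h | ⟨hki, hkY⟩, hkC⟩
          · exact Or.inl h
          · exact Or.inr ⟨hki, hkY, hkC⟩
        · rintro (h | ⟨hki, hkY, hkC⟩)
          · exact ⟨Or.inl h, h ▸ hjC⟩
          · exact ⟨Or.inr ⟨hki, hkY⟩, hkC⟩
      have hjnm : j ∉ (Y ∩ C).erase i := fun h =>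
        hjY (mem_inter.1 (Finset.mem_of_mem_erase h)).1
      have hiYC' : i ∈ Y ∩ C := hiYC
      rw [h1, Finset.card_insert_of_notMem hjnm, Finset.card_erase_of_mem hiYC']
      have : 1 ≤ (Y ∩ C).card := Finset.card_pos.2 ⟨i, hiYC'⟩
      omega
    have hsd : symmDiff X Y' = ((symmDiff X Y).erase i).erase j := by
      ext k
      simp only [Finset.mem_symmDiff, Finset.mem_erase, hY'def, Finset.mem_insert]
      by_cases hki : k = i
      · subst hki
        simp [hiX, hiY, hji.symm]
      · by_cases hkj : k = j
        · subst hkj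
          simp [hjX, hjY, hji]
        · tauto
    have hY'T : Y' ∈ T := by
      rw [hT, Finset.mem_filter]
      exact ⟨(hmemFF Y').2 hY'F, by omega⟩
    have hmin := hYmin Y' hY'T
    rw [hsd] at hmin
    have h1 : i ∈ symmDiff X Y := by
      simp [Finset.mem_symmDiff, hiX, hiY]
    have h2 : j ∈ (symmDiff X Y).erase i := by
      simp [Finset.mem_erase, Finset.mem_symmDiff, hjX, hjY, hji]
    have hc1 := Finset.card_erase_of_mem h1
    have hc2 := Finset.card_erase_of_mem h2
    have hne1 : (symmDiff X Y).Nonempty := ⟨i, h1⟩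
    have hne2 : ((symmDiff X Y).erase i).Nonempty := ⟨j, h2⟩
    have hp1 : 0 < (symmDiff X Y).card := Finset.card_pos.2 hne1
    have hp2 : 0 < ((symmDiff X Y).erase i).card := Finset.card_pos.2 hne2
    omega

/-- Existence of a maximizer of `|· ∩ S|` over a nonempty family. -/
lemma exists_max {n : ℕ} {F : Set (Finset (Fin n))} (hne : F.Nonempty)
    (S : Finset (Fin n)) :
    ∃ X ∈ F, ∀ Z ∈ F, (Z ∩ S).card ≤ (X ∩ S).card := by
  classical
  obtain ⟨x0, hx0⟩ := hne
  obtain ⟨X, hX, hmax⟩ := (Set.toFinite F).toFinset.exists_max_image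
    (fun Z => (Z ∩ S).card) ⟨x0, (Set.Finite.mem_toFinset _).2 hx0⟩
  exact ⟨X, (Set.Finite.mem_toFinset _).1 hX,
    fun Z hZ => hmax Z ((Set.Finite.mem_toFinset _).2 hZ)⟩

/-- There is a common maximizer of `|· ∩ A|` and `|· ∩ B|` for `A ⊆ B`. -/
lemma exists_common_max {n : ℕ} {F : Set (Finset (Fin n))} (hne : F.Nonempty)
    (hM : MConvexFamily F) {A B : Finset (Fin n)} (hAB : A ⊆ B) :
    ∃ X ∈ F, (∀ Z ∈ F, (Z ∩ A).card ≤ (X ∩ A).card) ∧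
      (∀ Z ∈ F, (Z ∩ B).card ≤ (X ∩ B).card) := by
  classical
  set w : Fin n → ℕ := fun i => (if i ∈ A then 1 else 0) + (if i ∈ B then 1 else 0)
    with hw
  obtain ⟨x0, hx0⟩ := hne
  obtain ⟨X, hXFF, hXmax⟩ := (Set.toFinite F).toFinset.exists_max_image
    (fun Z => ∑ i ∈ Z, w i) ⟨x0, (Set.Finite.mem_toFinset _).2 hx0⟩
  have hXF : X ∈ F := (Set.Finite.mem_toFinset _).1 hXFF
  have hXmax' : ∀ Z ∈ F, ∑ i ∈ Z, w i ≤ ∑ i ∈ X, w i := fun Z hZ =>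
    hXmax Z ((Set.Finite.mem_toFinset _).2 hZ)
  refine ⟨X, hXF, ?_, ?_⟩
  · refine exchange_max hM w hXF hXmax' A (fun i hi => by simp [hw, hi]) ?_
    intro i j hi hij
    by_contra hjA
    have h1 : w i = 2 := by simp [hw, hi, hAB hi]
    have h2 : w j ≤ 1 := by
      simp only [hw, if_neg hjA, zero_add]
      split_ifs <;> omega
    omega
  · refine exchange_max hM w hXF hXmax' B (fun i hi => by simp [hw, hi]) ?_
    intro i j hi hij
    by_contra hjB
    have hjA : j ∉ A := fun h => hjB (hAB h)
    have h1 : 1 ≤ w i := by simp [hw, hi]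
    have h2 : w j = 0 := by simp [hw, hjA, hjB]
    omega

lemma sum_indic {n : ℕ} (X I : Finset (Fin n)) :
    ∑ i ∈ I, indicVec X i = ((X ∩ I).card : ℝ) := by
  unfold indicVec
  rw [Finset.sum_ite_mem]
  simp [Finset.inter_comm]

/-- The value of `rhoP` at a maximizer. -/
lemma rhoP_eq {n : ℕ} {F : Set (Finset (Fin n))} {P : Set (Fin n → ℝ)}
    (hP : P = convexHull ℝ (indicVec '' F)) {I X : Finset (Fin n)} (hX : X ∈ F)
    (hmax : ∀ Z ∈ F, (Z ∩ I).card ≤ (X ∩ I).card) :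
    rhoP P I = ((X ∩ I).card : ℝ) := by
  have hub : ∀ x ∈ P, ∑ i ∈ I, x i ≤ ((X ∩ I).card : ℝ) := by
    rw [hP]
    intro x hx
    have hconv : Convex ℝ {y : Fin n → ℝ | ∑ i ∈ I, y i ≤ ((X ∩ I).card : ℝ)} := by
      intro a ha b hb s t hs ht hst
      simp only [Set.mem_setOf_eq] at ha hb ⊢
      have heq : ∑ i ∈ I, (s • a + t • b) i
          = s * ∑ i ∈ I, a i + t * ∑ i ∈ I, b i := by
        simp [Finset.mul_sum, Finset.sum_add_distrib]
      rw [heq]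
      calc s * ∑ i ∈ I, a i + t * ∑ i ∈ I, b i
          ≤ s * ((X ∩ I).card : ℝ) + t * ((X ∩ I).card : ℝ) := by gcongr
        _ = ((X ∩ I).card : ℝ) := by rw [← add_mul, hst, one_mul]
    have hsub : indicVec '' F ⊆ {y : Fin n → ℝ | ∑ i ∈ I, y i ≤ ((X ∩ I).card : ℝ)} := by
      rintro _ ⟨Z, hZ, rfl⟩
      simp only [Set.mem_setOf_eq, sum_indic]
      exact_mod_cast hmax Z hZ
    exact convexHull_min hsub hconv hx
  apply IsGreatest.csSup_eq
  constructor
  · exact ⟨indicVec X, by rw [hP]; exact subset_convexHull ℝ _ ⟨X, hX, rfl⟩,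
      (sum_indic X I).symm⟩
  · rintro r ⟨x, hx, rfl⟩
    exact hub x hx

/-- For an M♮ lattice polytope `P ⊆ [0,1]^n`, the function `ρ_P` is the rank
function of a matroid on `[n]`: it is integer-valued, bounded between `0` and
the cardinality, monotone and submodular. -/
theorem rhoP_is_matroid_rank (n : ℕ) (P : Set (Fin n → ℝ))
    (hP : IsMNatPolytope P) :
    (∀ I : Finset (Fin n), ∃ k : ℕ, rhoP P I = (k : ℝ)) ∧
    (∀ I : Finset (Fin n), 0 ≤ rhoP P I ∧ rhoP P I ≤ (I.card : ℝ)) ∧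
    (∀ I J : Finset (Fin n), I ⊆ J → rhoP P I ≤ rhoP P J) ∧
    (∀ I J : Finset (Fin n),
      rhoP P (I ∪ J) + rhoP P (I ∩ J) ≤ rhoP P I + rhoP P J) := by
  obtain ⟨F, hne, hM, hPeq⟩ := hP
  refine ⟨?_, ?_, ?_, ?_⟩
  · intro I
    obtain ⟨X, hX, hmax⟩ := exists_max hne I
    exact ⟨(X ∩ I).card, rhoP_eq hPeq hX hmax⟩
  · intro I
    obtain ⟨X, hX, hmax⟩ := exists_max hne I
    rw [rhoP_eq hPeq hX hmax]
    refine ⟨by positivity, ?_⟩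
    exact_mod_cast card_le_card (inter_subset_right)
  · intro I J hIJ
    obtain ⟨X, hX, hmaxI⟩ := exists_max hne I
    obtain ⟨Y, hY, hmaxJ⟩ := exists_max hne J
    rw [rhoP_eq hPeq hX hmaxI, rhoP_eq hPeq hY hmaxJ]
    have h1 : (X ∩ I).card ≤ (X ∩ J).card :=
      card_le_card (inter_subset_inter (le_refl X) hIJ)
    have h2 := hmaxJ X hX
    exact_mod_cast le_trans h1 h2
  · intro I J
    obtain ⟨X, hXF, hXA, hXB⟩ := exists_common_max hne hM
      (inter_subset_union : I ∩ J ⊆ I ∪ J)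
    obtain ⟨XI, hXI, hmaxI⟩ := exists_max hne I
    obtain ⟨XJ, hXJ, hmaxJ⟩ := exists_max hne J
    rw [rhoP_eq hPeq hXF hXB, rhoP_eq hPeq hXF hXA, rhoP_eq hPeq hXI hmaxI,
      rhoP_eq hPeq hXJ hmaxJ]
    have key : (X ∩ (I ∪ J)).card + (X ∩ (I ∩ J)).card
        = (X ∩ I).card + (X ∩ J).card := by
      rw [Finset.inter_union_distrib_left, Finset.inter_inter_distrib_left]
      exact Finset.card_union_add_card_inter _ _
    have hnat : (X ∩ (I ∪ J)).card + (X ∩ (I ∩ J)).card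
        ≤ (XI ∩ I).card + (XJ ∩ J).card := by
      have h1 := hmaxI X hXF
      have h2 := hmaxJ X hXF
      omega
    exact_mod_cast hnat
end
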